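/- arXiv:1311.3607 — 5 statements merged into one kernel-verified Lean document; each statement's English description precedes it below -/
import Mathlib

section
/- Let T be a finite tree with leaf set L, let k ≥ 1, and let E_1, …, E_k be sets of unordered pairs of leaves of T. Then ⟨T, E_1, …, E_k⟩ admits a partitioned T-coherent k-page book embedding if and only if ⟨V(T), E_1, …, E_k, E(T)⟩ admits a partitioned (k+1)-page book embedding, where V(T) is the vertex set of T and E(T) is its edge set (placed as the (k+1)-st page). -/
open Function Set

/-- `x` lies strictly between `a` and `b` in the linear order given by the
injective position function `pos`. -/
def Between {α : Type*} (pos : α → ℕ) (a x b : α) : Prop :=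
  (pos a < pos x ∧ pos x < pos b) ∨ (pos b < pos x ∧ pos x < pos a)

/-- The edges `{a,b}` and `{c,d}` (with pairwise distinct endpoints) alternate in the
order given by `pos`: exactly one of `c`, `d` lies strictly between `a` and `b`. -/
def Alternates {α : Type*} (pos : α → ℕ) (a b c d : α) : Prop :=
  Xor' (Between pos a c b) (Between pos a d b)

/-- A set `E` of edges (unordered pairs) is noncrossing in the order given by `pos`:
no two edges of `E` with four pairwise distinct endpoints alternate. -/
def Noncrossing {α : Type*} (pos : α → ℕ) (E : Set (Sym2 α)) : Prop :=
  ∀ a b c d : α, s(a, b) ∈ E → s(c, d) ∈ E →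
    a ≠ b → a ≠ c → a ≠ d → b ≠ c → b ≠ d → c ≠ d →
    ¬ Alternates pos a b c d

/-- `A ⊆ L` is an interval of the linear order induced by `pos` on `L`. -/
def IsIntervalOn {α : Type*} (pos : α → ℕ) (L A : Set α) : Prop :=
  ∀ a b c, a ∈ A → b ∈ L → c ∈ A → pos a ≤ pos b → pos b ≤ pos c → b ∈ A

/-- `A ⊆ L` is a circular interval of the linear order induced by `pos` on `L`:
`A` or `L ∖ A` is an interval. -/
def IsCircularIntervalOn {α : Type*} (pos : α → ℕ) (L A : Set α) : Prop :=
  IsIntervalOn pos L A ∨ IsIntervalOn pos L (L \ A)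

/-- The set of leaves (vertices with exactly one neighbour) of a graph. -/
def leafSet {V : Type*} (G : SimpleGraph V) : Set V := {v | ∃! w, G.Adj v w}

/-- A linear order on the leaves of `T` (given by a position function `pos`) is
represented by `T`: for every edge of `T`, the set of leaves contained in each of the two
connected components of `T` minus that edge is a circular interval of the order. -/
def RepresentedBy {V : Type*} (T : SimpleGraph V) (pos : V → ℕ) : Prop :=
  ∀ u v : V, T.Adj u v →
    IsCircularIntervalOn pos (leafSet T)
      {l | l ∈ leafSet T ∧ (T.deleteEdges {s(u, v)}).Reachable u l}

set_option linter.unusedSectionVars false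
set_option linter.unusedVariables false
set_option maxHeartbeats 1000000

namespace Stmt0
open SimpleGraph Walk
variable {V : Type*} [DecidableEq V] {T : SimpleGraph V}

noncomputable def pth (hT : T.IsTree) (a b : V) : T.Walk a b :=
  (hT.existsUnique_path a b).exists.choose

lemma pth_isPath (hT : T.IsTree) (a b : V) : (pth hT a b).IsPath :=
  (hT.existsUnique_path a b).exists.choose_spec

lemma eq_pth (hT : T.IsTree) {a b : V} {p : T.Walk a b} (hp : p.IsPath) : p = pth hT a b :=
  (hT.existsUnique_path a b).unique hp (pth_isPath hT a b)

lemma length_pth (hT : T.IsTree) (a b : V) : (pth hT a b).length = T.dist a b := by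
  obtain ⟨p, hp, hl⟩ := hT.isConnected.exists_path_of_dist a b
  rw [eq_pth hT hp] at hl; exact hl

lemma mem_pth_self (hT : T.IsTree) {a v : V} (h : v ∈ (pth hT a a).support) : v = a := by
  rw [← eq_pth hT (Walk.IsPath.nil)] at h
  simpa using h

lemma takeUntil_pth (hT : T.IsTree) {a b u : V} (h : u ∈ (pth hT a b).support) :
    (pth hT a b).takeUntil u h = pth hT a u :=
  eq_pth hT ((pth_isPath hT a b).takeUntil h)

lemma dropUntil_pth (hT : T.IsTree) {a b u : V} (h : u ∈ (pth hT a b).support) :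
    (pth hT a b).dropUntil u h = pth hT u b :=
  eq_pth hT ((pth_isPath hT a b).dropUntil h)

lemma pth_append (hT : T.IsTree) {a b u : V} (h : u ∈ (pth hT a b).support) :
    (pth hT a u).append (pth hT u b) = pth hT a b := by
  rw [← takeUntil_pth hT h, ← dropUntil_pth hT h]
  exact Walk.take_spec _ h

lemma dist_add_of_mem (hT : T.IsTree) {a b u : V} (h : u ∈ (pth hT a b).support) :
    T.dist a u + T.dist u b = T.dist a b := by
  rw [← length_pth hT, ← length_pth hT, ← length_pth hT, ← pth_append hT h,
    Walk.length_append]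

lemma mem_pth_trans (hT : T.IsTree) {a b u v : V} (h1 : u ∈ (pth hT a v).support)
    (h2 : v ∈ (pth hT a b).support) : u ∈ (pth hT a b).support := by
  rw [← takeUntil_pth hT h2] at h1
  exact Walk.support_takeUntil_subset _ h2 h1

lemma dist_le_of_mem (hT : T.IsTree) {a b u : V} (h : u ∈ (pth hT a b).support) :
    T.dist a u ≤ T.dist a b := by
  rw [← dist_add_of_mem hT h]; omega

lemma mem_antisymm (hT : T.IsTree) {a u v : V} (h1 : u ∈ (pth hT a v).support)
    (h2 : v ∈ (pth hT a u).support) : u = v := by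
  have d1 := dist_add_of_mem hT h1
  have d2 := dist_add_of_mem hT h2
  have : T.dist u v = 0 ∨ T.dist v u = 0 := by
    rw [SimpleGraph.dist_comm (u := v)] at d2; omega
  rcases this with h | h
  · exact (hT.isConnected.dist_eq_zero_iff.mp h)
  · exact (hT.isConnected.dist_eq_zero_iff.mp h).symm

lemma comparable (hT : T.IsTree) {a b u v : V} (h1 : u ∈ (pth hT a b).support)
    (h2 : v ∈ (pth hT a b).support) :
    u ∈ (pth hT a v).support ∨ v ∈ (pth hT a u).support := by
  rw [← pth_append hT h2, Walk.mem_support_append_iff] at h1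
  rcases h1 with h1 | h1
  · exact Or.inl h1
  -- u ∈ pth v b; split pth v b at u
  right
  have e2 : (pth hT v u).append (pth hT u b) = pth hT v b := pth_append hT h1
  have hw : ((pth hT a v).append ((pth hT v u).append (pth hT u b))).IsPath := by
    rw [e2, pth_append hT h2]; exact pth_isPath hT a b
  rw [Walk.append_assoc] at hw
  have hw2 : ((pth hT a v).append (pth hT v u)).IsPath := hw.of_append_left
  rw [← eq_pth hT hw2]
  exact (Walk.mem_support_append_iff _ _).mpr (Or.inl (Walk.end_mem_support _))


lemma isPath_concat {G : SimpleGraph V} {u v w : V} {p : G.Walk u v} (hp : p.IsPath)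
    (h : G.Adj v w) (hw : w ∉ p.support) : (p.concat h).IsPath := by
  rw [← Walk.isPath_reverse_iff, Walk.reverse_concat]
  exact (hp.reverse).cons (by simpa [Walk.support_reverse] using hw)

lemma pth_adj (hT : T.IsTree) {x y : V} (h : T.Adj x y) :
    pth hT x y = Walk.cons h Walk.nil := by
  refine (eq_pth hT ?_).symm
  simp [Walk.isPath_def, h.ne]

lemma dist_adj (hT : T.IsTree) {x y : V} (h : T.Adj x y) : T.dist x y = 1 := by
  rw [← length_pth hT, pth_adj hT h]; rfl

lemma adj_comparable (hT : T.IsTree) (r : V) {x y : V} (h : T.Adj x y) :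
    x ∈ (pth hT r y).support ∨ y ∈ (pth hT r x).support := by
  by_cases hx : x ∈ (pth hT r y).support
  · exact Or.inl hx
  · right
    have hp : ((pth hT r y).concat h.symm).IsPath := isPath_concat (pth_isPath hT r y) h.symm hx
    rw [← eq_pth hT hp]
    rw [Walk.support_concat]
    simp only [List.concat_eq_append, List.mem_append]
    exact Or.inl (Walk.end_mem_support _)

lemma pth_concat (hT : T.IsTree) {r x y : V} (hadj : T.Adj x y)
    (hmem : x ∈ (pth hT r y).support) :
    pth hT r y = (pth hT r x).concat hadj := by
  have hy : y ∉ (pth hT r x).support := by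
    intro hy
    have := mem_antisymm hT hmem hy
    exact hadj.ne this
  exact (eq_pth hT (isPath_concat (pth_isPath hT r x) hadj hy)).symm

lemma dist_parent (hT : T.IsTree) {r x y : V} (hadj : T.Adj x y)
    (hmem : x ∈ (pth hT r y).support) : T.dist r y = T.dist r x + 1 := by
  rw [← length_pth hT, ← length_pth hT, pth_concat hT hadj hmem, Walk.length_concat]

lemma mem_concat_cases (hT : T.IsTree) {r x y z : V} (hadj : T.Adj x y)
    (hmem : x ∈ (pth hT r y).support) (hz : z ∈ (pth hT r y).support) :
    z ∈ (pth hT r x).support ∨ z = y := by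
  rw [pth_concat hT hadj hmem, Walk.support_concat] at hz
  simp only [List.concat_eq_append, List.mem_append] at hz
  rcases hz with h | h
  · exact Or.inl h
  · exact Or.inr (by simpa using h)


lemma pth_reverse (hT : T.IsTree) (a b : V) : (pth hT a b).reverse = pth hT b a :=
  eq_pth hT ((pth_isPath hT a b).reverse)

lemma getVert_concat_penult {G : SimpleGraph V} {u v w : V} (q : G.Walk u v) (h : G.Adj v w) :
    (q.concat h).getVert ((q.concat h).length - 1) = v := by
  rw [Walk.length_concat, Nat.add_sub_cancel, Walk.concat_eq_append, Walk.getVert_append]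
  simp

lemma penult_spec (hT : T.IsTree) {x z : V} (hxz : x ≠ z) :
    T.Adj ((pth hT x z).getVert ((pth hT x z).length - 1)) z ∧
      ((pth hT x z).getVert ((pth hT x z).length - 1)) ∈ (pth hT x z).support := by
  set P := pth hT x z with hP
  have hlen : 0 < P.length := by
    rcases Nat.eq_zero_or_pos P.length with h | h
    · exact absurd (Walk.eq_of_length_eq_zero h) hxz
    · exact h
  have hadj := P.adj_getVert_succ (i := P.length - 1) (by omega)
  rw [show P.length - 1 + 1 = P.length by omega, Walk.getVert_length] at hadj
  exact ⟨hadj, Walk.mem_support_iff_exists_getVert.mpr ⟨P.length - 1, rfl, by omega⟩⟩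

lemma exists_parent (hT : T.IsTree) {r v : V} (hvr : v ≠ r) :
    ∃ pv, T.Adj pv v ∧ pv ∈ (pth hT r v).support := by
  obtain ⟨h1, h2⟩ := penult_spec hT (Ne.symm hvr)
  exact ⟨_, h1, h2⟩

lemma bridge (hT : T.IsTree) {x y : V} (hxy : T.Adj x y) :
    ¬ (T.deleteEdges {s(x,y)}).Reachable x y := by
  have := (isAcyclic_iff_forall_adj_isBridge.mp hT.IsAcyclic) hxy
  exact isBridge_iff.mp this

lemma sym2_ne {x y z w : V} (h : z ≠ x) (h2 : w ≠ x) : s(z,w) ≠ s(x,y) := by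
  intro h
  rcases Sym2.eq_iff.mp h with ⟨rfl, rfl⟩ | ⟨rfl, rfl⟩ <;> simp_all

lemma exists_leaf_comp [Fintype V] (hT : T.IsTree) {x y : V} (hxy : T.Adj x y) :
    ∃ l, l ∈ leafSet T ∧ (T.deleteEdges {s(x,y)}).Reachable y l := by
  classical
  set G' := T.deleteEdges {s(x,y)} with hG'
  have hbr : ¬ G'.Reachable x y := bridge hT hxy
  set C : Set V := {w | G'.Reachable y w} with hC
  have hCne : (Set.toFinite C).toFinset.Nonempty := by
    refine ⟨y, ?_⟩; simp only [Set.Finite.mem_toFinset, hC, Set.mem_setOf_eq]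
    exact Reachable.refl y
  obtain ⟨z, hzC, hzmax⟩ := Finset.exists_max_image _ (fun w => T.dist x w) hCne
  rw [Set.Finite.mem_toFinset] at hzC
  have hzmax' : ∀ w ∈ C, T.dist x w ≤ T.dist x z := fun w hw =>
    hzmax w ((Set.Finite.mem_toFinset _).mpr hw)
  have hzx : z ≠ x := by
    rintro rfl
    exact hbr hzC.symm
  refine ⟨z, ?_, hzC⟩
  set P := pth hT x z with hP
  set pv := P.getVert (P.length - 1) with hpv
  obtain ⟨hpvadj, hpvmem⟩ := penult_spec hT (Ne.symm hzx)
  have key : ∀ w, T.Adj z w → w = pv := by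
    intro w hw
    have hwP : w ∈ P.support := by
      by_contra hwn
      have hpath := isPath_concat (pth_isPath hT x z) hw hwn
      have hlen : T.dist x w = P.length + 1 := by
        rw [← length_pth hT x w, ← eq_pth hT hpath, Walk.length_concat]
      have hwx : w ≠ x := fun h => hwn (h ▸ P.start_mem_support)
      have hG'adj : G'.Adj z w := by
        rw [hG', SimpleGraph.deleteEdges_adj]
        exact ⟨hw, by simpa using sym2_ne hzx hwx⟩
      have hwC : w ∈ C := hzC.trans hG'adj.reachable
      have := hzmax' w hwC
      rw [← length_pth hT x z, ← hP] at this
      omega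
    -- w on P.support
    have hznq : z ∉ (P.takeUntil w hwP).support := by
      rw [takeUntil_pth hT hwP]
      intro hz
      exact hw.ne' (mem_antisymm hT hz hwP).symm
    have hpath := isPath_concat ((pth_isPath hT x z).takeUntil hwP) hw.symm hznq
    have hEq : (P.takeUntil w hwP).concat hw.symm = P := (eq_pth hT hpath).symm ▸ rfl
    calc w = ((P.takeUntil w hwP).concat hw.symm).getVert
              (((P.takeUntil w hwP).concat hw.symm).length - 1) :=
            (getVert_concat_penult _ _).symm
      _ = pv := by rw [hEq]
  have hex : T.Adj z pv := hpvadj.symm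
  exact ⟨pv, hex, key⟩

lemma mem_both (hT : T.IsTree) {a b u w : V} (h : u ∈ (pth hT a b).support)
    (h1 : w ∈ (pth hT a u).support) (h2 : w ∈ (pth hT u b).support) : w = u := by
  by_contra hne
  have hnd : ((pth hT a u).append (pth hT u b)).support.Nodup := by
    rw [pth_append hT h]; exact (pth_isPath hT a b).support_nodup
  rw [Walk.support_append] at hnd
  have hdisj := List.disjoint_of_nodup_append hnd
  have h2' : w ∈ (pth hT u b).support.tail := by
    have := Walk.support_eq_cons (pth hT u b)
    rw [this] at h2
    rcases h2 with _ | h2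
    · exact absurd rfl hne
    · assumption
  exact hdisj h1 h2'

lemma reach_iff_mem (hT : T.IsTree) {r v pv : V} (hadj : T.Adj pv v)
    (hmem : pv ∈ (pth hT r v).support) (w : V) :
    (T.deleteEdges {s(pv,v)}).Reachable v w ↔ v ∈ (pth hT r w).support := by
  constructor
  · intro hw
    by_contra hnv
    have h1 : (T.deleteEdges {s(pv,v)}).Reachable r w := by
      refine ⟨((pth hT r w).toDeleteEdges _ ?_)⟩
      intro e he
      simp only [Set.mem_singleton_iff]
      rintro rfl
      exact hnv ((pth hT r w).snd_mem_support_of_mem_edges he)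
    have hvnot : v ∉ (pth hT r pv).support := by
      intro hv
      exact hadj.ne (mem_antisymm hT hv hmem).symm
    have h2 : (T.deleteEdges {s(pv,v)}).Reachable r pv := by
      refine ⟨((pth hT r pv).toDeleteEdges _ ?_)⟩
      intro e he
      simp only [Set.mem_singleton_iff]
      rintro rfl
      exact hvnot ((pth hT r pv).snd_mem_support_of_mem_edges he)
    exact bridge hT hadj (h2.symm.trans (h1.trans hw.symm))
  · intro h
    have hQ : s(pv, v) ∉ (pth hT v w).edges := by
      intro he
      have hpv2 : pv ∈ (pth hT v w).support := (pth hT v w).fst_mem_support_of_mem_edges he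
      exact hadj.ne (mem_both hT h hmem hpv2)
    refine ⟨((pth hT v w).toDeleteEdges _ ?_)⟩
    intro e he
    simp only [Set.mem_singleton_iff]
    rintro rfl
    exact hQ he

section Forward
variable [Fintype V]

def DD (hT : T.IsTree) (r : V) (v : V) : Set V :=
  {l | l ∈ leafSet T ∧ v ∈ (pth hT r l).support}
def SS (hT : T.IsTree) (r : V) (v : V) : Set V := {w | v ∈ (pth hT r w).support}
noncomputable def mm (hT : T.IsTree) (pos : V → ℕ) (r : V) (v : V) : ℕ :=
  sInf (pos '' DD hT r v)
noncomputable def MM (hT : T.IsTree) (pos : V → ℕ) (r : V) (v : V) : ℕ :=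
  sSup (pos '' DD hT r v)
noncomputable def pos' (hT : T.IsTree) (pos : V → ℕ) (r : V) (v : V) : ℕ :=
  Fintype.card V * mm hT pos r v + T.dist r v

variable (hT : T.IsTree) (pos : V → ℕ) (r : V)

lemma DD_nonempty (hrL : r ∈ leafSet T) (v : V) : (DD hT r v).Nonempty := by
  by_cases hv : v = r
  · exact ⟨r, hrL, hv ▸ Walk.start_mem_support _⟩
  · obtain ⟨pv, hadj, hmem⟩ := exists_parent hT hv
    obtain ⟨l, hlL, hlr⟩ := exists_leaf_comp hT hadj
    exact ⟨l, hlL, (reach_iff_mem hT hadj hmem l).mp hlr⟩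

lemma mm_attained (hrL : r ∈ leafSet T) (v : V) : ∃ l ∈ DD hT r v, pos l = mm hT pos r v := by
  have h : (pos '' DD hT r v).Nonempty := (DD_nonempty hT r hrL v).image pos
  have := Nat.sInf_mem h
  obtain ⟨l, hl, hl2⟩ := this
  exact ⟨l, hl, hl2⟩

lemma MM_attained (hrL : r ∈ leafSet T) (v : V) : ∃ l ∈ DD hT r v, pos l = MM hT pos r v := by
  have h : (pos '' DD hT r v).Nonempty := (DD_nonempty hT r hrL v).image pos
  have := Nat.sSup_mem h (Set.toFinite _).bddAbove
  obtain ⟨l, hl, hl2⟩ := this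
  exact ⟨l, hl, hl2⟩

lemma mm_le {v l : V} (hl : l ∈ DD hT r v) : mm hT pos r v ≤ pos l :=
  Nat.sInf_le ⟨l, hl, rfl⟩

lemma le_MM {v l : V} (hl : l ∈ DD hT r v) : pos l ≤ MM hT pos r v :=
  le_csSup (Set.toFinite _).bddAbove ⟨l, hl, rfl⟩

lemma DD_mono {v w : V} (h : w ∈ SS hT r v) : DD hT r w ⊆ DD hT r v :=
  fun l hl => ⟨hl.1, mem_pth_trans hT h hl.2⟩

lemma SS_mono {v w : V} (h : w ∈ SS hT r v) : SS hT r w ⊆ SS hT r v :=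
  fun z hz => mem_pth_trans hT h hz

lemma mm_mono (hrL : r ∈ leafSet T) {v w : V} (h : w ∈ SS hT r v) :
    mm hT pos r v ≤ mm hT pos r w := by
  obtain ⟨l, hl, hl2⟩ := mm_attained hT pos r hrL w
  rw [← hl2]
  exact mm_le hT pos r (DD_mono hT r h hl)

lemma MM_mono (hrL : r ∈ leafSet T) {v w : V} (h : w ∈ SS hT r v) :
    MM hT pos r w ≤ MM hT pos r v := by
  obtain ⟨l, hl, hl2⟩ := MM_attained hT pos r hrL w
  rw [← hl2]
  exact le_MM hT pos r (DD_mono hT r h hl)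

lemma mm_le_MM (hrL : r ∈ leafSet T) (v : V) : mm hT pos r v ≤ MM hT pos r v := by
  obtain ⟨l, hl, hl2⟩ := mm_attained hT pos r hrL v
  rw [← hl2]; exact le_MM hT pos r hl

lemma r_not_mem_DD {v : V} (hv : v ≠ r) : r ∉ DD hT r v := by
  rintro ⟨-, h⟩
  exact hv (mem_pth_self hT h)

lemma DD_interval (hrL : r ∈ leafSet T) (hrmin : ∀ l ∈ leafSet T, pos r ≤ pos l)
    (hrep : RepresentedBy T pos) (v : V) :
    IsIntervalOn pos (leafSet T) (DD hT r v) := by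
  by_cases hv : v = r
  · subst hv
    intro a b c _ hb _ _ _
    exact ⟨hb, Walk.start_mem_support _⟩
  · obtain ⟨pv, hadj, hmem⟩ := exists_parent hT hv
    have hset : {l | l ∈ leafSet T ∧ (T.deleteEdges {s(v, pv)}).Reachable v l} = DD hT r v := by
      ext l
      rw [Sym2.eq_swap]
      exact and_congr_right fun _ => reach_iff_mem hT hadj hmem l
    have hcirc := hrep v pv hadj.symm
    rw [hset] at hcirc
    rcases hcirc with h | h
    · exact h
    · -- complement interval containing the minimum r
      intro a b c ha hb hc hab hbc
      by_contra hbA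
      have hrB : r ∈ leafSet T \ DD hT r v := ⟨hrL, r_not_mem_DD hT r hv⟩
      have haL : a ∈ leafSet T := ha.1
      have : a ∈ leafSet T \ DD hT r v :=
        h r a b hrB haL ⟨hb, hbA⟩ (hrmin a haL) hab
      exact this.2 ha

lemma DD_disjoint {u v : V} (hu : u ∉ SS hT r v) (hv : v ∉ SS hT r u) :
    DD hT r u ∩ DD hT r v = ∅ := by
  ext l
  simp only [Set.mem_inter_iff, Set.mem_empty_iff_false, iff_false]
  rintro ⟨hlu, hlv⟩
  rcases comparable hT hlu.2 hlv.2 with h | h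
  · exact hv h
  · exact hu h

lemma incomp_sep (hrL : r ∈ leafSet T) (hrmin : ∀ l ∈ leafSet T, pos r ≤ pos l)
    (hrep : RepresentedBy T pos) {u v : V} (hu : u ∉ SS hT r v) (hv : v ∉ SS hT r u) :
    MM hT pos r u < mm hT pos r v ∨ MM hT pos r v < mm hT pos r u := by
  by_contra hcon
  push_neg at hcon
  obtain ⟨h1, h2⟩ := hcon
  have hdisj := DD_disjoint hT r hu hv
  obtain ⟨lu, hlu, elu⟩ := mm_attained hT pos r hrL u
  obtain ⟨Lu, hLu, eLu⟩ := MM_attained hT pos r hrL u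
  obtain ⟨lv, hlv, elv⟩ := mm_attained hT pos r hrL v
  obtain ⟨Lv, hLv, eLv⟩ := MM_attained hT pos r hrL v
  rcases le_total (mm hT pos r u) (mm hT pos r v) with hle | hle
  · -- lv is between lu and Lu
    have : lv ∈ DD hT r u := by
      refine DD_interval hT pos r hrL hrmin hrep u lu lv Lu hlu hlv.1 hLu ?_ ?_
      · rw [elu, elv]; exact hle
      · rw [elv, eLu]; exact h1
    exact absurd (Set.mem_inter this hlv) (by rw [hdisj]; exact Set.notMem_empty lv)
  · have : lu ∈ DD hT r v := by
      refine DD_interval hT pos r hrL hrmin hrep v lv lu Lv hlv hlu.1 hLv ?_ ?_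
      · rw [elu, elv]; exact hle
      · rw [elu, eLv]; exact h2
    exact absurd (Set.mem_inter hlu this) (by rw [hdisj]; exact Set.notMem_empty lu)

lemma mul_succ_le {n a b : ℕ} (h : a < b) : n * a + n ≤ n * b := by
  have := Nat.mul_le_mul_left n (Nat.succ_le_of_lt h)
  rwa [Nat.mul_succ] at this

lemma mem_SS {v w : V} : w ∈ SS hT r v ↔ v ∈ (pth hT r w).support := Iff.rfl

include hT in
lemma dist_lt_card (v : V) : T.dist r v < Fintype.card V := by
  rw [← length_pth hT r v]
  exact (pth_isPath hT r v).length_lt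

include hT in
lemma card_pos' : 0 < Fintype.card V := by
  have : Nonempty V := hT.isConnected.nonempty
  exact Fintype.card_pos

lemma nat_key {n a b c d : ℕ} (hc : c < n) (hd : d < n) (h : n*a + c = n*b + d) :
    a = b ∧ c = d := by
  have ha : (n*a + c) / n = a := by
    rw [Nat.mul_add_div (by omega), Nat.div_eq_of_lt hc, Nat.add_zero]
  have hb : (n*b + d) / n = b := by
    rw [Nat.mul_add_div (by omega), Nat.div_eq_of_lt hd, Nat.add_zero]
  have hab : a = b := by rw [← ha, ← hb, h]
  subst hab
  exact ⟨rfl, by omega⟩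

lemma mm_dist_eq (hrL : r ∈ leafSet T) (hinj : Set.InjOn pos (leafSet T)) {u v : V}
    (hm : mm hT pos r u = mm hT pos r v) (hd : T.dist r u = T.dist r v) : u = v := by
  obtain ⟨lu, hlu, elu⟩ := mm_attained hT pos r hrL u
  obtain ⟨lv, hlv, elv⟩ := mm_attained hT pos r hrL v
  have : lu = lv := hinj hlu.1 hlv.1 (by rw [elu, elv, hm])
  subst this
  -- u, v both on pth r lu
  rcases comparable hT hlu.2 hlv.2 with h | h
  · have := dist_add_of_mem hT h
    have h0 : T.dist u v = 0 := by omega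
    exact hT.isConnected.dist_eq_zero_iff.mp h0
  · have := dist_add_of_mem hT h
    have h0 : T.dist v u = 0 := by omega
    exact (hT.isConnected.dist_eq_zero_iff.mp h0).symm

lemma pos'_injective (hrL : r ∈ leafSet T) (hinj : Set.InjOn pos (leafSet T)) :
    Function.Injective (pos' hT pos r) := by
  intro u v h
  unfold pos' at h
  obtain ⟨h1, h2⟩ := nat_key (dist_lt_card hT r u) (dist_lt_card hT r v) h
  exact mm_dist_eq hT pos r hrL hinj h1 h2

lemma pos'_lt_of_mem (hrL : r ∈ leafSet T) {v w : V} (h : w ∈ SS hT r v) (hne : v ≠ w) :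
    pos' hT pos r v < pos' hT pos r w := by
  have hmle := mm_mono hT pos r hrL h
  rcases lt_or_eq_of_le hmle with hlt | heq
  · unfold pos'
    calc Fintype.card V * mm hT pos r v + T.dist r v
        < Fintype.card V * mm hT pos r v + Fintype.card V := by
          have := dist_lt_card hT r v; omega
      _ = Fintype.card V * (mm hT pos r v + 1) := by ring
      _ ≤ Fintype.card V * mm hT pos r w := Nat.mul_le_mul_left _ hlt
      _ ≤ pos' hT pos r w := Nat.le_add_right _ _
  · have hda := dist_add_of_mem hT h
    have hdvw : T.dist v w ≠ 0 := fun h0 => hne (hT.isConnected.dist_eq_zero_iff.mp h0)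
    unfold pos'
    rw [heq]
    omega

lemma pos'_le_of_mem (hrL : r ∈ leafSet T) {v w : V} (h : w ∈ SS hT r v) :
    pos' hT pos r v ≤ pos' hT pos r w := by
  by_cases hne : v = w
  · exact hne ▸ le_refl _
  · exact le_of_lt (pos'_lt_of_mem hT pos r hrL h hne)

lemma pos'_ub_of_mem (hrL : r ∈ leafSet T) {v w : V} (h : w ∈ SS hT r v) :
    pos' hT pos r w ≤ Fintype.card V * MM hT pos r v + (Fintype.card V - 1) := by
  have h1 : mm hT pos r w ≤ MM hT pos r w := mm_le_MM hT pos r hrL w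
  have h2 : MM hT pos r w ≤ MM hT pos r v := MM_mono hT pos r hrL h
  have h3 : T.dist r w ≤ Fintype.card V - 1 := by have := dist_lt_card hT r w; omega
  unfold pos'
  have := Nat.mul_le_mul_left (Fintype.card V) (h1.trans h2)
  omega

lemma pos'_out_of_not_mem (hrL : r ∈ leafSet T) (hrmin : ∀ l ∈ leafSet T, pos r ≤ pos l)
    (hrep : RepresentedBy T pos) {v w : V} (hv : v ≠ r) (h : w ∉ SS hT r v) :
    pos' hT pos r w < pos' hT pos r v ∨
      Fintype.card V * MM hT pos r v + (Fintype.card V - 1) < pos' hT pos r w := by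
  by_cases hcw : w ∈ (pth hT r v).support
  · -- w is an ancestor of v, w ≠ v
    left
    have hvS : v ∈ SS hT r w := hcw
    have hwv : w ≠ v := by
      rintro rfl
      exact h (mem_SS hT r |>.mpr (Walk.end_mem_support _))
    have hmle := mm_mono hT pos r hrL hvS
    rcases lt_or_eq_of_le hmle with hlt | heq
    · have key : Fintype.card V * mm hT pos r w + Fintype.card V
          ≤ Fintype.card V * mm hT pos r v := mul_succ_le hlt
      have hd := dist_lt_card hT r w
      unfold pos'
      omega
    · have hda := dist_add_of_mem hT hcw
      have hdvw : T.dist w v ≠ 0 := fun h0 => hwv (hT.isConnected.dist_eq_zero_iff.mp h0)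
      unfold pos'
      rw [heq]
      omega
  · have hsep := incomp_sep hT pos r hrL hrmin hrep h hcw
    have hn := card_pos' (V := V) hT
    rcases hsep with hs | hs
    · -- MM w < mm v
      left
      have h1 : mm hT pos r w ≤ MM hT pos r w := mm_le_MM hT pos r hrL w
      have h2 : Fintype.card V * MM hT pos r w + Fintype.card V
          ≤ Fintype.card V * mm hT pos r v := mul_succ_le hs
      have h3 := dist_lt_card hT r w
      have h4 := Nat.mul_le_mul_left (Fintype.card V) h1
      unfold pos'
      omega
    · -- MM v < mm w : w is to the right
      right
      have key : Fintype.card V * MM hT pos r v + Fintype.card V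
          ≤ Fintype.card V * mm hT pos r w := mul_succ_le hs
      unfold pos'
      omega

lemma between_sub (hrL : r ∈ leafSet T) (hrmin : ∀ l ∈ leafSet T, pos r ≤ pos l)
    (hrep : RepresentedBy T pos) {x y z : V} (hadj : T.Adj x y)
    (hmem : x ∈ (pth hT r y).support)
    (h1 : pos' hT pos r x < pos' hT pos r z) (h2 : pos' hT pos r z < pos' hT pos r y) :
    z ∈ SS hT r x ∧ z ∉ SS hT r y := by
  constructor
  · by_cases hx : x = r
    · subst hx; exact Walk.start_mem_support _
    · by_contra hns
      rcases pos'_out_of_not_mem hT pos r hrL hrmin hrep hx hns with hlt | hgt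
      · omega
      · have hyS : y ∈ SS hT r x := hmem
        have := pos'_ub_of_mem hT pos r hrL hyS
        omega
  · intro hzS
    have := pos'_le_of_mem hT pos r hrL hzS
    omega

lemma second_neighbor (hT : T.IsTree) {l l' : V} (h : l ≠ l') :
    ∃ a2, T.Adj l a2 ∧ a2 ∈ (pth hT l l').support := by
  obtain ⟨hadj, hmem⟩ := penult_spec hT (x := l') (z := l) h.symm
  refine ⟨_, hadj.symm, ?_⟩
  rw [← pth_reverse hT l' l, Walk.support_reverse]
  simpa using hmem

lemma key_noncross (hrL : r ∈ leafSet T) (hrmin : ∀ l ∈ leafSet T, pos r ≤ pos l)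
    (hrep : RepresentedBy T pos) (hinj : Set.InjOn pos (leafSet T)) {x y c d : V}
    (hadjxy : T.Adj x y) (hmemx : x ∈ (pth hT r y).support)
    (hadjcd : T.Adj c d) (hmemc : c ∈ (pth hT r d).support)
    (hxc : x ≠ c) (hxd : x ≠ d) (hyc : y ≠ c) (hyd : y ≠ d) :
    ¬ Alternates (pos' hT pos r) x y c d := by
  intro halt
  set p := pos' hT pos r with hp
  have hpinj := pos'_injective hT pos r hrL hinj
  have pxy : p x < p y := pos'_lt_of_mem hT pos r hrL hmemx hadjxy.ne
  have pcd : p c < p d := pos'_lt_of_mem hT pos r hrL hmemc hadjcd.ne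
  rcases halt with ⟨hBc, hnBd⟩ | ⟨hBd, hnBc⟩
  · -- c between x and y, d not
    have h1 : p x < p c ∧ p c < p y := by
      rcases hBc with h | h
      · exact h
      · exfalso; omega
    obtain ⟨hcSx, hcnSy⟩ :=
      between_sub hT pos r hrL hrmin hrep hadjxy hmemx h1.1 h1.2
    have hdSc : d ∈ SS hT r c := hmemc
    have hpcd : p c < p d := pcd
    have hdy : p y < p d := by
      have hne : p d ≠ p y := fun h => hyd (hpinj h).symm
      have hnd1 : ¬ (p x < p d ∧ p d < p y) := fun h => hnBd (Or.inl h)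
      omega
    -- y is strictly between c and d
    obtain ⟨hySc, -⟩ :=
      between_sub hT pos r hrL hrmin hrep hadjcd hmemc h1.2 hdy
    -- hySc : c ∈ pth r y
    rcases mem_concat_cases hT hadjxy hmemx (mem_SS hT r |>.mp hySc) with hcx | hcy
    · exact hxc (mem_antisymm hT (mem_SS hT r |>.mp hcSx) hcx)
    · exact hyc hcy.symm
  · -- d between x and y, c not
    have h1 : p x < p d ∧ p d < p y := by
      rcases hBd with h | h
      · exact h
      · exfalso; omega
    obtain ⟨hdSx, hdnSy⟩ :=
      between_sub hT pos r hrL hrmin hrep hadjxy hmemx h1.1 h1.2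
    rcases comparable hT (mem_SS hT r |>.mp hdSx) hmemc with hxc' | hcx' 
    · -- x ∈ pth r c, i.e. c ∈ SS x
      have hcSx : c ∈ SS hT r x := mem_SS hT r |>.mpr hxc'
      have hpxc : p x < p c := pos'_lt_of_mem hT pos r hrL hcSx hxc
      have hcy : p y < p c := by
        have hne : p c ≠ p y := fun h => hyc (hpinj h).symm
        have hnc1 : ¬ (p x < p c ∧ p c < p y) := fun h => hnBc (Or.inl h)
        omega
      have hdSc : d ∈ SS hT r c := hmemc
      have : p c ≤ p d := pos'_le_of_mem hT pos r hrL hdSc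
      omega
    · -- c ∈ pth r x
      rcases mem_concat_cases hT hadjcd hmemc (mem_SS hT r |>.mp hdSx) with hxc2 | hxd2
      · exact hxc (mem_antisymm hT hxc2 hcx')
      · exact hxd hxd2

lemma alternates_swap_left {α : Type*} (p : α → ℕ) (a b c d : α) :
    Alternates p a b c d ↔ Alternates p b a c d := by
  unfold Alternates Xor' Xor Between
  tauto

lemma alternates_swap_right {α : Type*} (p : α → ℕ) (a b c d : α) :
    Alternates p a b c d ↔ Alternates p a b d c := by
  unfold Alternates Xor' Xor Between
  tauto

lemma noncross_tree (hrL : r ∈ leafSet T) (hrmin : ∀ l ∈ leafSet T, pos r ≤ pos l)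
    (hrep : RepresentedBy T pos) (hinj : Set.InjOn pos (leafSet T)) :
    Noncrossing (pos' hT pos r) T.edgeSet := by
  intro a b c d hab hcd hab' hac had hbc hbd hcd' halt
  rw [SimpleGraph.mem_edgeSet] at hab hcd
  rcases adj_comparable hT r hab with hox | hox <;>
    rcases adj_comparable hT r hcd with hoc | hoc
  · exact key_noncross hT pos r hrL hrmin hrep hinj hab hox hcd hoc
      hac had hbc hbd halt
  · rw [alternates_swap_right] at halt
    exact key_noncross hT pos r hrL hrmin hrep hinj hab hox hcd.symm hoc
      had hac hbd hbc halt
  · rw [alternates_swap_left] at halt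
    exact key_noncross hT pos r hrL hrmin hrep hinj hab.symm hox hcd hoc
      hbc hbd hac had halt
  · rw [alternates_swap_left, alternates_swap_right] at halt
    exact key_noncross hT pos r hrL hrmin hrep hinj hab.symm hox hcd.symm hoc
      hbd hbc had hac halt

lemma DD_leaf_singleton (hrL : r ∈ leafSet T) {l : V} (hl : l ∈ leafSet T) (hlr : l ≠ r) :
    DD hT r l = {l} := by
  ext l'
  simp only [Set.mem_singleton_iff]
  constructor
  · rintro ⟨hl'L, hmem⟩
    by_contra hne
    have hne' : l ≠ l' := fun h => hne h.symm
    obtain ⟨a1, ha1adj, ha1mem⟩ := exists_parent hT hlr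
    obtain ⟨a2, ha2adj, ha2mem⟩ := second_neighbor hT hne'
    have huniq : a1 = a2 := by
      obtain ⟨w, hw, huni⟩ := hl
      rw [huni a1 ha1adj.symm, huni a2 ha2adj]
    subst huniq
    have := mem_both hT hmem ha1mem ha2mem
    exact ha1adj.ne this
  · rintro rfl
    exact ⟨hl, Walk.end_mem_support _⟩

lemma mm_leaf (hrL : r ∈ leafSet T) {l : V} (hl : l ∈ leafSet T) (hlr : l ≠ r) :
    mm hT pos r l = pos l := by
  unfold mm
  rw [DD_leaf_singleton hT r hrL hl hlr, Set.image_singleton, csInf_singleton]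

lemma mm_root (hrL : r ∈ leafSet T) (hrmin : ∀ l ∈ leafSet T, pos r ≤ pos l) :
    mm hT pos r r = pos r := by
  have h1 : mm hT pos r r ≤ pos r :=
    mm_le hT pos r ⟨hrL, Walk.start_mem_support _⟩
  obtain ⟨l, hlD, hle⟩ := mm_attained hT pos r hrL r
  have h2 : pos r ≤ mm hT pos r r := hle ▸ hrmin l hlD.1
  omega

lemma leaf_order (hrL : r ∈ leafSet T) (hrmin : ∀ l ∈ leafSet T, pos r ≤ pos l)
    {a b : V} (ha : a ∈ leafSet T) (hb : b ∈ leafSet T) (hab : pos a < pos b) :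
    pos' hT pos r a < pos' hT pos r b := by
  have hn := card_pos' (V := V) hT
  have hbr : b ≠ r := by
    rintro rfl
    exact absurd hab (not_lt.mpr (hrmin a ha))
  have hmb : mm hT pos r b = pos b := mm_leaf hT pos r hrL hb hbr
  have hkey : Fintype.card V * pos a + Fintype.card V ≤ Fintype.card V * pos b :=
    mul_succ_le hab
  have hda := dist_lt_card hT r a
  by_cases har : a = r
  · have hma : mm hT pos r a = pos a := by rw [har]; exact mm_root hT pos r hrL hrmin
    unfold pos'
    rw [hma, hmb]
    omega
  · have hma : mm hT pos r a = pos a := mm_leaf hT pos r hrL ha har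
    unfold pos'
    rw [hma, hmb]
    omega

lemma leaf_order_iff (hrL : r ∈ leafSet T) (hrmin : ∀ l ∈ leafSet T, pos r ≤ pos l)
    (hinj : Set.InjOn pos (leafSet T))
    {a b : V} (ha : a ∈ leafSet T) (hb : b ∈ leafSet T) :
    (pos a < pos b ↔ pos' hT pos r a < pos' hT pos r b) := by
  constructor
  · exact leaf_order hT pos r hrL hrmin ha hb
  · intro h
    rcases lt_trichotomy (pos a) (pos b) with h' | h' | h'
    · exact h'
    · exact absurd (hinj ha hb h') (by rintro rfl; omega)
    · exact absurd (leaf_order hT pos r hrL hrmin hb ha h') (by omega)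

end Forward

section Backward
variable (pos : V → ℕ)

lemma cover_aux (hT : T.IsTree) {u v : V} {a b : V} (p : T.Walk a b)
    (ha : (T.deleteEdges {s(u,v)}).Reachable u a ∨ (T.deleteEdges {s(u,v)}).Reachable v a) :
    (T.deleteEdges {s(u,v)}).Reachable u b ∨ (T.deleteEdges {s(u,v)}).Reachable v b := by
  induction p with
  | nil => exact ha
  | @cons a c b h q ih =>
    apply ih
    by_cases he : s(a, c) = s(u, v)
    · rcases Sym2.eq_iff.mp he with ⟨rfl, rfl⟩ | ⟨rfl, rfl⟩
      · exact Or.inr (Reachable.refl _)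
      · exact Or.inl (Reachable.refl _)
    · have hadj : (T.deleteEdges {s(u,v)}).Adj a c := by
        rw [SimpleGraph.deleteEdges_adj]
        exact ⟨h, by simpa using he⟩
      rcases ha with ha | ha
      · exact Or.inl (ha.trans hadj.reachable)
      · exact Or.inr (ha.trans hadj.reachable)

lemma cover (hT : T.IsTree) {u v : V} (w : V) :
    (T.deleteEdges {s(u,v)}).Reachable u w ∨ (T.deleteEdges {s(u,v)}).Reachable v w := by
  obtain ⟨p⟩ := hT.isConnected u w
  exact cover_aux hT p (Or.inl (Reachable.refl _))

lemma support_reach {G' : SimpleGraph V} {x y : V} (p : G'.Walk x y) {z : V}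
    (hz : z ∈ p.support) : G'.Reachable x z := ⟨p.takeUntil z hz⟩

lemma cross_edge {G' : SimpleGraph V} {α β : ℕ} {x y : V} (p : G'.Walk x y)
    (h1 : α < pos x) (h2 : pos x < β) (h3 : pos y < α ∨ β < pos y)
    (hsup : ∀ z ∈ p.support, pos z ≠ α ∧ pos z ≠ β) :
    ∃ s t, G'.Adj s t ∧ s ∈ p.support ∧ t ∈ p.support ∧ α < pos s ∧ pos s < β ∧
      (pos t < α ∨ β < pos t) := by
  induction p with
  | nil => omega
  | @cons x c y h q ih =>
    by_cases hc : α < pos c ∧ pos c < β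
    · obtain ⟨s, t, hst, hs, ht, h4, h5, h6⟩ :=
        ih hc.1 hc.2 h3 (fun z hz => hsup z (by simp [hz]))
      exact ⟨s, t, hst, by simp [hs], by simp [ht], h4, h5, h6⟩
    · have hcs := hsup c (by simp)
      have hc2 : pos c < α ∨ β < pos c := by omega
      exact ⟨x, c, h, by simp, by simp, h1, h2, hc2⟩

lemma span_edge {G' : SimpleGraph V} {q0 : ℕ} {x y : V} (p : G'.Walk x y)
    (h1 : pos x < q0) (h2 : q0 < pos y) (hsup : ∀ z ∈ p.support, pos z ≠ q0) :
    ∃ s t, G'.Adj s t ∧ s ∈ p.support ∧ t ∈ p.support ∧ pos s < q0 ∧ q0 < pos t := by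
  induction p with
  | nil => omega
  | @cons x c y h q ih =>
    by_cases hc : pos c < q0
    · obtain ⟨s, t, hst, hs, ht, h4, h5⟩ := ih hc h2 (fun z hz => hsup z (by simp [hz]))
      exact ⟨s, t, hst, by simp [hs], by simp [ht], h4, h5⟩
    · have hcs := hsup c (by simp)
      exact ⟨x, c, h, by simp, by simp, h1, by omega⟩

lemma punch (hpinj : Function.Injective pos) {G' : SimpleGraph V}
    (hsub : ∀ {a b : V}, G'.Adj a b → T.Adj a b)
    (hnc : Noncrossing pos T.edgeSet) {s t : V} (hadj : G'.Adj s t)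
    {w z : V} (hw : G'.Reachable w z)
    (hdisj : ∀ x : V, G'.Reachable w x → x ≠ s ∧ x ≠ t)
    (h1 : pos s < pos w) (h2 : pos w < pos t) (h3 : pos z < pos s ∨ pos t < pos z) :
    False := by
  obtain ⟨p⟩ := hw
  obtain ⟨g, h, hgh, hgmem, hhmem, hg1, hg2, hh⟩ := cross_edge pos p h1 h2 h3
    (fun x hx => by
      obtain ⟨hxs, hxt⟩ := hdisj x (support_reach p hx)
      exact ⟨fun he => hxs (hpinj he), fun he => hxt (hpinj he)⟩)
  obtain ⟨hgs, hgt⟩ := hdisj g (support_reach p hgmem)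
  obtain ⟨hhs, hht⟩ := hdisj h (support_reach p hhmem)
  refine hnc s t g h ((SimpleGraph.mem_edgeSet _).mpr (hsub hadj))
    ((SimpleGraph.mem_edgeSet _).mpr (hsub hgh)) hadj.ne hgs.symm hhs.symm hgt.symm hht.symm
    hgh.ne ?_
  exact Or.inl ⟨Or.inl ⟨hg1, hg2⟩, fun hB => by rcases hB with ⟨u1, u2⟩ | ⟨u1, u2⟩ <;> omega⟩

lemma backward_rep (hT : T.IsTree) (hpinj : Function.Injective pos)
    (hncT : Noncrossing pos T.edgeSet) : RepresentedBy T pos := by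
  intro u v hadj
  by_contra hncirc
  set G' := T.deleteEdges {s(u,v)} with hG'
  have hbr : ¬ G'.Reachable u v := bridge hT hadj
  have hdisjUV : ∀ x : V, G'.Reachable u x → G'.Reachable v x → False :=
    fun x h1 h2 => hbr (h1.trans h2.symm)
  unfold IsCircularIntervalOn at hncirc
  push_neg at hncirc
  obtain ⟨hn1, hn2⟩ := hncirc
  unfold IsIntervalOn at hn1 hn2
  push_neg at hn1 hn2
  obtain ⟨a, b, c, ha, hbL, hc, hab, hbc, hbA⟩ := hn1
  obtain ⟨a', b', c', ha', hbL', hc', hab', hbc', hbA'⟩ := hn2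
  -- memberships
  have haCu : G'.Reachable u a := ha.2
  have hcCu : G'.Reachable u c := hc.2
  have hbCv : G'.Reachable v b := by
    rcases cover hT (u := u) (v := v) b with h | h
    · exact absurd ⟨hbL, h⟩ hbA
    · exact h
  have ha'Cv : G'.Reachable v a' := by
    rcases cover hT (u := u) (v := v) a' with h | h
    · exact absurd ⟨ha'.1, h⟩ ha'.2
    · exact h
  have hc'Cv : G'.Reachable v c' := by
    rcases cover hT (u := u) (v := v) c' with h | h
    · exact absurd ⟨hc'.1, h⟩ hc'.2
    · exact h
  have hb'Cu : G'.Reachable u b' := by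
    by_contra h
    rcases cover hT (u := u) (v := v) b' with h2 | h2
    · exact h h2
    · exact hbA' ⟨hbL', fun hx : b' ∈ _ => h hx.2⟩
  -- strictness
  have hab_s : pos a < pos b := by
    rcases lt_or_eq_of_le hab with h | h
    · exact h
    · exact absurd (hpinj h) (fun he => hdisjUV b (he ▸ haCu) hbCv)
  have hbc_s : pos b < pos c := by
    rcases lt_or_eq_of_le hbc with h | h
    · exact h
    · exact absurd (hpinj h) (fun he => hdisjUV b (he ▸ hcCu).symm.symm hbCv)
  have hab_s' : pos a' < pos b' := by
    rcases lt_or_eq_of_le hab' with h | h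
    · exact h
    · exact absurd (hpinj h) (fun he => hdisjUV b' hb'Cu (he ▸ ha'Cv))
  have hbc_s' : pos b' < pos c' := by
    rcases lt_or_eq_of_le hbc' with h | h
    · exact h
    · exact absurd (hpinj h) (fun he => hdisjUV b' hb'Cu (he ▸ hc'Cv))
  -- spanning edges
  obtain ⟨pac⟩ := haCu.symm.trans hcCu
  obtain ⟨s, t, hst, hsmem, htmem, hs1, hs2⟩ := span_edge pos pac hab_s hbc_s
    (fun z hz => fun he => hdisjUV z (haCu.trans (support_reach pac hz)) (hpinj he ▸ hbCv))
  have hsCu : G'.Reachable u s := haCu.trans (support_reach pac hsmem)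
  have htCu : G'.Reachable u t := haCu.trans (support_reach pac htmem)
  obtain ⟨pac'⟩ := ha'Cv.symm.trans hc'Cv
  obtain ⟨s', t', hst', hsmem', htmem', hs1', hs2'⟩ := span_edge pos pac' hab_s' hbc_s'
    (fun z hz => fun he => hdisjUV z (hpinj he ▸ hb'Cu) (ha'Cv.trans (support_reach pac' hz)))
  have hsCv : G'.Reachable v s' := ha'Cv.trans (support_reach pac' hsmem')
  have htCv : G'.Reachable v t' := ha'Cv.trans (support_reach pac' htmem')
  -- position distinctness facts
  have hss' : pos s ≠ pos s' := fun he => hdisjUV s hsCu (hpinj he ▸ hsCv)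
  have hst'2 : pos s ≠ pos t' := fun he => hdisjUV s hsCu (hpinj he ▸ htCv)
  have hts' : pos t ≠ pos s' := fun he => hdisjUV t htCu (hpinj he ▸ hsCv)
  have htt' : pos t ≠ pos t' := fun he => hdisjUV t htCu (hpinj he ▸ htCv)
  by_cases hin : pos s' < pos s ∧ pos s < pos t'
  · by_cases hin2 : pos s' < pos t ∧ pos t < pos t'
    · -- both s,t inside (s',t') : use b ∈ Cv inside (s,t), s' outside
      refine punch pos hpinj (fun hadj => (SimpleGraph.deleteEdges_adj.mp hadj).1) hncT hst
        (w := b) (z := s') (hbCv.symm.trans hsCv) ?_ hs1 hs2 (Or.inl hin.1)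
      intro x hx
      have hxCv : G'.Reachable v x := hbCv.trans hx
      exact ⟨fun he => hdisjUV x (he ▸ hsCu) hxCv, fun he => hdisjUV x (he ▸ htCu) hxCv⟩
    · -- t outside (s',t')
      refine punch pos hpinj (fun hadj => (SimpleGraph.deleteEdges_adj.mp hadj).1) hncT hst'
        (w := b') (z := t) (hb'Cu.symm.trans htCu) ?_ hs1' hs2' (by omega)
      intro x hx
      have hxCu : G'.Reachable u x := hb'Cu.trans hx
      exact ⟨fun he => hdisjUV x hxCu (he ▸ hsCv), fun he => hdisjUV x hxCu (he ▸ htCv)⟩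
  · -- s outside (s',t')
    refine punch pos hpinj (fun hadj => (SimpleGraph.deleteEdges_adj.mp hadj).1) hncT hst'
      (w := b') (z := s) (hb'Cu.symm.trans hsCu) ?_ hs1' hs2' (by omega)
    intro x hx
    have hxCu : G'.Reachable u x := hb'Cu.trans hx
    exact ⟨fun he => hdisjUV x hxCu (he ▸ hsCv), fun he => hdisjUV x hxCu (he ▸ htCv)⟩

end Backward
lemma between_iff_of_order {p q : V → ℕ} {L : Set V}
    (hiff : ∀ a ∈ L, ∀ b ∈ L, (p a < p b ↔ q a < q b)) {a x b : V}
    (ha : a ∈ L) (hx : x ∈ L) (hb : b ∈ L) :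
    Between p a x b ↔ Between q a x b := by
  unfold Between
  rw [hiff a ha x hx, hiff x hx b hb, hiff b hb x hx, hiff x hx a ha]

lemma noncross_transfer {p q : V → ℕ} {L : Set V}
    (hiff : ∀ a ∈ L, ∀ b ∈ L, (p a < p b ↔ q a < q b)) {Ei : Set (Sym2 V)}
    (hend : ∀ e ∈ Ei, ∀ v ∈ e, v ∈ L) (h : Noncrossing p Ei) : Noncrossing q Ei := by
  intro a b c d hab hcd h1 h2 h3 h4 h5 h6 halt
  have haL : a ∈ L := hend _ hab a (Sym2.mem_iff.mpr (Or.inl rfl))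
  have hbL : b ∈ L := hend _ hab b (Sym2.mem_iff.mpr (Or.inr rfl))
  have hcL : c ∈ L := hend _ hcd c (Sym2.mem_iff.mpr (Or.inl rfl))
  have hdL : d ∈ L := hend _ hcd d (Sym2.mem_iff.mpr (Or.inr rfl))
  apply h a b c d hab hcd h1 h2 h3 h4 h5 h6
  unfold Alternates at halt ⊢
  rwa [between_iff_of_order hiff haL hcL hbL, between_iff_of_order hiff haL hdL hbL]


end Stmt0

open Stmt0 in
/-- `⟨T, E_1, …, E_k⟩` admits a partitioned `T`-coherent `k`-page book
embedding iff `⟨V(T), E_1, …, E_k, E(T)⟩` admits a partitioned `(k+1)`-page book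
embedding. -/
theorem stmt0 {V : Type*} [Fintype V] (T : SimpleGraph V) (hT : T.IsTree)
    (k : ℕ) (hk : 1 ≤ k) (E : Fin k → Set (Sym2 V))
    (hE : ∀ i : Fin k, ∀ e ∈ E i, ∀ v ∈ e, v ∈ leafSet T) :
    (∃ pos : V → ℕ, Set.InjOn pos (leafSet T) ∧ RepresentedBy T pos ∧
        ∀ i : Fin k, Noncrossing pos (E i)) ↔
      (∃ pos : V → ℕ, Function.Injective pos ∧
        (∀ i : Fin k, Noncrossing pos (E i)) ∧ Noncrossing pos T.edgeSet) := by
  classical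
  classical
  constructor
  · rintro ⟨pos, hinj, hrep, hnc⟩
    by_cases hedge : ∃ x y : V, T.Adj x y
    · obtain ⟨x, y, hxy⟩ := hedge
      obtain ⟨l0, hl0, -⟩ := exists_leaf_comp hT hxy
      obtain ⟨r, hrmem, hrmin⟩ := Finset.exists_min_image
        (Set.toFinite (leafSet T)).toFinset pos
        ⟨l0, (Set.Finite.mem_toFinset _).mpr hl0⟩
      rw [Set.Finite.mem_toFinset] at hrmem
      have hrmin' : ∀ l ∈ leafSet T, pos r ≤ pos l := fun l hl =>
        hrmin l ((Set.Finite.mem_toFinset _).mpr hl)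
      refine ⟨pos' hT pos r, pos'_injective hT pos r hrmem hinj, ?_,
        noncross_tree hT pos r hrmem hrmin' hrep hinj⟩
      intro i
      exact noncross_transfer
        (fun a ha b hb => leaf_order_iff hT pos r hrmem hrmin' hinj ha hb)
        (hE i) (hnc i)
    · push_neg at hedge
      obtain ⟨pos0, hpos0⟩ := Countable.exists_injective_nat V
      refine ⟨pos0, hpos0, ?_, ?_⟩
      · intro i a b c d hab _ _ _ _ _ _ _ _
        obtain ⟨w, hw, -⟩ := hE i _ hab a (Sym2.mem_iff.mpr (Or.inl rfl))
        exact hedge a w hw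
      · intro a b c d hab _ _ _ _ _ _ _ _
        exact hedge a b ((SimpleGraph.mem_edgeSet _).mp hab)
  · rintro ⟨pos, hpinj, hnc, hncT⟩
    exact ⟨pos, hpinj.injOn, backward_rep pos hT hpinj hncT, hnc⟩
end

section
/- Let T be a finite tree with vertex set V and edge set E(T), and let σ* be a linear order on V in which the edge set E(T) is noncrossing (no two tree edges alternate). Then for every edge e of T, the vertex set of each of the two connected components of T − e is a circular interval of σ*. In particular, the restriction of σ* to the leaves of T is a linear order represented by T. -/
open Function Set

/-- Along a walk, a predicate that holds at the start but not the end must switch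
along some edge. -/
lemma exists_switch {V : Type*} {G : SimpleGraph V} {x y : V} (p : G.Walk x y)
    (P : V → Prop) (hx : P x) (hy : ¬P y) :
    ∃ a b, G.Adj a b ∧ a ∈ p.support ∧ b ∈ p.support ∧ P a ∧ ¬P b := by
  revert hx
  induction p with
  | nil => exact fun hx => absurd hx hy
  | cons h q ih =>
    intro hx
    rename_i x' z _ 
    by_cases hz : P z
    · obtain ⟨a, b, hab, ha, hb, hPa, hPb⟩ := ih hy hz
      exact ⟨a, b, hab, by simp [ha], by simp [hb], hPa, hPb⟩
    · exact ⟨x', z, h, by simp, by simp, hx, hz⟩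

/-- Every vertex of a walk is reachable from the start. -/
lemma reachable_of_mem_support {V : Type*} {G : SimpleGraph V} {x y z : V}
    (p : G.Walk x y) (hz : z ∈ p.support) : G.Reachable x z := by
  classical
  exact ⟨p.takeUntil z hz⟩

/-- Core crossing lemma: two "alternating" pairs of vertices in the two
components give rise to two crossing edges. -/
lemma core_cross {V : Type*} (T G : SimpleGraph V) (hle : G ≤ T)
    (pos : V → ℕ) (hpos : Function.Injective pos)
    (hnc : Noncrossing pos T.edgeSet)
    (r s p1 p2 p3 p4 : V)
    (h12 : pos p1 < pos p2) (h23 : pos p2 < pos p3) (h34 : pos p3 < pos p4)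
    (hr1 : G.Reachable r p1) (hr3 : G.Reachable r p3)
    (hs2 : G.Reachable s p2) (hs4 : G.Reachable s p4)
    (hdisj : ∀ x y, G.Reachable r x → G.Reachable s y → x ≠ y) : False := by
  obtain ⟨w2⟩ := hs2.symm.trans hs4
  obtain ⟨c, d, hcd, hcs, hds, hPc, hPd⟩ :=
    exists_switch w2 (fun v => pos p1 < pos v ∧ pos v < pos p3)
      ⟨h12, h23⟩ (by intro ⟨_, h⟩; omega)
  have hsc : G.Reachable s c := hs2.trans (reachable_of_mem_support w2 hcs)
  have hsd : G.Reachable s d := hs2.trans (reachable_of_mem_support w2 hds)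
  have hd1 : pos d ≠ pos p1 := fun h => hdisj p1 d hr1 hsd (hpos h).symm
  have hd3 : pos d ≠ pos p3 := fun h => hdisj p3 d hr3 hsd (hpos h).symm
  obtain ⟨w1⟩ := hr1.symm.trans hr3
  have key : ∃ a b, G.Adj a b ∧ G.Reachable r a ∧ G.Reachable r b ∧
      Between pos c a d ∧ ¬ Between pos c b d := by
    rcases (by omega : pos d < pos p1 ∨ pos p3 < pos d) with hcase | hcase
    · -- d < p1 < c < p3 : Q p1 true, Q p3 false
      obtain ⟨a, b, hab, ha, hb, hQa, hQb⟩ :=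
        exists_switch w1 (fun v => Between pos c v d)
          (Or.inr ⟨hcase, hPc.1⟩) (by intro h; unfold Between at h; omega)
      exact ⟨a, b, hab, hr1.trans (reachable_of_mem_support w1 ha),
        hr1.trans (reachable_of_mem_support w1 hb), hQa, hQb⟩
    · -- p1 < c < p3 < d : Q p3 true, Q p1 false
      obtain ⟨a, b, hab, ha, hb, hQa, hQb⟩ :=
        exists_switch w1.reverse (fun v => Between pos c v d)
          (Or.inl ⟨hPc.2, hcase⟩) (by intro h; unfold Between at h; omega)
      rw [SimpleGraph.Walk.support_reverse] at ha hb
      rw [List.mem_reverse] at ha hb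
      exact ⟨a, b, hab, hr1.trans (reachable_of_mem_support w1 ha),
        hr1.trans (reachable_of_mem_support w1 hb), hQa, hQb⟩
  obtain ⟨a, b, hab, hra, hrb, hQa, hQb⟩ := key
  have hac : a ≠ c := hdisj a c hra hsc
  have had : a ≠ d := hdisj a d hra hsd
  have hbc : b ≠ c := hdisj b c hrb hsc
  have hbd : b ≠ d := hdisj b d hrb hsd
  have hnab : pos a ≠ pos b := fun h => hab.ne (hpos h)
  have hncd : pos c ≠ pos d := fun h => hcd.ne (hpos h)
  have hnac : pos a ≠ pos c := fun h => hac (hpos h)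
  have hnad : pos a ≠ pos d := fun h => had (hpos h)
  have hnbc : pos b ≠ pos c := fun h => hbc (hpos h)
  have hnbd : pos b ≠ pos d := fun h => hbd (hpos h)
  refine hnc a b c d (T.mem_edgeSet.2 (hle hab)) (T.mem_edgeSet.2 (hle hcd))
    hab.ne hac had hbc hbd hcd.ne ?_
  unfold Between at hQa hQb
  unfold Alternates Between Xor' Xor
  omega

lemma reach_or_aux {V : Type*} (T : SimpleGraph V) (v : V) :
    ∀ {u x : V} (_ : T.Walk x u),
      (T.deleteEdges {s(u, v)}).Reachable x u ∨ (T.deleteEdges {s(u, v)}).Reachable x v := by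
  intro u x p
  induction p with
  | nil => exact Or.inl (SimpleGraph.Reachable.refl _)
  | @cons x z u' h q ih =>
    by_cases he : s(x, z) = s(u', v)
    · rw [Sym2.eq_iff] at he
      rcases he with ⟨rfl, rfl⟩ | ⟨rfl, rfl⟩
      · exact Or.inl (SimpleGraph.Reachable.refl _)
      · exact Or.inr (SimpleGraph.Reachable.refl _)
    · have hadj : (T.deleteEdges {s(u', v)}).Adj x z :=
        SimpleGraph.deleteEdges_adj.2 ⟨h, by simpa using he⟩
      rcases ih with h1 | h1
      · exact Or.inl (hadj.reachable.trans h1)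
      · exact Or.inr (hadj.reachable.trans h1)

/-- In a tree minus an edge `uv`, every vertex is reachable from `u` or from `v`. -/
lemma reach_or {V : Type*} {T : SimpleGraph V} (hT : T.IsTree) {u v : V}
    (_ : T.Adj u v) (w : V) :
    (T.deleteEdges {s(u, v)}).Reachable u w ∨ (T.deleteEdges {s(u, v)}).Reachable v w := by
  obtain ⟨p⟩ := hT.isConnected.preconnected w u
  rcases reach_or_aux T v p with h | h
  · exact Or.inl h.symm
  · exact Or.inr h.symm

/-- The deleted edge of a tree is a bridge: `u` and `v` are not reachable from
each other after deleting the edge `uv`. -/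
lemma not_reach {V : Type*} {T : SimpleGraph V} (hT : T.IsTree) {u v : V}
    (huv : T.Adj u v) : ¬ (T.deleteEdges {s(u, v)}).Reachable u v := by
  have hb := SimpleGraph.isAcyclic_iff_forall_adj_isBridge.1 hT.IsAcyclic huv
  exact hb

/-- if the edge set of a tree `T` is noncrossing in a linear order `σ*` on
its vertex set, then for every edge the vertex set of each component of `T − e` is a
circular interval of `σ*`; in particular the restriction of `σ*` to the leaves of `T`
is represented by `T`. -/
theorem stmt1 {V : Type*} [Fintype V] (T : SimpleGraph V) (hT : T.IsTree)
    (pos : V → ℕ) (hpos : Function.Injective pos)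
    (hnc : Noncrossing pos T.edgeSet) :
    (∀ u v : V, T.Adj u v →
      IsCircularIntervalOn pos Set.univ
        {w | (T.deleteEdges {s(u, v)}).Reachable u w}) ∧
    RepresentedBy T pos := by
  have main : ∀ u v : V, T.Adj u v →
      IsCircularIntervalOn pos Set.univ
        {w | (T.deleteEdges {s(u, v)}).Reachable u w} := by
    intro u v huv
    set G := T.deleteEdges {s(u, v)} with hG
    have hle : G ≤ T := SimpleGraph.deleteEdges_le _
    have hdisj : ∀ x y, G.Reachable u x → G.Reachable v y → x ≠ y := by
      intro x y hx hy hxy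
      exact not_reach hT huv (hx.trans (hxy ▸ hy).symm)
    have hdisj' : ∀ x y, G.Reachable v x → G.Reachable u y → x ≠ y :=
      fun x y hx hy => (hdisj y x hy hx).symm
    by_contra hcirc
    rw [IsCircularIntervalOn, not_or] at hcirc
    obtain ⟨hA, hB⟩ := hcirc
    unfold IsIntervalOn at hA hB
    push_neg at hA hB
    obtain ⟨x1, x2, x3, hx1, -, hx3, h12, h23, hx2⟩ := hA
    obtain ⟨y1, y2, y3, hy1, -, hy3, k12, k23, hy2⟩ := hB
    -- translate memberships
    have hx1' : G.Reachable u x1 := hx1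
    have hx3' : G.Reachable u x3 := hx3
    have hx2' : G.Reachable v x2 := (reach_or hT huv x2).resolve_left hx2
    have hy1A : ¬ G.Reachable u y1 := fun h => hy1.2 h
    have hy3A : ¬ G.Reachable u y3 := fun h => hy3.2 h
    have hy1' : G.Reachable v y1 := (reach_or hT huv y1).resolve_left hy1A
    have hy3' : G.Reachable v y3 := (reach_or hT huv y3).resolve_left hy3A
    have hy2' : G.Reachable u y2 := by
      by_contra h
      exact hy2 ⟨trivial, h⟩
    -- strict inequalities
    have s12 : pos x1 < pos x2 :=
      lt_of_le_of_ne h12 (fun h => hdisj x1 x2 hx1' hx2' (hpos h))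
    have s23 : pos x2 < pos x3 :=
      lt_of_le_of_ne h23 (fun h => hdisj' x2 x3 hx2' hx3' (hpos h))
    have t12 : pos y1 < pos y2 :=
      lt_of_le_of_ne k12 (fun h => hdisj' y1 y2 hy1' hy2' (hpos h))
    have t23 : pos y2 < pos y3 :=
      lt_of_le_of_ne k23 (fun h => hdisj y2 y3 hy2' hy3' (hpos h))
    rcases lt_or_ge (pos y1) (pos x1) with hc | hc
    · exact core_cross T G hle pos hpos hnc v u y1 x1 x2 x3 hc s12 s23
        hy1' hx2' hx1' hx3' hdisj'
    · have hc' : pos x1 < pos y1 :=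
        lt_of_le_of_ne hc (fun h => hdisj' y1 x1 hy1' hx1' (hpos h.symm))
      exact core_cross T G hle pos hpos hnc u v x1 y1 y2 y3 hc' t12 t23
        hx1' hy2' hy1' hy3' hdisj
  refine ⟨main, ?_⟩
  intro u v huv
  rcases main u v huv with h | h
  · left
    intro a b c ha hb hc hab hbc
    exact ⟨hb, h a b c ha.2 trivial hc.2 hab hbc⟩
  · right
    intro a b c ha hb hc hab hbc
    have ha' : a ∈ (Set.univ \ {w | (T.deleteEdges {s(u, v)}).Reachable u w}) :=
      ⟨trivial, fun hr => ha.2 ⟨ha.1, hr⟩⟩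
    have hc' : c ∈ (Set.univ \ {w | (T.deleteEdges {s(u, v)}).Reachable u w}) :=
      ⟨trivial, fun hr => hc.2 ⟨hc.1, hr⟩⟩
    have hb' := h a b c ha' trivial hc' hab hbc
    exact ⟨hb, fun hbS => hb'.2 hbS.2⟩
end

section
/- Let T be a finite tree with leaf set L and let σ be a linear order on L that is represented by T. Then σ can be extended to a linear order σ* on the whole vertex set V(T) (that is, the restriction of σ* to L equals σ) such that the edge set E(T) of T is noncrossing in σ*. -/
open Function Set

section NCAuxSection
open SimpleGraph

namespace NCAux

variable {V : Type*} {T : SimpleGraph V}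

/-- `x` is an ancestor of `y` in `T` rooted at `r` (metric definition). -/
def Anc (T : SimpleGraph V) (r x y : V) : Prop :=
  T.dist r x + T.dist x y = T.dist r y

lemma anc_refl (r x : V) : Anc T r x x := by simp [Anc]

lemma anc_root (r x : V) : Anc T r r x := by simp [Anc]

lemma eq_of_dist_eq_zero (hc : T.Connected) {x y : V} (h : T.dist x y = 0) : x = y :=
  (hc.dist_eq_zero_iff).mp h

lemma anc_antisymm (hc : T.Connected) {r x y : V} (h1 : Anc T r x y) (h2 : Anc T r y x) :
    x = y := by
  unfold Anc at h1 h2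
  have : T.dist x y = 0 := by omega
  exact eq_of_dist_eq_zero hc this

lemma anc_trans (hc : T.Connected) {r x y z : V} (h1 : Anc T r x y) (h2 : Anc T r y z) :
    Anc T r x z := by
  unfold Anc at *
  have t1 := hc.dist_triangle (u := x) (v := y) (w := z)
  have t2 := hc.dist_triangle (u := r) (v := x) (w := z)
  omega

lemma dist_adj (hc : T.Connected) {x y : V} (h : T.Adj x y) : T.dist x y = 1 :=
  SimpleGraph.dist_eq_one_iff_adj.mpr h

/-- for a geodesic walk, any support vertex splits the distance. -/
lemma dist_split (hc : T.Connected) {a b x : V} {p : T.Walk a b}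
    (hp : p.length = T.dist a b) (hx : x ∈ p.support) :
    T.dist a x + T.dist x b = T.dist a b := by
  classical
  have h1 : T.dist a x ≤ (p.takeUntil x hx).length := SimpleGraph.dist_le _
  have h2 : T.dist x b ≤ (p.dropUntil x hx).length := SimpleGraph.dist_le _
  have h3 : (p.takeUntil x hx).length + (p.dropUntil x hx).length = p.length := by
    have := congr_arg SimpleGraph.Walk.length (p.take_spec hx)
    rwa [SimpleGraph.Walk.length_append] at this
  have h4 := hc.dist_triangle (u := a) (v := x) (w := b)
  omega

/-- chain lemma: two ancestors of `z` are comparable, ordered by depth. -/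
lemma anc_chain (hT : T.IsTree) {r x y z : V} (hx : Anc T r x z) (hy : Anc T r y z)
    (hd : T.dist r x ≤ T.dist r y) : Anc T r x y := by
  classical
  have hc := hT.isConnected
  obtain ⟨p1, hp1⟩ := hc.exists_walk_length_eq_dist r x
  obtain ⟨p2, hp2⟩ := hc.exists_walk_length_eq_dist x z
  obtain ⟨q1, hq1⟩ := hc.exists_walk_length_eq_dist r y
  obtain ⟨q2, hq2⟩ := hc.exists_walk_length_eq_dist y z
  have hW1 : (p1.append p2).length = T.dist r z := by
    rw [SimpleGraph.Walk.length_append, hp1, hp2]; exact hx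
  have hW2 : (q1.append q2).length = T.dist r z := by
    rw [SimpleGraph.Walk.length_append, hq1, hq2]; exact hy
  have hP1 : (p1.append p2).IsPath := SimpleGraph.Walk.isPath_of_length_eq_dist _ hW1
  have hP2 : (q1.append q2).IsPath := SimpleGraph.Walk.isPath_of_length_eq_dist _ hW2
  have hEq : p1.append p2 = q1.append q2 := by
    have := hT.IsAcyclic.path_unique ⟨p1.append p2, hP1⟩ ⟨q1.append q2, hP2⟩
    exact congr_arg Subtype.val this
  have hy1 : y ∈ (p1.append p2).support := by
    rw [hEq, SimpleGraph.Walk.mem_support_append_iff]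
    exact Or.inr (SimpleGraph.Walk.start_mem_support _)
  rw [SimpleGraph.Walk.mem_support_append_iff] at hy1
  unfold Anc at *
  rcases hy1 with h | h
  · have := dist_split hc hp1 h
    have hxy : T.dist y x = 0 := by omega
    have : y = x := eq_of_dist_eq_zero hc hxy
    subst this
    simp
  · have h5 := dist_split hc hp2 h
    have t1 := hc.dist_triangle (u := r) (v := x) (w := y)
    have t2 := hc.dist_triangle (u := r) (v := y) (w := z)
    omega

lemma anc_dist_le {r x y : V} (h : Anc T r x y) : T.dist r x ≤ T.dist r y := by
  unfold Anc at h; omega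

lemma anc_dist_eq {r x y : V} (h : Anc T r x y) :
    T.dist r x + T.dist x y = T.dist r y := h

lemma anc_strict (hc : T.Connected) {r x y : V} (h : Anc T r x y) (hne : x ≠ y) :
    T.dist r x < T.dist r y := by
  unfold Anc at h
  have : T.dist x y ≠ 0 := fun h0 => hne (eq_of_dist_eq_zero hc h0)
  omega

lemma eq_of_anc_same_depth (hc : T.Connected) {r x y : V} (h : Anc T r x y)
    (hd : T.dist r x = T.dist r y) : x = y := by
  unfold Anc at h
  exact eq_of_dist_eq_zero hc (by omega)

/-- adjacent vertices are comparable in the ancestor order. -/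
lemma adj_anc (hT : T.IsTree) {r x y : V} (h : T.Adj x y) :
    Anc T r x y ∨ Anc T r y x := by
  classical
  have hc := hT.isConnected
  have hbr : ∀ p : T.Walk x y, s(x, y) ∈ p.edges := by
    have := (isAcyclic_iff_forall_adj_isBridge.mp hT.IsAcyclic) h
    exact isBridge_iff_adj_and_forall_walk_mem_edges.mp this
  obtain ⟨p1, hp1⟩ := hc.exists_walk_length_eq_dist r x
  obtain ⟨q1, hq1⟩ := hc.exists_walk_length_eq_dist r y
  have hm := hbr (p1.reverse.append q1)
  rw [SimpleGraph.Walk.edges_append, List.mem_append, SimpleGraph.Walk.edges_reverse,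
    List.mem_reverse] at hm
  rcases hm with hm | hm
  · right
    have hy : y ∈ p1.support := SimpleGraph.Walk.snd_mem_support_of_mem_edges _ hm
    have := dist_split hc hp1 hy
    have h1 : T.dist y x = T.dist x y := SimpleGraph.dist_comm
    unfold Anc
    have h2 : T.dist x y = 1 := dist_adj hc h
    omega
  · left
    have hx : x ∈ q1.support := SimpleGraph.Walk.fst_mem_support_of_mem_edges _ hm
    have := dist_split hc hq1 hx
    have h2 : T.dist x y = 1 := dist_adj hc h
    unfold Anc
    omega

/-- first step of a geodesic. -/
lemma exists_step (hc : T.Connected) {x y : V} (hne : x ≠ y) :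
    ∃ c, T.Adj x c ∧ 1 + T.dist c y = T.dist x y := by
  obtain ⟨p, hp⟩ := hc.exists_walk_length_eq_dist x y
  cases p with
  | nil => exact absurd rfl hne
  | @cons _ c _ hadj q =>
    refine ⟨c, hadj, ?_⟩
    have h1 : T.dist c y ≤ q.length := SimpleGraph.dist_le _
    have h2 : T.dist x y ≤ T.dist x c + T.dist c y := hc.dist_triangle
    have h3 : T.dist x c = 1 := dist_adj hc hadj
    simp only [SimpleGraph.Walk.length_cons] at hp
    omega

/-- child of `u` towards a strict descendant `w`. -/
lemma child_toward (hc : T.Connected) {r u w : V} (h : Anc T r u w) (hne : u ≠ w) :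
    ∃ c, T.Adj u c ∧ Anc T r u c ∧ T.dist r c = T.dist r u + 1 ∧ Anc T r c w := by
  obtain ⟨c, hadj, hstep⟩ := exists_step hc hne
  have h3 : T.dist u c = 1 := dist_adj hc hadj
  have t1 : T.dist r c ≤ T.dist r u + T.dist u c := hc.dist_triangle
  have t2 : T.dist r w ≤ T.dist r c + T.dist c w := hc.dist_triangle
  unfold Anc at h ⊢
  refine ⟨c, hadj, by omega, by omega, by omega⟩

/-- parent of a non-root vertex. -/
lemma exists_parent (hc : T.Connected) {r v : V} (hne : v ≠ r) :
    ∃ u, T.Adj u v ∧ Anc T r u v ∧ T.dist r u + 1 = T.dist r v := by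
  obtain ⟨c, hadj, hstep⟩ := exists_step hc hne
  have h3 : T.dist v c = 1 := dist_adj hc hadj
  have h4 : T.dist c r = T.dist r c := SimpleGraph.dist_comm
  have h5 : T.dist v r = T.dist r v := SimpleGraph.dist_comm
  have h6 : T.dist c v = 1 := by rw [SimpleGraph.dist_comm]; exact h3
  refine ⟨c, hadj.symm, ?_, by omega⟩
  unfold Anc
  omega

lemma anc_adj_depth (hc : T.Connected) {r x y : V} (hadj : T.Adj x y) (h : Anc T r x y) :
    T.dist r y = T.dist r x + 1 := by
  have := dist_adj hc hadj
  unfold Anc at h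
  omega

/-- every vertex has a leaf descendant (provided some edge exists). -/
lemma exists_leaf_desc [Fintype V] (hT : T.IsTree) {a0 b0 : V} (hadj0 : T.Adj a0 b0)
    (r v : V) : ∃ l, l ∈ leafSet T ∧ Anc T r v l := by
  classical
  have hc := hT.isConnected
  obtain ⟨z, hz, hmax⟩ := Set.Finite.exists_maximalFor (fun w => T.dist r w)
      {w | Anc T r v w} (Set.toFinite _) ⟨v, anc_refl r v⟩
  beta_reduce at hmax
  have hzr : z ≠ r := by
    intro hzr
    have h1 : T.dist r v + T.dist v z = T.dist r z := hz
    have h2 : T.dist r z = 0 := by rw [hzr]; exact SimpleGraph.dist_self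
    have hrv : r = v := eq_of_dist_eq_zero hc (by omega)
    set w0 : V := if a0 = z then b0 else a0 with hw0def
    have hw0z : w0 ≠ z := by
      by_cases h : a0 = z
      · simp only [hw0def, h, if_pos rfl]
        intro hb; exact hadj0.ne (h.trans hb.symm)
      · simpa [hw0def, h] using h
    have hmem : Anc T r v w0 := by rw [← hrv]; exact anc_root r w0
    have h3 := hmax (j := w0) hmem (by omega)
    have h4 : T.dist r w0 = 0 := by omega
    exact hw0z ((eq_of_dist_eq_zero hc h4).symm.trans hzr.symm)
  obtain ⟨u, hu, huanc, hud⟩ := exists_parent hc hzr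
  refine ⟨z, ⟨u, hu.symm, ?_⟩, hz⟩
  intro y hy
  rcases adj_anc hT (r := r) hy with h1 | h1
  · exfalso
    have hd := anc_adj_depth hc hy h1
    have := hmax (j := y) (anc_trans hc hz h1) (by omega)
    omega
  · have hd := anc_adj_depth hc hy.symm h1
    have c1 : Anc T r y u := anc_chain hT h1 huanc (by omega)
    have c2 : Anc T r u y := anc_chain hT huanc h1 (by omega)
    exact anc_antisymm hc c1 c2

/-- The component of `v` in `T` minus the edge `uv` (`u` the parent) is the set of
descendants of `v`. -/
lemma reach_delete_iff (hT : T.IsTree) {r u v : V} (hadj : T.Adj u v)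
    (hanc : Anc T r u v) (w : V) :
    (T.deleteEdges {s(u, v)}).Reachable v w ↔ Anc T r v w := by
  classical
  have hc := hT.isConnected
  have hdepth : T.dist r v = T.dist r u + 1 := anc_adj_depth hc hadj hanc
  constructor
  · intro hreach
    obtain ⟨q⟩ := hreach
    suffices H : ∀ {x w' : V} (_ : (T.deleteEdges {s(u, v)}).Walk x w'),
        Anc T r v x → Anc T r v w' from H q (anc_refl r v)
    intro x w' q
    induction q with
    | nil => exact id
    | @cons x y w' hxy q ih =>
      intro hvx
      apply ih
      rw [SimpleGraph.deleteEdges_adj] at hxy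
      obtain ⟨hA, hE⟩ := hxy
      rcases adj_anc hT (r := r) hA with h1 | h1
      · exact anc_trans hc hvx h1
      · have hd := anc_adj_depth hc hA.symm h1
        by_cases hxv : x = v
        · subst hxv
          exfalso
          have c1 : Anc T r y u := anc_chain hT h1 hanc (by omega)
          have c2 : Anc T r u y := anc_chain hT hanc h1 (by omega)
          have : y = u := anc_antisymm hc c1 c2
          subst this
          exact hE (by rw [Sym2.eq_swap]; rfl)
        · have hlt : T.dist r v < T.dist r x := anc_strict hc hvx (Ne.symm hxv)
          exact anc_chain hT hvx h1 (by omega)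
  · intro h
    obtain ⟨p, hp⟩ := hc.exists_walk_length_eq_dist v w
    have hne : s(u, v) ∉ p.edges := by
      intro hmem
      have hu : u ∈ p.support := SimpleGraph.Walk.fst_mem_support_of_mem_edges _ hmem
      have hsplit := dist_split hc hp hu
      have h1 : T.dist v u = 1 := by rw [SimpleGraph.dist_comm]; exact dist_adj hc hadj
      have t1 : T.dist r w ≤ T.dist r u + T.dist u w := hc.dist_triangle
      unfold Anc at h hanc
      omega
    exact ⟨p.toDeleteEdges {s(u, v)} (fun e he => by
      simp only [Set.mem_singleton_iff]
      intro hh; exact hne (hh ▸ he))⟩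

/-- the set of leaf descendants of `x`. -/
def lv (T : SimpleGraph V) (r x : V) : Set V := {l | l ∈ leafSet T ∧ Anc T r x l}

/-- the key of a vertex: the minimal `σ`-value of a leaf descendant. -/
noncomputable def key (T : SimpleGraph V) (σ : V → ℕ) (r x : V) : ℕ :=
  sInf (σ '' lv T r x)

lemma lv_subset (r x : V) : lv T r x ⊆ leafSet T := fun _ h => h.1

lemma lv_nonempty [Fintype V] (hT : T.IsTree) {a0 b0 : V} (hadj0 : T.Adj a0 b0)
    (r x : V) : (lv T r x).Nonempty := by
  obtain ⟨l, hl, hanc⟩ := exists_leaf_desc hT hadj0 r x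
  exact ⟨l, hl, hanc⟩

lemma key_mem [Fintype V] (hT : T.IsTree) {a0 b0 : V} (hadj0 : T.Adj a0 b0)
    (σ : V → ℕ) (r x : V) : ∃ l ∈ lv T r x, σ l = key T σ r x := by
  have h := Nat.sInf_mem ((lv_nonempty hT hadj0 r x).image σ)
  obtain ⟨l, hl, hσl⟩ := h
  exact ⟨l, hl, hσl⟩

lemma key_le {σ : V → ℕ} {r x l : V} (hl : l ∈ lv T r x) : key T σ r x ≤ σ l :=
  Nat.sInf_le ⟨l, hl, rfl⟩

lemma lv_mono (hc : T.Connected) {r a b : V} (h : Anc T r a b) : lv T r b ⊆ lv T r a :=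
  fun l hl => ⟨hl.1, anc_trans hc h hl.2⟩

lemma key_anc_le [Fintype V] (hT : T.IsTree) {a0 b0 : V} (hadj0 : T.Adj a0 b0)
    (σ : V → ℕ) {r a b : V} (h : Anc T r a b) : key T σ r a ≤ key T σ r b := by
  obtain ⟨l, hl, hσl⟩ := key_mem hT hadj0 σ r b
  rw [← hσl]
  exact key_le (lv_mono hT.isConnected h hl)

lemma anc_to_root {r x : V} (hc : T.Connected) (h : Anc T r x r) : x = r := by
  unfold Anc at h
  have h0 : T.dist r r = 0 := SimpleGraph.dist_self
  have hx : T.dist r x = 0 := by omega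
  exact (eq_of_dist_eq_zero hc hx).symm

lemma root_not_mem_lv (hc : T.Connected) {r x : V} (hxr : x ≠ r) : r ∉ lv T r x := by
  intro hmem
  exact hxr (anc_to_root hc hmem.2)

lemma key_leaf [Fintype V] (hT : T.IsTree) {a0 b0 : V} (hadj0 : T.Adj a0 b0)
    (σ : V → ℕ) {r : V} (hr : r ∈ leafSet T) (hrmin : ∀ l ∈ leafSet T, σ r ≤ σ l)
    {l : V} (hl : l ∈ leafSet T) : key T σ r l = σ l := by
  have hc := hT.isConnected
  by_cases hlr : l = r
  · subst hlr
    apply le_antisymm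
    · exact key_le ⟨hl, anc_refl l l⟩
    · apply le_csInf ((lv_nonempty hT hadj0 l l).image σ)
      rintro m ⟨l', hl', rfl⟩
      exact hrmin l' hl'.1
  · have hlv : lv T r l = {l} := by
      apply Set.eq_singleton_iff_unique_mem.mpr
      refine ⟨⟨hl, anc_refl r l⟩, ?_⟩
      rintro l' ⟨hl', hanc⟩
      by_contra hne
      obtain ⟨c, hcadj, hcanc, hcd, _⟩ := child_toward hc hanc (fun h => hne h.symm)
      obtain ⟨u, huadj, huanc, hud⟩ := exists_parent hc hlr
      obtain ⟨w, hw, huniq⟩ := hl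
      have h1 : c = w := huniq c hcadj
      have h2 : u = w := huniq u huadj.symm
      rw [← h2] at h1
      subst h1
      omega
    rw [key, hlv]
    simp

lemma key_comparable [Fintype V] (hT : T.IsTree) {a0 b0 : V} (hadj0 : T.Adj a0 b0)
    {σ : V → ℕ} (hσ : Set.InjOn σ (leafSet T)) {r x y : V}
    (h : key T σ r x = key T σ r y) : Anc T r x y ∨ Anc T r y x := by
  obtain ⟨lx, hlx, hσx⟩ := key_mem hT hadj0 σ r x
  obtain ⟨ly, hly, hσy⟩ := key_mem hT hadj0 σ r y
  have hll : lx = ly := hσ hlx.1 hly.1 (by omega)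
  subst hll
  rcases le_total (T.dist r x) (T.dist r y) with hd | hd
  · exact Or.inl (anc_chain hT hlx.2 hly.2 hd)
  · exact Or.inr (anc_chain hT hly.2 hlx.2 hd)

lemma lv_interval [Fintype V] (hT : T.IsTree) {σ : V → ℕ} {r : V}
    (hr : r ∈ leafSet T) (hrmin : ∀ l ∈ leafSet T, σ r ≤ σ l)
    (hrep : RepresentedBy T σ) {x : V} (hxr : x ≠ r) :
    IsIntervalOn σ (leafSet T) (lv T r x) := by
  have hc := hT.isConnected
  obtain ⟨u, huadj, huanc, hud⟩ := exists_parent hc hxr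
  have hseteq : {l | l ∈ leafSet T ∧ (T.deleteEdges {s(x, u)}).Reachable x l} = lv T r x := by
    ext l
    simp only [Set.mem_setOf_eq, lv]
    constructor
    · rintro ⟨h1, h2⟩
      rw [Sym2.eq_swap] at h2
      exact ⟨h1, (reach_delete_iff hT huadj huanc l).mp h2⟩
    · rintro ⟨h1, h2⟩
      refine ⟨h1, ?_⟩
      rw [Sym2.eq_swap]
      exact (reach_delete_iff hT huadj huanc l).mpr h2
  have hcirc := hrep x u huadj.symm
  rw [hseteq] at hcirc
  rcases hcirc with hint | hint
  · exact hint
  · intro a b c ha hb hcmem hab hbc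
    by_contra hbA
    have hra : r ∈ leafSet T \ lv T r x := ⟨hr, root_not_mem_lv hc hxr⟩
    have := hint r a b hra (lv_subset r x ha) ⟨hb, hbA⟩ (hrmin a (lv_subset r x ha)) hab
    exact this.2 ha

lemma blocks_ordered [Fintype V] (hT : T.IsTree) {σ : V → ℕ}
    (hσ : Set.InjOn σ (leafSet T)) {r : V}
    (hr : r ∈ leafSet T) (hrmin : ∀ l ∈ leafSet T, σ r ≤ σ l)
    (hrep : RepresentedBy T σ) {x y : V}
    (h1 : ¬Anc T r x y) (h2 : ¬Anc T r y x) :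
    (∀ lx ∈ lv T r x, ∀ ly ∈ lv T r y, σ lx < σ ly) ∨
      (∀ lx ∈ lv T r x, ∀ ly ∈ lv T r y, σ ly < σ lx) := by
  have hc := hT.isConnected
  have hxr : x ≠ r := fun h => h1 (by rw [h]; exact anc_root r y)
  have hyr : y ≠ r := fun h => h2 (by rw [h]; exact anc_root r x)
  have hdisj : ∀ l, l ∈ lv T r x → l ∈ lv T r y → False := by
    intro l hlx hly
    rcases le_total (T.dist r x) (T.dist r y) with hd | hd
    · exact h1 (anc_chain hT hlx.2 hly.2 hd)
    · exact h2 (anc_chain hT hly.2 hlx.2 hd)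
  have hIx := lv_interval hT hr hrmin hrep hxr
  have hIy := lv_interval hT hr hrmin hrep hyr
  have hnex : ∀ lx ∈ lv T r x, ∀ ly ∈ lv T r y, σ lx ≠ σ ly := by
    intro lx hlx ly hly hσe
    exact hdisj lx hlx (hσ hlx.1 hly.1 hσe ▸ hlx |> fun _ => (hσ hlx.1 hly.1 hσe) ▸ hly)
  by_cases hcase : ∃ lx ∈ lv T r x, ∃ ly ∈ lv T r y, σ ly < σ lx
  · right
    obtain ⟨lx0, hlx0, ly0, hly0, hlt0⟩ := hcase
    intro lx hlx ly hly
    by_contra hge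
    push_neg at hge
    have hne := hnex lx hlx ly hly
    have hlt : σ lx < σ ly := lt_of_le_of_ne hge hne
    rcases lt_or_gt_of_ne (hnex lx hlx ly0 hly0) with hA | hB
    · exact hdisj ly0 (hIx lx ly0 lx0 hlx hly0.1 hlx0 (le_of_lt hA) (le_of_lt hlt0)) hly0
    · exact hdisj lx hlx (hIy ly0 lx ly hly0 hlx.1 hly (le_of_lt hB) (le_of_lt hlt))
  · left
    push_neg at hcase
    intro lx hlx ly hly
    exact lt_of_le_of_ne (hcase lx hlx ly hly) (hnex lx hlx ly hly)

section Main

variable [Fintype V] {σ : V → ℕ} {r : V}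

lemma anc_of_key_eq_le (hT : T.IsTree) {a0 b0 : V} (hadj0 : T.Adj a0 b0)
    (hσ : Set.InjOn σ (leafSet T)) {x y : V}
    (h : key T σ r x = key T σ r y) (hd : T.dist r x ≤ T.dist r y) : Anc T r x y := by
  rcases key_comparable hT hadj0 hσ h with h1 | h1
  · exact h1
  · have := eq_of_anc_same_depth hT.isConnected h1 (le_antisymm (anc_dist_le h1) hd)
    rw [this]
    exact anc_refl r x

lemma eq_of_key_eq_depth_eq (hT : T.IsTree) {a0 b0 : V} (hadj0 : T.Adj a0 b0)
    (hσ : Set.InjOn σ (leafSet T)) {x y : V}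
    (h : key T σ r x = key T σ r y) (hd : T.dist r x = T.dist r y) : x = y :=
  eq_of_anc_same_depth hT.isConnected
    (anc_of_key_eq_le hT hadj0 hσ h (le_of_eq hd)) hd

/-- locate a vertex whose key lies strictly between the keys of `u` and its child `v`. -/
lemma locate (hT : T.IsTree) (hσ : Set.InjOn σ (leafSet T))
    (hr : r ∈ leafSet T) (hrmin : ∀ l ∈ leafSet T, σ r ≤ σ l)
    (hrep : RepresentedBy T σ) {u v z : V}
    (huv : T.Adj u v) (hancuv : Anc T r u v)
    (hk1 : key T σ r u < key T σ r z) (hk2 : key T σ r z < key T σ r v) :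
    Anc T r u z ∧ ∃ c, Anc T r c z ∧ Anc T r u c ∧ T.dist r c = T.dist r u + 1 ∧
      (∀ l ∈ lv T r c, σ l < key T σ r v) := by
  have hc := hT.isConnected
  have htv : T.dist r v = T.dist r u + 1 := anc_adj_depth hc huv hancuv
  obtain ⟨lv0, hlv0, hσv0⟩ := key_mem hT huv σ r v
  obtain ⟨lz0, hlz0, hσz0⟩ := key_mem hT huv σ r z
  have hancuz : Anc T r u z := by
    by_cases hA : Anc T r u z
    · exact hA
    by_cases hB : Anc T r z u
    · exact absurd (key_anc_le hT huv σ hB) (by omega)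
    rcases blocks_ordered hT hσ hr hrmin hrep hB hA with hord | hord
    · obtain ⟨lu0, hlu0, hσu0⟩ := key_mem hT huv σ r u
      have := hord lz0 hlz0 lu0 hlu0
      omega
    · have := hord lz0 hlz0 lv0 (lv_mono hc hancuv hlv0)
      omega
  have hzu : u ≠ z := fun h => by rw [h] at hk1; omega
  obtain ⟨c, hcadj, hancuc, htc, hanccz⟩ := child_toward hc hancuz hzu
  refine ⟨hancuz, c, hanccz, hancuc, htc, ?_⟩
  have hcv : c ≠ v := by
    intro h
    subst h
    have := key_anc_le hT huv σ hanccz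
    omega
  have hn1 : ¬Anc T r c v := fun h =>
    hcv (eq_of_anc_same_depth hc h (by omega))
  have hn2 : ¬Anc T r v c := fun h =>
    hcv (eq_of_anc_same_depth hc h (by omega)).symm
  rcases blocks_ordered hT hσ hr hrmin hrep hn1 hn2 with hord | hord
  · intro l hl
    have := hord l hl lv0 hlv0
    omega
  · exfalso
    have := hord lz0 (lv_mono hc hanccz hlz0) lv0 hlv0
    omega

/-- the central combinatorial lemma: for an edge `xy` (with `x` the parent) disjoint from
the edge `uv` (with `u` the parent), `x` lies lex-between `u` and `v` iff `y` does. -/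
lemma P_iff (hT : T.IsTree) (hσ : Set.InjOn σ (leafSet T))
    (hr : r ∈ leafSet T) (hrmin : ∀ l ∈ leafSet T, σ r ≤ σ l)
    (hrep : RepresentedBy T σ) {u v x y : V}
    (huv : T.Adj u v) (hancuv : Anc T r u v)
    (hxy : T.Adj x y) (hancxy : Anc T r x y)
    (hxu : x ≠ u) (hyu : y ≠ u) (hkuv : key T σ r u < key T σ r v) :
    ((key T σ r x = key T σ r u ∧ T.dist r u < T.dist r x) ∨
        (key T σ r u < key T σ r x ∧ key T σ r x < key T σ r v)) ↔
      ((key T σ r y = key T σ r u ∧ T.dist r u < T.dist r y) ∨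
        (key T σ r u < key T σ r y ∧ key T σ r y < key T σ r v)) := by
  have hc := hT.isConnected
  have htv : T.dist r v = T.dist r u + 1 := anc_adj_depth hc huv hancuv
  have hty : T.dist r y = T.dist r x + 1 := anc_adj_depth hc hxy hancxy
  have hkxy : key T σ r x ≤ key T σ r y := key_anc_le hT huv σ hancxy
  constructor
  · intro hPx
    by_contra hnPy
    rcases hPx with ⟨hkx, htx⟩ | ⟨hkux, hkxv⟩
    · -- case Ia
      by_cases hky : key T σ r y = key T σ r u
      · exact hnPy (Or.inl ⟨hky, by omega⟩)
      have hkylt : key T σ r u < key T σ r y := lt_of_le_of_ne (hkx ▸ hkxy) (Ne.symm hky)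
      have hkyge : key T σ r v ≤ key T σ r y := by
        by_contra h
        push_neg at h
        exact hnPy (Or.inr ⟨hkylt, h⟩)
      have hxvne : x ≠ v := by
        intro h; rw [h] at hkx; omega
      have hnxv : ¬Anc T r x v := by
        intro hxv'
        have h5 : T.dist r x < T.dist r v := anc_strict hc hxv' hxvne
        omega
      have hnvx : ¬Anc T r v x := by
        intro h
        have := key_anc_le hT huv σ h
        omega
      obtain ⟨ly0, hly0, hσy0⟩ := key_mem hT huv σ r y
      obtain ⟨lv0, hlv0, hσv0⟩ := key_mem hT huv σ r v
      rcases blocks_ordered hT hσ hr hrmin hrep hnxv hnvx with hord | hord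
      · have := hord ly0 (lv_mono hc hancxy hly0) lv0 hlv0
        omega
      · obtain ⟨lx0, hlx0, hσx0⟩ := key_mem hT huv σ r x
        have := hord lx0 hlx0 lv0 hlv0
        omega
    · -- case Ib
      obtain ⟨hancux, c, hanccx, hancuc, htc, hcb⟩ :=
        locate hT hσ hr hrmin hrep huv hancuv hkux hkxv
      have hkyge : key T σ r v ≤ key T σ r y := by
        by_contra h
        push_neg at h
        exact hnPy (Or.inr ⟨lt_of_lt_of_le hkux hkxy, h⟩)
      obtain ⟨ly0, hly0, hσy0⟩ := key_mem hT huv σ r y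
      have hmem : ly0 ∈ lv T r c := lv_mono hc hanccx (lv_mono hc hancxy hly0)
      have := hcb ly0 hmem
      omega
  · intro hPy
    by_contra hnPx
    rcases hPy with ⟨hky, hty'⟩ | ⟨hkuy, hkyv⟩
    · -- case IIa
      have hkxu : key T σ r x ≤ key T σ r u := hky ▸ hkxy
      have hancuy : Anc T r u y :=
        anc_of_key_eq_le hT huv hσ hky.symm (le_of_lt hty')
      by_cases hkx : key T σ r x = key T σ r u
      · have htxu : T.dist r x ≤ T.dist r u := by
          by_contra h
          push_neg at h
          exact hnPx (Or.inl ⟨hkx, h⟩)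
        have : T.dist r x ≠ T.dist r u := fun h =>
          hxu (eq_of_key_eq_depth_eq hT huv hσ hkx h)
        omega
      · have hkxlt : key T σ r x < key T σ r u := lt_of_le_of_ne hkxu hkx
        have htxu : T.dist r x ≤ T.dist r u := by
          by_contra h
          push_neg at h
          have := key_anc_le hT huv σ (anc_chain hT hancuy hancxy (le_of_lt h))
          omega
        have hancxu : Anc T r x u := anc_chain hT hancxy hancuy htxu
        have h5 : T.dist r x < T.dist r u := anc_strict hc hancxu hxu
        omega
    · -- case IIb
      have hkxu : key T σ r x ≤ key T σ r u := by
        by_contra h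
        push_neg at h
        exact hnPx (Or.inr ⟨h, lt_of_le_of_lt hkxy hkyv⟩)
      obtain ⟨hancuy, c, hanccy, hancuc, htc, _⟩ :=
        locate hT hσ hr hrmin hrep huv hancuv hkuy hkyv
      rcases le_or_gt (T.dist r x) (T.dist r u) with hd | hd
      · have hancxu : Anc T r x u := anc_chain hT hancxy hancuy hd
        have h5 : T.dist r x < T.dist r u := anc_strict hc hancxu hxu
        have h6 : T.dist r u < T.dist r y := anc_strict hc hancuy (Ne.symm hyu)
        omega
      · have hancux : Anc T r u x := anc_chain hT hancuy hancxy (le_of_lt hd)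
        have hanccx : Anc T r c x := anc_chain hT hanccy hancxy (by omega)
        have h7 : key T σ r u ≤ key T σ r c := key_anc_le hT huv σ hancuc
        have h8 : key T σ r c ≤ key T σ r x := key_anc_le hT huv σ hanccx
        exact hnPx (Or.inl ⟨by omega, hd⟩)

end Main

lemma lex_lt {C a b x y : ℕ} (hx : x < C) (hy : y < C) :
    a * C + x < b * C + y ↔ (a < b ∨ (a = b ∧ x < y)) := by
  constructor
  · intro h
    rcases lt_trichotomy a b with h1 | h1 | h1
    · exact Or.inl h1
    · subst h1; right; exact ⟨rfl, by omega⟩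
    · exfalso
      have h3 : (b + 1) * C ≤ a * C := Nat.mul_le_mul_right C h1
      rw [add_one_mul] at h3
      omega
  · rintro (h1 | ⟨rfl, h2⟩)
    · have h3 : (a + 1) * C ≤ b * C := Nat.mul_le_mul_right C h1
      rw [add_one_mul] at h3
      omega
    · omega

/-- membership of the interval strictly between `u` and `v` is the same for the two
endpoints of any tree edge disjoint from `uv`. -/
lemma B_iff [Fintype V] {σ : V → ℕ} {r : V} (hT : T.IsTree) (hσ : Set.InjOn σ (leafSet T))
    (hr : r ∈ leafSet T) (hrmin : ∀ l ∈ leafSet T, σ r ≤ σ l)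
    (hrep : RepresentedBy T σ) {C : ℕ} (hC : ∀ w, T.dist r w < C) {u v x y : V}
    (huv : T.Adj u v) (hancuv : Anc T r u v)
    (hxy : T.Adj x y) (hancxy : Anc T r x y)
    (hxu : x ≠ u) (hyu : y ≠ u) :
    ((key T σ r u * C + T.dist r u < key T σ r x * C + T.dist r x ∧
        key T σ r x * C + T.dist r x < key T σ r v * C + T.dist r v) ↔
      (key T σ r u * C + T.dist r u < key T σ r y * C + T.dist r y ∧
        key T σ r y * C + T.dist r y < key T σ r v * C + T.dist r v)) := by
  have hc := hT.isConnected
  have htv : T.dist r v = T.dist r u + 1 := anc_adj_depth hc huv hancuv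
  have hkuvle : key T σ r u ≤ key T σ r v := key_anc_le hT huv σ hancuv
  have hBchar : ∀ z, (key T σ r u * C + T.dist r u < key T σ r z * C + T.dist r z ∧
      key T σ r z * C + T.dist r z < key T σ r v * C + T.dist r v) ↔
      (key T σ r u < key T σ r v ∧
        ((key T σ r z = key T σ r u ∧ T.dist r u < T.dist r z) ∨
          (key T σ r u < key T σ r z ∧ key T σ r z < key T σ r v))) := by
    intro z
    rw [lex_lt (hC u) (hC z), lex_lt (hC z) (hC v)]
    constructor
    · rintro ⟨h1, h2⟩
      rcases h1 with h1 | ⟨h1e, h1t⟩ <;> rcases h2 with h2 | ⟨h2e, h2t⟩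
      · exact ⟨by omega, Or.inr ⟨h1, h2⟩⟩
      · exfalso
        have hzv : Anc T r z v := anc_of_key_eq_le hT huv hσ h2e (by omega)
        have hzu : Anc T r z u := anc_chain hT hzv hancuv (by omega)
        have := key_anc_le hT huv σ hzu
        omega
      · exact ⟨by omega, Or.inl ⟨h1e.symm, h1t⟩⟩
      · exfalso; omega
    · rintro ⟨hkuv, h⟩
      rcases h with ⟨h1, h2⟩ | ⟨h1, h2⟩
      · exact ⟨Or.inr ⟨h1.symm, h2⟩, Or.inl (by omega)⟩
      · exact ⟨Or.inl h1, Or.inl h2⟩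
  rw [hBchar x, hBchar y]
  by_cases hkuv : key T σ r u < key T σ r v
  · exact and_congr_right fun _ =>
      P_iff hT hσ hr hrmin hrep huv hancuv hxy hancxy hxu hyu hkuv
  · constructor <;> (rintro ⟨h, -⟩; exact absurd h hkuv)

end NCAux


end NCAuxSection

/-- a linear order `σ` on the leaves of a tree `T` that is represented by
`T` can be extended to a linear order `σ*` on the whole vertex set (the restriction of
`σ*` to the leaves being `σ`) in which the edge set of `T` is noncrossing. -/
theorem stmt2 {V : Type*} [Fintype V] (T : SimpleGraph V) (hT : T.IsTree)
    (σ : V → ℕ) (hσ : Set.InjOn σ (leafSet T)) (hrep : RepresentedBy T σ) :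
    ∃ pos : V → ℕ, Function.Injective pos ∧
      (∀ l ∈ leafSet T, ∀ l' ∈ leafSet T, (pos l < pos l' ↔ σ l < σ l')) ∧
      Noncrossing pos T.edgeSet := by
  classical
  by_cases hL : (leafSet T).Nonempty
  swap
  · refine ⟨fun v => ((Fintype.equivFin V) v : ℕ), ?_, ?_, ?_⟩
    · intro a b h
      exact (Fintype.equivFin V).injective (Fin.val_injective h)
    · intro l hl
      exact absurd ⟨l, hl⟩ hL
    · intro a b c d hab _ _ _ _ _ _ _
      have hadj : T.Adj a b := hab
      obtain ⟨l, hl, -⟩ := NCAux.exists_leaf_desc hT hadj a a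
      exact absurd ⟨l, hl⟩ hL
  · obtain ⟨r, hr, hσr⟩ := Nat.sInf_mem (hL.image σ)
    have hrmin : ∀ l ∈ leafSet T, σ r ≤ σ l := fun l hl => by
      rw [hσr]; exact Nat.sInf_le ⟨l, hl, rfl⟩
    obtain ⟨w0, hw0⟩ := hr.exists
    have hadj0 : T.Adj r w0 := hw0
    set C := Fintype.card V with hCdef
    have hC : ∀ w, T.dist r w < C := by
      intro w
      obtain ⟨p, hp⟩ := hT.isConnected.exists_walk_length_eq_dist r w
      have := (p.isPath_of_length_eq_dist hp).length_lt
      omega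
    refine ⟨fun w => NCAux.key T σ r w * C + T.dist r w, ?_, ?_, ?_⟩
    · -- injectivity
      intro a b h
      simp only at h
      have h1 : ¬ (NCAux.key T σ r a < NCAux.key T σ r b ∨
          (NCAux.key T σ r a = NCAux.key T σ r b ∧ T.dist r a < T.dist r b)) := by
        intro hh
        have := (NCAux.lex_lt (hC a) (hC b)).mpr hh
        omega
      have h2 : ¬ (NCAux.key T σ r b < NCAux.key T σ r a ∨
          (NCAux.key T σ r b = NCAux.key T σ r a ∧ T.dist r b < T.dist r a)) := by
        intro hh
        have := (NCAux.lex_lt (hC b) (hC a)).mpr hh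
        omega
      push_neg at h1 h2
      have hk : NCAux.key T σ r a = NCAux.key T σ r b := le_antisymm h2.1 h1.1
      have hd : T.dist r a = T.dist r b := by
        have := h1.2 hk
        have := h2.2 hk.symm
        omega
      exact NCAux.eq_of_key_eq_depth_eq hT hadj0 hσ hk hd
    · -- leaf order
      intro l hl l' hl'
      simp only
      rw [NCAux.lex_lt (hC l) (hC l')]
      have hkl := NCAux.key_leaf hT hadj0 σ hr hrmin hl
      have hkl' := NCAux.key_leaf hT hadj0 σ hr hrmin hl'
      constructor
      · rintro (h | ⟨h1, h2⟩)
        · omega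
        · exfalso
          have : l = l' := hσ hl hl' (by omega)
          subst this
          omega
      · intro h
        left
        omega
    · -- noncrossing
      intro a b c d hab hcd hne1 hne2 hne3 hne4 hne5 hne6
      have hA : T.Adj a b := hab
      have hD : T.Adj c d := hcd
      have key_B : ∀ u v x y : V, T.Adj u v → NCAux.Anc T r u v → T.Adj x y → NCAux.Anc T r x y →
          x ≠ u → y ≠ u →
          ((NCAux.key T σ r u * C + T.dist r u < NCAux.key T σ r x * C + T.dist r x ∧
              NCAux.key T σ r x * C + T.dist r x < NCAux.key T σ r v * C + T.dist r v) ↔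
            (NCAux.key T σ r u * C + T.dist r u < NCAux.key T σ r y * C + T.dist r y ∧
              NCAux.key T σ r y * C + T.dist r y < NCAux.key T σ r v * C + T.dist r v)) :=
        fun u v x y h1 h2 h3 h4 h5 h6 => NCAux.B_iff hT hσ hr hrmin hrep hC h1 h2 h3 h4 h5 h6
      -- orient both edges
      obtain ⟨u, v, huv, hancuv, hor1⟩ : ∃ u v, T.Adj u v ∧ NCAux.Anc T r u v ∧
          ((u = a ∧ v = b) ∨ (u = b ∧ v = a)) := by
        rcases NCAux.adj_anc hT (r := r) hA with h | h
        · exact ⟨a, b, hA, h, Or.inl ⟨rfl, rfl⟩⟩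
        · exact ⟨b, a, hA.symm, h, Or.inr ⟨rfl, rfl⟩⟩
      obtain ⟨x, y, hxy, hancxy, hor2⟩ : ∃ x y, T.Adj x y ∧ NCAux.Anc T r x y ∧
          ((x = c ∧ y = d) ∨ (x = d ∧ y = c)) := by
        rcases NCAux.adj_anc hT (r := r) hD with h | h
        · exact ⟨c, d, hD, h, Or.inl ⟨rfl, rfl⟩⟩
        · exact ⟨d, c, hD.symm, h, Or.inr ⟨rfl, rfl⟩⟩
      have hxu : x ≠ u := by
        rcases hor1 with ⟨h1, h2⟩ | ⟨h1, h2⟩ <;> rcases hor2 with ⟨h3, h4⟩ | ⟨h3, h4⟩ <;>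
          subst h1 <;> subst h3 <;> first
            | exact Ne.symm hne2 | exact Ne.symm hne3 | exact Ne.symm hne4
            | exact Ne.symm hne5
      have hyu : y ≠ u := by
        rcases hor1 with ⟨h1, h2⟩ | ⟨h1, h2⟩ <;> rcases hor2 with ⟨h3, h4⟩ | ⟨h3, h4⟩ <;>
          subst h1 <;> subst h4 <;> first
            | exact Ne.symm hne2 | exact Ne.symm hne3 | exact Ne.symm hne4
            | exact Ne.symm hne5
      have hmain := key_B u v x y huv hancuv hxy hancxy hxu hyu
      have hposuv : NCAux.key T σ r u * C + T.dist r u < NCAux.key T σ r v * C + T.dist r v := by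
        rw [NCAux.lex_lt (hC u) (hC v)]
        have h1 := NCAux.key_anc_le hT hadj0 σ hancuv
        have h2 := NCAux.anc_adj_depth hT.isConnected huv hancuv
        omega
      have hBet : ∀ z : V, Between (fun w => NCAux.key T σ r w * C + T.dist r w) a z b ↔
          (NCAux.key T σ r u * C + T.dist r u < NCAux.key T σ r z * C + T.dist r z ∧
            NCAux.key T σ r z * C + T.dist r z < NCAux.key T σ r v * C + T.dist r v) := by
        intro z
        unfold Between
        simp only
        rcases hor1 with ⟨h1, h2⟩ | ⟨h1, h2⟩ <;> subst h1 <;> subst h2 <;>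
          constructor
        · rintro (⟨hh1, hh2⟩ | ⟨hh1, hh2⟩)
          · exact ⟨hh1, hh2⟩
          · omega
        · exact fun h => Or.inl h
        · rintro (⟨hh1, hh2⟩ | ⟨hh1, hh2⟩)
          · omega
          · exact ⟨hh1, hh2⟩
        · exact fun h => Or.inr h
      have hcd_iff : (NCAux.key T σ r u * C + T.dist r u < NCAux.key T σ r c * C + T.dist r c ∧
            NCAux.key T σ r c * C + T.dist r c < NCAux.key T σ r v * C + T.dist r v) ↔
          (NCAux.key T σ r u * C + T.dist r u < NCAux.key T σ r d * C + T.dist r d ∧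
            NCAux.key T σ r d * C + T.dist r d < NCAux.key T σ r v * C + T.dist r v) := by
        rcases hor2 with ⟨h3, h4⟩ | ⟨h3, h4⟩ <;> subst h3 <;> subst h4
        · exact hmain
        · exact hmain.symm
      intro halt
      have hiff : Between (fun w => NCAux.key T σ r w * C + T.dist r w) a c b ↔
          Between (fun w => NCAux.key T σ r w * C + T.dist r w) a d b := by
        rw [hBet c, hBet d]
        exact hcd_iff
      rcases halt with ⟨h1, h2⟩ | ⟨h1, h2⟩
      · exact h2 (hiff.mp h1)
      · exact h2 (hiff.mpr h1)
end

section
/- Let σ = x_1, x_2, …, x_n be a linear order on a finite set V and let E be a set of unordered pairs of elements of V that is noncrossing in σ. Then E is also noncrossing in the circularly shifted order σ' = x_2, …, x_n, x_1. -/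
open Function Set

lemma rot_key {n : ℕ} (i : Fin n) :
    (((finRotate n).symm i : Fin n) : ℕ) + 1 = (i : ℕ) ∨
    ((((finRotate n).symm i : Fin n) : ℕ) + 1 = n ∧ (i : ℕ) = 0) := by
  cases n with
  | zero => exact i.elim0
  | succ m =>
    set j := (finRotate (m+1)).symm i with hj
    have hi : finRotate (m+1) j = i := (finRotate (m+1)).apply_symm_apply i
    by_cases hl : j = Fin.last m
    · right
      rw [← hi, coe_finRotate, if_pos hl]
      simp [hl]
    · left
      rw [← hi, coe_finRotate_of_ne_last hl]

/-- if a set of edges is noncrossing in the linear order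
`σ = x_1, …, x_n` (given by the enumeration `e : Fin n ≃ V`), then it is noncrossing
in the circularly shifted order `σ' = x_2, …, x_n, x_1`. -/
theorem stmt4 {V : Type*} (n : ℕ) (e : Fin n ≃ V) (E : Set (Sym2 V))
    (h : Noncrossing (fun v => ((e.symm v : Fin n) : ℕ)) E) :
    Noncrossing (fun v => (((finRotate n).symm (e.symm v) : Fin n) : ℕ)) E := by
  intro a b c d hab hcd h1 h2 h3 h4 h5 h6
  have H := h a b c d hab hcd h1 h2 h3 h4 h5 h6
  have inj : ∀ x y : V, x ≠ y → ((e.symm x : Fin n) : ℕ) ≠ ((e.symm y : Fin n) : ℕ) := by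
    intro x y hxy hc
    exact hxy (e.symm.injective (Fin.val_injective hc))
  have d1 := inj a b h1
  have d2 := inj a c h2
  have d3 := inj a d h3
  have d4 := inj b c h4
  have d5 := inj b d h5
  have d6 := inj c d h6
  have ka := rot_key (e.symm a)
  have kb := rot_key (e.symm b)
  have kc := rot_key (e.symm c)
  have kd := rot_key (e.symm d)
  have la := (e.symm a).isLt
  have lb := (e.symm b).isLt
  have lc := (e.symm c).isLt
  have ld := (e.symm d).isLt
  simp only [Alternates, Between, Xor', xor_iff_or_and_not_and] at H ⊢
  omega
end

section
/- Let T be a finite tree with leaf set L = {v_1, …, v_n} having at least one internal vertex, fix an internal vertex r of T, and let E_1, E_2 be sets of unordered pairs of leaves of T. Let T* be the tree consisting of two disjoint copies T' and T'' of T together with a new vertex r* adjacent exactly to the copies r' and r'' of r; the leaf set of T* is L' ∪ L'', where v'_i and v''_i denote the copies of v_i in T' and T''. Let E*_1 = { {v'_i, v'_j} : {v_i, v_j} ∈ E_1 } ∪ { {v''_i, v''_j} : {v_i, v_j} ∈ E_2 } and E*_2 = { {v'_i, v''_i} : v_i ∈ L }. Then ⟨T, E_1, E_2⟩ admits a partitioned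 T-coherent 2-page book embedding if and only if ⟨T*, E*_1, E*_2⟩ admits a partitioned T*-coherent 2-page book embedding. -/
open Function Set

/-- The tree `T*` built from two disjoint copies `T'` (the `Sum.inl` copy) and `T''`
(the `Sum.inr ∘ Sum.inl` copy) of `T` together with a new vertex `r*`
(`Sum.inr (Sum.inr ())`) adjacent exactly to the two copies of `r`. -/
def TStar {V : Type*} (T : SimpleGraph V) (r : V) : SimpleGraph (V ⊕ V ⊕ Unit) :=
  SimpleGraph.fromRel (fun x y =>
    match x, y with
    | Sum.inl u, Sum.inl v => T.Adj u v
    | Sum.inr (Sum.inl u), Sum.inr (Sum.inl v) => T.Adj u v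
    | Sum.inl u, Sum.inr (Sum.inr _) => u = r
    | Sum.inr (Sum.inl u), Sum.inr (Sum.inr _) => u = r
    | _, _ => False)

section OrderLemmas
variable {α : Type*}

lemma alternates_congr_mono {pos pos' : α → ℕ} {a b c d : α}
    (h : ∀ x ∈ ({a,b,c,d} : Set α), ∀ y ∈ ({a,b,c,d} : Set α),
      (pos x < pos y ↔ pos' x < pos' y)) :
    Alternates pos a b c d ↔ Alternates pos' a b c d := by
  have ha : a ∈ ({a,b,c,d} : Set α) := by simp
  have hb : b ∈ ({a,b,c,d} : Set α) := by simp
  have hc : c ∈ ({a,b,c,d} : Set α) := by simp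
  have hd : d ∈ ({a,b,c,d} : Set α) := by simp
  have h1 := h a ha c hc; have h2 := h c hc b hb
  have h3 := h b hb c hc; have h4 := h c hc a ha
  have h5 := h a ha d hd; have h6 := h d hd b hb
  have h7 := h b hb d hd; have h8 := h d hd a ha
  unfold Alternates Between Xor' Xor
  omega

lemma alternates_congr_anti {pos pos' : α → ℕ} {a b c d : α}
    (h : ∀ x ∈ ({a,b,c,d} : Set α), ∀ y ∈ ({a,b,c,d} : Set α),
      (pos x < pos y ↔ pos' y < pos' x)) :
    Alternates pos a b c d ↔ Alternates pos' a b c d := by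
  have ha : a ∈ ({a,b,c,d} : Set α) := by simp
  have hb : b ∈ ({a,b,c,d} : Set α) := by simp
  have hc : c ∈ ({a,b,c,d} : Set α) := by simp
  have hd : d ∈ ({a,b,c,d} : Set α) := by simp
  have h1 := h a ha c hc; have h2 := h c hc b hb
  have h3 := h b hb c hc; have h4 := h c hc a ha
  have h5 := h a ha d hd; have h6 := h d hd b hb
  have h7 := h b hb d hd; have h8 := h d hd a ha
  unfold Alternates Between Xor' Xor
  omega

/-- Rotation of a position function: everything strictly below `t` is shifted up by `M`. -/
def rotPos (pos : α → ℕ) (t M : ℕ) : α → ℕ :=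
  fun x => if pos x < t then pos x + M else pos x

lemma rot_injOn {pos : α → ℕ} {L : Set α} {t M : ℕ} (hM : ∀ x ∈ L, pos x < M)
    (hinj : Set.InjOn pos L) : Set.InjOn (rotPos pos t M) L := by
  intro x hx y hy hxy
  unfold rotPos at hxy
  have := hM x hx; have := hM y hy
  apply hinj hx hy
  split_ifs at hxy <;> omega

lemma rot_alternates {pos : α → ℕ} {t M : ℕ} {a b c d : α}
    (ha : pos a < M) (hb : pos b < M) (hc : pos c < M) (hd : pos d < M)
    (hab : pos a ≠ pos b) (hac : pos a ≠ pos c) (had : pos a ≠ pos d)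
    (hbc : pos b ≠ pos c) (hbd : pos b ≠ pos d) (hcd : pos c ≠ pos d) :
    Alternates (rotPos pos t M) a b c d ↔ Alternates pos a b c d := by
  unfold Alternates Between Xor' Xor rotPos
  split_ifs <;> omega

lemma rot_interval {pos : α → ℕ} {L A : Set α} {t M : ℕ}
    (hM : ∀ x ∈ L, pos x < M) (hAL : A ⊆ L) (hA : IsIntervalOn pos L A) :
    IsIntervalOn (rotPos pos t M) L A ∨ IsIntervalOn (rotPos pos t M) L (L \ A) := by
  by_cases h1 : ∃ x ∈ A, pos x < t
  · by_cases h2 : ∃ y ∈ A, t ≤ pos y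
    · -- A straddles the cut; complement is an interval in the rotated order
      obtain ⟨x, hxA, hxt⟩ := h1
      obtain ⟨y, hyA, hyt⟩ := h2
      right
      intro a b c ha hb hc hab hbc
      refine ⟨hb, fun hbA => ?_⟩
      have hclaim : ∀ e ∈ L \ A, pos e < pos x ∨ pos y < pos e := by
        intro e he
        by_contra hcon
        push_neg at hcon
        exact he.2 (hA x e y hxA he.1 hyA hcon.1 hcon.2)
      have hMa := hM a ha.1; have hMb := hM b hb; have hMc := hM c hc.1
      have hMx := hM x (hAL hxA); have hMy := hM y (hAL hyA)
      have hca := hclaim a ha; have hcc := hclaim c hc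
      have hxy : pos x < pos y := lt_of_lt_of_le hxt hyt
      unfold rotPos at hab hbc
      split_ifs at hab hbc with g1 g2 g3 <;>
      first
        | omega
        | exact hc.2 (hA b c x hbA hc.1 hxA (by omega) (by omega))
        | exact ha.2 (hA y a b hyA ha.1 hbA (by omega) (by omega))
    · -- all of A strictly below the cut (all shifted)
      push_neg at h2
      left
      intro a b c ha hb hc hab hbc
      have hat := h2 a ha; have hct := h2 c hc
      have hMa := hM a (hAL ha); have hMb := hM b hb; have hMc := hM c (hAL hc)
      unfold rotPos at hab hbc
      split_ifs at hab hbc with g1 g2 g3 <;>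
      first
        | omega
        | exact hA a b c ha hb hc (by omega) (by omega)
  · -- all of A at or above the cut (all unshifted)
    push_neg at h1
    left
    intro a b c ha hb hc hab hbc
    have hat := h1 a ha; have hct := h1 c hc
    have hMa := hM a (hAL ha); have hMb := hM b hb; have hMc := hM c (hAL hc)
    unfold rotPos at hab hbc
    split_ifs at hab hbc with g1 g2 g3 <;>
    first
      | omega
      | exact hA a b c ha hb hc (by omega) (by omega)

end OrderLemmas
section ICIOLemmas
variable {α β : Type*}

lemma icio_compl {pos : α → ℕ} {L A : Set α} (hAL : A ⊆ L) :
    IsCircularIntervalOn pos L A ↔ IsCircularIntervalOn pos L (L \ A) := by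
  unfold IsCircularIntervalOn
  rw [Set.diff_diff_cancel_left hAL]
  tauto

lemma rot_icio {pos : α → ℕ} {L A : Set α} {t M : ℕ}
    (hM : ∀ x ∈ L, pos x < M) (hAL : A ⊆ L) (h : IsCircularIntervalOn pos L A) :
    IsCircularIntervalOn (rotPos pos t M) L A := by
  rcases h with h | h
  · exact rot_interval hM hAL h
  · rcases rot_interval hM Set.diff_subset h with h' | h'
    · exact Or.inr h'
    · rw [Set.diff_diff_cancel_left hAL] at h'
      exact Or.inl h'

lemma interval_restrict {pos : α → ℕ} {L L' S : Set α} (hL' : L' ⊆ L)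
    (h : IsIntervalOn pos L S) : IsIntervalOn pos L' (S ∩ L') := by
  intro a b c ha hb hc h1 h2
  exact ⟨h a b c ha.1 (hL' hb) hc.1 h1 h2, hb⟩

lemma icio_restrict {pos : α → ℕ} {L L' S : Set α} (hL' : L' ⊆ L)
    (h : IsCircularIntervalOn pos L S) : IsCircularIntervalOn pos L' (S ∩ L') := by
  rcases h with h | h
  · exact Or.inl (interval_restrict hL' h)
  · right
    have := interval_restrict hL' h
    have heq : (L \ S) ∩ L' = L' \ (S ∩ L') := by
      ext x; constructor
      · rintro ⟨⟨hxL, hxS⟩, hxL'⟩; exact ⟨hxL', fun hx => hxS hx.1⟩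
      · rintro ⟨hxL', hxS⟩; exact ⟨⟨hL' hxL', fun hx => hxS ⟨hx, hxL'⟩⟩, hxL'⟩
    rwa [heq] at this

/-- transfer an interval along an injection `f` with `pos = pos' ∘ f`. -/
lemma interval_pullback {f : α → β} (hf : Function.Injective f)
    {pos' : β → ℕ} {L A : Set α}
    (h : IsIntervalOn pos' (f '' L) (f '' A)) :
    IsIntervalOn (pos' ∘ f) L A := by
  intro a b c ha hb hc h1 h2
  obtain ⟨b', hb', heq⟩ := h (f a) (f b) (f c) ⟨a, ha, rfl⟩ ⟨b, hb, rfl⟩ ⟨c, hc, rfl⟩ h1 h2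
  rwa [← hf heq]

lemma icio_pullback {f : α → β} (hf : Function.Injective f)
    {pos' : β → ℕ} {L A : Set α} (hAL : A ⊆ L)
    (h : IsCircularIntervalOn pos' (f '' L) (f '' A)) :
    IsCircularIntervalOn (pos' ∘ f) L A := by
  rcases h with h | h
  · exact Or.inl (interval_pullback hf h)
  · right
    have heq : f '' L \ f '' A = f '' (L \ A) := by
      rw [← Set.image_diff hf]
    rw [heq] at h
    exact interval_pullback hf h

/-- a circular interval avoiding the position-maximal element of `L` is an interval. -/
lemma interval_of_max_notin {pos : α → ℕ} {L S : Set α} {m : α} (hSL : S ⊆ L)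
    (hm : m ∈ L) (hmax : ∀ y ∈ L, pos y ≤ pos m) (hmS : m ∉ S)
    (h : IsCircularIntervalOn pos L S) : IsIntervalOn pos L S := by
  rcases h with h | h
  · exact h
  · intro a b c ha hb hc h1 h2
    by_contra hbS
    exact (h b c m ⟨hb, hbS⟩ (hSL hc) ⟨hm, hmS⟩ h2 (hmax c (hSL hc))).2 hc

/-- a circular interval avoiding the position-minimal element of `L` is an interval. -/
lemma interval_of_min_notin {pos : α → ℕ} {L S : Set α} {m : α} (hSL : S ⊆ L)
    (hm : m ∈ L) (hmin : ∀ y ∈ L, pos m ≤ pos y) (hmS : m ∉ S)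
    (h : IsCircularIntervalOn pos L S) : IsIntervalOn pos L S := by
  rcases h with h | h
  · exact h
  · intro a b c ha hb hc h1 h2
    by_contra hbS
    exact (h m a b ⟨hm, hmS⟩ (hSL ha) ⟨hb, hbS⟩ (hmin a (hSL ha)) h1).2 ha

end ICIOLemmas
section GraphLemmas
open SimpleGraph
variable {W : Type*} {G : SimpleGraph W}

lemma walk_closure (P : W → Prop) (h : ∀ x y, P x → G.Adj x y → P y) :
    ∀ {a b : W}, G.Reachable a b → P a → P b := by
  intro a b hab
  obtain ⟨w⟩ := hab
  induction w with
  | nil => exact id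
  | cons h' p ih => exact fun ha => ih (h _ _ ha h')

/-- Two-component lemma: after deleting an edge, every vertex is reachable
from one of its endpoints. -/
lemma reach_delete_or {T : SimpleGraph W} (hconn : T.Connected) {u v : W}
    (h : T.Adj u v) (z : W) :
    (T.deleteEdges {s(u,v)}).Reachable u z ∨ (T.deleteEdges {s(u,v)}).Reachable v z := by
  refine walk_closure (G := T)
    (fun z => (T.deleteEdges {s(u,v)}).Reachable u z ∨ (T.deleteEdges {s(u,v)}).Reachable v z)
    ?_ (hconn u z) (Or.inl (Reachable.refl u))
  intro x y hx hxy
  by_cases he : s(x,y) = s(u,v)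
  · rw [Sym2.eq_iff] at he
    rcases he with ⟨rfl, rfl⟩ | ⟨rfl, rfl⟩
    · exact Or.inr (Reachable.refl _)
    · exact Or.inl (Reachable.refl _)
  · have hadj : (T.deleteEdges {s(u,v)}).Adj x y := by
      rw [SimpleGraph.deleteEdges_adj]
      exact ⟨hxy, by simpa using he⟩
    exact hx.imp (fun hr => hr.trans hadj.reachable) (fun hr => hr.trans hadj.reachable)

/-- In a tree, the two endpoints of an edge are not connected after deleting it. -/
lemma reach_delete_not_both {T : SimpleGraph W} (hT : T.IsTree) {u v : W}
    (h : T.Adj u v) : ¬ (T.deleteEdges {s(u,v)}).Reachable u v := by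
  classical
  intro hre
  obtain ⟨w⟩ := hre
  have hedges : ∀ e ∈ w.toPath.1.edges, e ∈ T.edgeSet := by
    intro e he
    have := SimpleGraph.Walk.edges_subset_edgeSet _ he
    rw [SimpleGraph.edgeSet_deleteEdges] at this
    exact this.1
  have hnot : s(u,v) ∉ w.toPath.1.edges := by
    intro hmem
    have := SimpleGraph.Walk.edges_subset_edgeSet _ hmem
    rw [SimpleGraph.edgeSet_deleteEdges] at this
    exact this.2 rfl
  -- transfer to T
  let p : T.Walk u v := (w.toPath.1).transfer T hedges
  have hp : p.IsPath := SimpleGraph.Walk.IsPath.transfer _ w.toPath.2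
  have huniq := hT.2.path_unique ⟨p, hp⟩ (SimpleGraph.Path.singleton h)
  have : s(u,v) ∈ p.edges := by
    rw [show p = (⟨p, hp⟩ : T.Path u v).1 from rfl, huniq]
    simp [SimpleGraph.Path.singleton]
  rw [SimpleGraph.Walk.edges_transfer] at this
  exact hnot this
end GraphLemmas
section Laminar
open SimpleGraph
variable {W : Type*} {T : SimpleGraph W}

lemma transfer_delete {e f : Sym2 W} {x y : W}
    (w : (T.deleteEdges {e}).Walk x y) (hf : f ∉ w.edges) :
    (T.deleteEdges {f}).Reachable x y := by
  refine ⟨w.transfer _ ?_⟩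
  intro e' he'
  have h1 := SimpleGraph.Walk.edges_subset_edgeSet _ he'
  rw [SimpleGraph.edgeSet_deleteEdges] at h1 ⊢
  exact ⟨h1.1, by simp; rintro rfl; exact hf he'⟩

lemma laminar (hT : T.IsTree) {u₁ v₁ u₂ v₂ r : W}
    (h₁ : T.Adj u₁ v₁) (h₂ : T.Adj u₂ v₂)
    (hr₁ : ¬ (T.deleteEdges {s(u₁,v₁)}).Reachable u₁ r)
    (hr₂ : ¬ (T.deleteEdges {s(u₂,v₂)}).Reachable u₂ r) :
    (∀ z, (T.deleteEdges {s(u₁,v₁)}).Reachable u₁ z → (T.deleteEdges {s(u₂,v₂)}).Reachable u₂ z) ∨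
    (∀ z, (T.deleteEdges {s(u₂,v₂)}).Reachable u₂ z → (T.deleteEdges {s(u₁,v₁)}).Reachable u₁ z) ∨
    (∀ z, (T.deleteEdges {s(u₁,v₁)}).Reachable u₁ z → ¬ (T.deleteEdges {s(u₂,v₂)}).Reachable u₂ z) := by
  classical
  set R₁ := (T.deleteEdges {s(u₁,v₁)}).Reachable with hR₁
  set R₂ := (T.deleteEdges {s(u₂,v₂)}).Reachable with hR₂
  by_contra hcon
  push_neg at hcon
  obtain ⟨⟨a, haz, ha2⟩, ⟨b, hbz, hb1⟩, ⟨z, hz1, hz2⟩⟩ := hcon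
  have hconn := hT.1
  -- step A
  have hv2r : R₂ v₂ r := (reach_delete_or hconn h₂ r).resolve_left hr₂
  have hv1r : R₁ v₁ r := (reach_delete_or hconn h₁ r).resolve_left hr₁
  -- step B : R₁ r u₂
  have hru2 : R₁ r u₂ := by
    have hv1b : R₁ v₁ b := (reach_delete_or hconn h₁ b).resolve_left hb1
    have hrb : R₁ r b := hv1r.symm.trans hv1b
    obtain ⟨wb⟩ := hrb
    by_cases hmem : s(u₂,v₂) ∈ wb.edges
    · exact ⟨wb.takeUntil u₂ (SimpleGraph.Walk.fst_mem_support_of_mem_edges wb hmem)⟩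
    · exfalso
      have : R₂ r b := transfer_delete wb hmem
      exact hr₂ (hbz.trans this.symm)
  -- step C : R₂ r u₁
  have hru1 : R₂ r u₁ := by
    have hv2a : R₂ v₂ a := (reach_delete_or hconn h₂ a).resolve_left ha2
    have hra : R₂ r a := hv2r.symm.trans hv2a
    obtain ⟨wa⟩ := hra
    by_cases hmem : s(u₁,v₁) ∈ wa.edges
    · exact ⟨wa.takeUntil u₁ (SimpleGraph.Walk.fst_mem_support_of_mem_edges wa hmem)⟩
    · exfalso
      have : R₁ r a := transfer_delete wa hmem
      exact hr₁ (haz.trans this.symm)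
  -- step D : contradiction via z
  obtain ⟨ws⟩ := hz1
  by_cases hmem : s(u₂,v₂) ∈ ws.edges
  · have : R₁ u₁ u₂ := ⟨ws.takeUntil u₂ (SimpleGraph.Walk.fst_mem_support_of_mem_edges ws hmem)⟩
    exact hr₁ (this.trans hru2.symm)
  · have : R₂ u₁ z := transfer_delete ws hmem
    exact hr₂ (hz2.trans (hru1.trans this).symm)
end Laminar
section Rotation
open SimpleGraph
variable {α : Type*}

lemma rot_noncrossing {pos : α → ℕ} {L : Set α} {E : Set (Sym2 α)} {t M : ℕ}
    (hM : ∀ x ∈ L, pos x < M) (hinj : Set.InjOn pos L)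
    (hEnd : ∀ e ∈ E, ∀ x ∈ e, x ∈ L) (hnc : Noncrossing pos E) :
    Noncrossing (rotPos pos t M) E := by
  intro a b c d h1 h2 hab hac had hbc hbd hcd halt
  have ha : a ∈ L := hEnd _ h1 a (by simp)
  have hb : b ∈ L := hEnd _ h1 b (by simp)
  have hc : c ∈ L := hEnd _ h2 c (by simp)
  have hd : d ∈ L := hEnd _ h2 d (by simp)
  have pab : pos a ≠ pos b := fun h => hab (hinj ha hb h)
  have pac : pos a ≠ pos c := fun h => hac (hinj ha hc h)
  have pad : pos a ≠ pos d := fun h => had (hinj ha hd h)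
  have pbc : pos b ≠ pos c := fun h => hbc (hinj hb hc h)
  have pbd : pos b ≠ pos d := fun h => hbd (hinj hb hd h)
  have pcd : pos c ≠ pos d := fun h => hcd (hinj hc hd h)
  rw [rot_alternates (hM a ha) (hM b hb) (hM c hc) (hM d hd) pab pac pad pbc pbd pcd] at halt
  exact hnc a b c d h1 h2 hab hac had hbc hbd hcd halt

lemma rot_representedBy {V : Type*} {T : SimpleGraph V} {pos : V → ℕ} {t M : ℕ}
    (hM : ∀ x ∈ leafSet T, pos x < M) (hrep : RepresentedBy T pos) :
    RepresentedBy T (rotPos pos t M) := by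
  intro u v huv
  exact rot_icio hM (fun l hl => hl.1) (hrep u v huv)

lemma exists_rotation_intervals {V : Type*} [Fintype V] {T : SimpleGraph V} (hT : T.IsTree)
    (r : V) {E₁ E₂ : Set (Sym2 V)} (pos : V → ℕ)
    (hE₁ : ∀ e ∈ E₁, ∀ v ∈ e, v ∈ leafSet T) (hE₂ : ∀ e ∈ E₂, ∀ v ∈ e, v ∈ leafSet T)
    (hinj : Set.InjOn pos (leafSet T)) (hrep : RepresentedBy T pos)
    (hnc₁ : Noncrossing pos E₁) (hnc₂ : Noncrossing pos E₂) :
    ∃ pos₀ : V → ℕ, Set.InjOn pos₀ (leafSet T) ∧ RepresentedBy T pos₀ ∧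
      Noncrossing pos₀ E₁ ∧ Noncrossing pos₀ E₂ ∧
      ∀ u v, T.Adj u v → ¬ (T.deleteEdges {s(u,v)}).Reachable u r →
        IsIntervalOn pos₀ (leafSet T) {l | l ∈ leafSet T ∧ (T.deleteEdges {s(u,v)}).Reachable u l} := by
  classical
  set L := leafSet T with hL
  have hMdef : ∀ x ∈ L, pos x < (Finset.univ.sup pos) + 1 := by
    intro x _
    exact Nat.lt_succ_of_le (Finset.le_sup (Finset.mem_univ x))
  set M := (Finset.univ.sup pos) + 1 with hMeq
  -- trivial-interval helper
  have htriv : ∀ (pos' : V → ℕ) (S : Set V), S = ∅ ∨ S = L → IsIntervalOn pos' L S := by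
    rintro pos' S (rfl | rfl)
    · intro a _ _ ha _ _ _ _; exact absurd ha (Set.notMem_empty a)
    · intro a b c _ hb _ _ _; exact hb
  set F : Set (Set V) :=
    {S | ∃ u v, T.Adj u v ∧ ¬ (T.deleteEdges {s(u,v)}).Reachable u r ∧
      S = {l | l ∈ L ∧ (T.deleteEdges {s(u,v)}).Reachable u l} ∧ S.Nonempty ∧ S ≠ L} with hF
  by_cases hFne : F.Nonempty
  swap
  · refine ⟨pos, hinj, hrep, hnc₁, hnc₂, ?_⟩
    intro u v huv hnr
    set S := {l | l ∈ L ∧ (T.deleteEdges {s(u,v)}).Reachable u l} with hS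
    by_cases h0 : S = ∅
    · exact htriv pos S (Or.inl h0)
    by_cases h1 : S = L
    · exact htriv pos S (Or.inr h1)
    exact absurd ⟨S, u, v, huv, hnr, rfl, Set.nonempty_iff_ne_empty.mpr h0, h1⟩ hFne
  obtain ⟨B, hBF, hBmax⟩ := Set.Finite.exists_maximalFor id F (Set.toFinite F) hFne
  simp only [id] at hBmax
  obtain ⟨us, vs, hadjs, hnrs, hBeq, hBne, hBneL⟩ := hBF
  have hBsubL : B ⊆ L := by rw [hBeq]; exact fun l hl => hl.1
  have circB : IsCircularIntervalOn pos L B := by rw [hBeq, hL]; exact hrep us vs hadjs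
  -- produce t, and elements m₀ ∈ B (new min) and m₁ ∉ B (new max)
  have key : ∃ t m₀ m₁, m₀ ∈ B ∧ m₁ ∈ L ∧ m₁ ∉ B ∧
      (∀ y ∈ L, rotPos pos t M m₀ ≤ rotPos pos t M y) ∧
      (∀ y ∈ L, rotPos pos t M y ≤ rotPos pos t M m₁) := by
    rcases circB with hBint | hCint
    · -- B is an interval for pos
      obtain ⟨xlo, hxloB, hxlomin⟩ := Set.exists_min_image B pos (Set.toFinite B) hBne
      set t := pos xlo with ht
      have hm0 : ∀ y ∈ L, rotPos pos t M xlo ≤ rotPos pos t M y := by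
        intro y hy
        have := hMdef y hy; have := hMdef xlo (hBsubL hxloB)
        unfold rotPos; split_ifs <;> omega
      by_cases hex : ∃ w ∈ L, pos w < t
      · obtain ⟨p, hp, hpmax⟩ := Set.exists_max_image {w ∈ L | pos w < t} pos
          (Set.toFinite _) hex
        have hpB : p ∉ B := by
          intro hpB
          have h1 := hxlomin p hpB
          have h2 := hp.2
          omega
        refine ⟨t, xlo, p, hxloB, hp.1, hpB, hm0, ?_⟩
        intro y hy
        have hyM := hMdef y hy
        have hpt := hp.2
        have hrp : rotPos pos t M p = pos p + M := by unfold rotPos; rw [if_pos hpt]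
        rcases lt_or_ge (pos y) t with g | g
        · have hry : rotPos pos t M y = pos y + M := by unfold rotPos; rw [if_pos g]
          rw [hry, hrp]; exact Nat.add_le_add_right (hpmax y ⟨hy, g⟩) M
        · have hry : rotPos pos t M y = pos y := by unfold rotPos; rw [if_neg (by omega)]
          rw [hry, hrp]; have := hMdef p hp.1; omega
      · push_neg at hex
        obtain ⟨p, hp, hpmax⟩ := Set.exists_max_image L pos (Set.toFinite L)
          ⟨xlo, hBsubL hxloB⟩
        obtain ⟨zz, hzzL, hzzB⟩ : ∃ zz ∈ L, zz ∉ B := by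
          by_contra hcc
          push_neg at hcc
          exact hBneL (Set.Subset.antisymm hBsubL hcc)
        have hpB : p ∉ B := fun hpB =>
          hzzB (hBint xlo zz p hxloB hzzL hpB (hex zz hzzL) (hpmax zz hzzL))
        refine ⟨t, xlo, p, hxloB, hp, hpB, hm0, ?_⟩
        intro y hy
        have h1 := hex y hy
        have h2 := hex p hp
        have hry : rotPos pos t M y = pos y := by unfold rotPos; rw [if_neg (by omega)]
        have hrp : rotPos pos t M p = pos p := by unfold rotPos; rw [if_neg (by omega)]
        rw [hry, hrp]; exact hpmax y hy
    · -- L \ B is an interval for pos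
      obtain ⟨zz, hzzL, hzzB⟩ : ∃ zz ∈ L, zz ∉ B := by
        by_contra hcc
        push_neg at hcc
        exact hBneL (Set.Subset.antisymm hBsubL hcc)
      obtain ⟨xhi, hxhiC, hxhimax⟩ := Set.exists_max_image (L \ B) pos
        (Set.toFinite _) ⟨zz, hzzL, hzzB⟩
      set t := pos xhi + 1 with ht
      have hm1 : ∀ y ∈ L, rotPos pos t M y ≤ rotPos pos t M xhi := by
        intro y hy
        have := hMdef y hy; have := hMdef xhi hxhiC.1
        unfold rotPos; split_ifs <;> omega
      by_cases hex : ∃ w ∈ L, t ≤ pos w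
      · obtain ⟨m, hm, hmmin⟩ := Set.exists_min_image {w ∈ L | t ≤ pos w} pos
          (Set.toFinite _) hex
        have hmB : m ∈ B := by
          by_contra hmB
          have := hxhimax m ⟨hm.1, hmB⟩
          have := hm.2
          omega
        refine ⟨t, m, xhi, hmB, hxhiC.1, hxhiC.2, ?_, hm1⟩
        intro y hy
        have hyM := hMdef y hy
        have hm2 := hm.2
        have hmm : rotPos pos t M m = pos m := by unfold rotPos; rw [if_neg (by omega)]
        rcases lt_or_ge (pos y) t with g | g
        · have hry : rotPos pos t M y = pos y + M := by unfold rotPos; rw [if_pos g]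
          have := hMdef m hm.1
          rw [hmm, hry]; omega
        · have hry : rotPos pos t M y = pos y := by unfold rotPos; rw [if_neg (by omega)]
          rw [hmm, hry]; exact hmmin y ⟨hy, g⟩
      · push_neg at hex
        obtain ⟨m, hm, hmmin⟩ := Set.exists_min_image L pos (Set.toFinite L) ⟨zz, hzzL⟩
        have hmB : m ∈ B := by
          by_contra hmB
          obtain ⟨bb, hbb⟩ := hBne
          have : bb ∈ L \ B := hCint m bb xhi ⟨hm, hmB⟩ (hBsubL hbb) hxhiC
            (hmmin bb (hBsubL hbb)) (by have := hex bb (hBsubL hbb); omega)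
          exact this.2 hbb
        refine ⟨t, m, xhi, hmB, hxhiC.1, hxhiC.2, ?_, hm1⟩
        intro y hy
        have h1 := hex y hy; have h2 := hex m hm
        have h3 := hmmin y hy
        unfold rotPos; split_ifs <;> omega
  obtain ⟨t, m₀, m₁, hm₀B, hm₁L, hm₁B, hmin₀, hmax₁⟩ := key
  set pos₀ := rotPos pos t M with hpos₀
  have hrep₀ : RepresentedBy T pos₀ := rot_representedBy hMdef hrep
  refine ⟨pos₀, rot_injOn hMdef hinj, hrep₀,
    rot_noncrossing hMdef hinj hE₁ hnc₁, rot_noncrossing hMdef hinj hE₂ hnc₂, ?_⟩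
  intro u v huv hnr
  set S := {l | l ∈ L ∧ (T.deleteEdges {s(u,v)}).Reachable u l} with hS
  have hSsubL : S ⊆ L := fun l hl => hl.1
  by_cases h0 : S = ∅
  · exact htriv pos₀ S (Or.inl h0)
  by_cases h1 : S = L
  · exact htriv pos₀ S (Or.inr h1)
  have hSF : S ∈ F := ⟨u, v, huv, hnr, rfl, Set.nonempty_iff_ne_empty.mpr h0, h1⟩
  have circS : IsCircularIntervalOn pos₀ L S := hrep₀ u v huv
  rcases laminar hT huv hadjs hnr hnrs with hc | hc | hc
  · -- S ⊆ B
    have hSB : S ⊆ B := by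
      intro l hl
      rw [hBeq]
      exact ⟨hl.1, hc l hl.2⟩
    exact interval_of_max_notin hSsubL hm₁L hmax₁ (fun h => hm₁B (hSB h)) circS
  · -- B ⊆ S
    have hBS : B ⊆ S := by
      intro l hl
      rw [hBeq] at hl
      exact ⟨hl.1, hc l hl.2⟩
    have : B = S := le_antisymm hBS (hBmax hSF hBS)
    exact interval_of_max_notin hSsubL hm₁L hmax₁ (fun h => hm₁B (this ▸ h)) circS
  · -- disjoint
    have hm₀S : m₀ ∉ S := by
      intro h
      rw [hBeq] at hm₀B
      exact hc m₀ h.2 hm₀B.2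
    exact interval_of_min_notin hSsubL (hBsubL hm₀B)
      (fun y hy => hmin₀ y hy) hm₀S circS
end Rotation
section TStarBasics
open SimpleGraph
variable {V : Type*} {T : SimpleGraph V} {r : V}

lemma tstar_adj_ll {u v : V} : (TStar T r).Adj (Sum.inl u) (Sum.inl v) ↔ T.Adj u v := by
  simp only [TStar, SimpleGraph.fromRel_adj, ne_eq, Sum.inl.injEq]
  constructor
  · rintro ⟨h1, h2 | h2⟩
    · exact h2
    · exact h2.symm
  · intro h; exact ⟨h.ne, Or.inl h⟩

lemma tstar_adj_rr {u v : V} :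
    (TStar T r).Adj (Sum.inr (Sum.inl u)) (Sum.inr (Sum.inl v)) ↔ T.Adj u v := by
  simp only [TStar, SimpleGraph.fromRel_adj, ne_eq, Sum.inr.injEq, Sum.inl.injEq]
  constructor
  · rintro ⟨h1, h2 | h2⟩
    · exact h2
    · exact h2.symm
  · intro h; exact ⟨h.ne, Or.inl h⟩

lemma tstar_adj_lr {u v : V} :
    ¬ (TStar T r).Adj (Sum.inl u) (Sum.inr (Sum.inl v)) := by
  simp only [TStar, SimpleGraph.fromRel_adj]
  rintro ⟨h1, h2 | h2⟩ <;> exact h2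

lemma tstar_adj_lstar {u : V} {x : Unit} :
    (TStar T r).Adj (Sum.inl u) (Sum.inr (Sum.inr x)) ↔ u = r := by
  simp only [TStar, SimpleGraph.fromRel_adj]
  constructor
  · rintro ⟨h1, h2 | h2⟩
    · exact h2
    · exact h2.elim
  · rintro rfl; exact ⟨by simp, Or.inl rfl⟩

lemma tstar_adj_rstar {u : V} {x : Unit} :
    (TStar T r).Adj (Sum.inr (Sum.inl u)) (Sum.inr (Sum.inr x)) ↔ u = r := by
  simp only [TStar, SimpleGraph.fromRel_adj]
  constructor
  · rintro ⟨h1, h2 | h2⟩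
    · exact h2
    · exact h2.elim
  · rintro rfl; exact ⟨by simp, Or.inl rfl⟩

lemma tstar_adj_starstar {x y : Unit} :
    ¬ (TStar T r).Adj (Sum.inr (Sum.inr x)) (Sum.inr (Sum.inr y)) := by
  simp only [TStar, SimpleGraph.fromRel_adj]
  rintro ⟨h1, h2 | h2⟩ <;> exact h1 rfl

lemma mem_leaf_inl (hr : r ∉ leafSet T)
    (hn2 : ∃ n₁ n₂, T.Adj r n₁ ∧ T.Adj r n₂ ∧ n₁ ≠ n₂) {v : V} :
    Sum.inl v ∈ leafSet (TStar T r) ↔ v ∈ leafSet T := by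
  constructor
  · rintro ⟨y, hy, huniq⟩
    by_cases hvr : v = r
    · exfalso
      obtain ⟨n₁, n₂, h1, h2, h12⟩ := hn2
      subst hvr
      have e1 := huniq (Sum.inl n₁) (tstar_adj_ll.mpr h1)
      have e2 := huniq (Sum.inl n₂) (tstar_adj_ll.mpr h2)
      rw [← e2] at e1
      exact h12 (Sum.inl.inj e1)
    · cases y with
      | inl w =>
        refine ⟨w, tstar_adj_ll.mp hy, ?_⟩
        intro w' hw'
        exact Sum.inl.inj (huniq (Sum.inl w') (tstar_adj_ll.mpr hw'))
      | inr y' =>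
        cases y' with
        | inl w => exact absurd hy tstar_adj_lr
        | inr x => exact absurd (tstar_adj_lstar.mp hy) hvr
  · rintro ⟨w, hw, huniq⟩
    have hvr : v ≠ r := fun h => hr (h ▸ ⟨w, hw, huniq⟩)
    refine ⟨Sum.inl w, tstar_adj_ll.mpr hw, ?_⟩
    intro y hy
    cases y with
    | inl w' => rw [huniq w' (tstar_adj_ll.mp hy)]
    | inr y' =>
      cases y' with
      | inl w' => exact absurd hy tstar_adj_lr
      | inr x => exact absurd (tstar_adj_lstar.mp hy) hvr

lemma mem_leaf_inr (hr : r ∉ leafSet T)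
    (hn2 : ∃ n₁ n₂, T.Adj r n₁ ∧ T.Adj r n₂ ∧ n₁ ≠ n₂) {v : V} :
    Sum.inr (Sum.inl v) ∈ leafSet (TStar T r) ↔ v ∈ leafSet T := by
  constructor
  · rintro ⟨y, hy, huniq⟩
    by_cases hvr : v = r
    · exfalso
      obtain ⟨n₁, n₂, h1, h2, h12⟩ := hn2
      subst hvr
      have e1 := huniq (Sum.inr (Sum.inl n₁)) (tstar_adj_rr.mpr h1)
      have e2 := huniq (Sum.inr (Sum.inl n₂)) (tstar_adj_rr.mpr h2)
      rw [← e2] at e1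
      exact h12 (Sum.inl.inj (Sum.inr.inj e1))
    · cases y with
      | inl w => exact absurd hy.symm tstar_adj_lr
      | inr y' =>
        cases y' with
        | inl w =>
          refine ⟨w, tstar_adj_rr.mp hy, ?_⟩
          intro w' hw'
          exact Sum.inl.inj (Sum.inr.inj (huniq (Sum.inr (Sum.inl w')) (tstar_adj_rr.mpr hw')))
        | inr x => exact absurd (tstar_adj_rstar.mp hy) hvr
  · rintro ⟨w, hw, huniq⟩
    have hvr : v ≠ r := fun h => hr (h ▸ ⟨w, hw, huniq⟩)
    refine ⟨Sum.inr (Sum.inl w), tstar_adj_rr.mpr hw, ?_⟩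
    intro y hy
    cases y with
    | inl w' => exact absurd hy.symm tstar_adj_lr
    | inr y' =>
      cases y' with
      | inl w' => rw [huniq w' (tstar_adj_rr.mp hy)]
      | inr x => exact absurd (tstar_adj_rstar.mp hy) hvr

lemma rstar_not_leaf {x : Unit} : Sum.inr (Sum.inr x) ∉ leafSet (TStar T r) := by
  rintro ⟨y, hy, huniq⟩
  have h1 : (TStar T r).Adj (Sum.inr (Sum.inr x)) (Sum.inl r) :=
    (SimpleGraph.adj_symm _ (tstar_adj_lstar.mpr rfl))
  have h2 : (TStar T r).Adj (Sum.inr (Sum.inr x)) (Sum.inr (Sum.inl r)) :=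
    (SimpleGraph.adj_symm _ (tstar_adj_rstar.mpr rfl))
  have e1 := huniq (Sum.inl r) h1
  have e2 := huniq (Sum.inr (Sum.inl r)) h2
  rw [← e2] at e1
  simp at e1

end TStarBasics
section TStarReach
open SimpleGraph
variable {V : Type*} {T : SimpleGraph V} {r : V}

private lemma sym2_inl_ne_iff {a b u v : V} :
    s((Sum.inl a : V ⊕ V ⊕ Unit), Sum.inl b) = s(Sum.inl u, Sum.inl v) ↔ s(a,b) = s(u,v) := by
  rw [Sym2.eq_iff, Sym2.eq_iff]
  simp [Sum.inl.injEq]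

/-- hom from `T - e` into `TStar - e'` via the first copy. -/
private def homCopy1 (u v : V) :
    (T.deleteEdges {s(u,v)}) →g ((TStar T r).deleteEdges {s(Sum.inl u, Sum.inl v)}) where
  toFun := Sum.inl
  map_rel' := by
    intro a b hab
    rw [SimpleGraph.deleteEdges_adj] at hab ⊢
    refine ⟨tstar_adj_ll.mpr hab.1, ?_⟩
    simp only [Set.mem_singleton_iff, sym2_inl_ne_iff]
    simpa using hab.2

/-- hom from `T` into `TStar - e'` (for `e'` in the first copy) via the second copy. -/
private def homCopy2' (u v : V) :
    T →g ((TStar T r).deleteEdges {s(Sum.inl u, Sum.inl v)}) where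
  toFun := fun z => Sum.inr (Sum.inl z)
  map_rel' := by
    intro a b hab
    rw [SimpleGraph.deleteEdges_adj]
    refine ⟨tstar_adj_rr.mpr hab, ?_⟩
    simp [Sym2.eq_iff]

lemma reach_tstar_copy1 (hconn : T.Connected) {u v : V} (x : V ⊕ V ⊕ Unit) :
    ((TStar T r).deleteEdges {s(Sum.inl u, Sum.inl v)}).Reachable (Sum.inl u) x ↔
      Sum.elim (fun z => (T.deleteEdges {s(u,v)}).Reachable u z)
        (fun _ => (T.deleteEdges {s(u,v)}).Reachable u r) x := by
  constructor
  · intro hx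
    refine walk_closure (G := (TStar T r).deleteEdges {s(Sum.inl u, Sum.inl v)})
      (fun x => Sum.elim (fun z => (T.deleteEdges {s(u,v)}).Reachable u z)
        (fun _ => (T.deleteEdges {s(u,v)}).Reachable u r) x) ?_ hx (Reachable.refl u)
    intro a b ha hab
    rw [SimpleGraph.deleteEdges_adj] at hab
    obtain ⟨hTS, hne⟩ := hab
    simp only [Set.mem_singleton_iff] at hne
    match a, b with
    | Sum.inl a, Sum.inl b =>
      simp only [Sum.elim_inl] at ha ⊢
      refine ha.trans (SimpleGraph.Adj.reachable ?_)
      rw [SimpleGraph.deleteEdges_adj]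
      refine ⟨tstar_adj_ll.mp hTS, ?_⟩
      simp only [Set.mem_singleton_iff]
      intro h
      exact hne (sym2_inl_ne_iff.mpr h)
    | Sum.inl a, Sum.inr (Sum.inl b) => exact absurd hTS tstar_adj_lr
    | Sum.inl a, Sum.inr (Sum.inr t) =>
      have := tstar_adj_lstar.mp hTS
      subst this
      simpa using ha
    | Sum.inr (Sum.inl a), Sum.inl b => exact absurd hTS.symm tstar_adj_lr
    | Sum.inr (Sum.inl a), Sum.inr (Sum.inl b) => simpa using ha
    | Sum.inr (Sum.inl a), Sum.inr (Sum.inr t) => simpa using ha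
    | Sum.inr (Sum.inr t), Sum.inl b =>
      have := tstar_adj_lstar.mp hTS.symm
      subst this
      simpa using ha
    | Sum.inr (Sum.inr t), Sum.inr (Sum.inl b) => simpa using ha
    | Sum.inr (Sum.inr t), Sum.inr (Sum.inr s) => simpa using ha
  · intro hx
    have hstar : (T.deleteEdges {s(u,v)}).Reachable u r →
        ((TStar T r).deleteEdges {s(Sum.inl u, Sum.inl v)}).Reachable (Sum.inl u)
          (Sum.inr (Sum.inr ())) := by
      intro hur
      have h1 := SimpleGraph.Reachable.map (homCopy1 (T := T) (r := r) u v) hur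
      refine h1.trans (SimpleGraph.Adj.reachable ?_)
      rw [SimpleGraph.deleteEdges_adj]
      exact ⟨tstar_adj_lstar.mpr rfl, by simp [Sym2.eq_iff]⟩
    match x with
    | Sum.inl z =>
      simp only [Sum.elim_inl] at hx
      exact SimpleGraph.Reachable.map (homCopy1 (T := T) (r := r) u v) hx
    | Sum.inr (Sum.inl z) =>
      simp only [Sum.elim_inr] at hx
      refine (hstar hx).trans ?_
      refine (SimpleGraph.Adj.reachable ?_).trans
        (SimpleGraph.Reachable.map (homCopy2' (T := T) (r := r) u v) (hconn r z))
      rw [SimpleGraph.deleteEdges_adj]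
      exact ⟨(tstar_adj_rstar.mpr rfl).symm, by simp [Sym2.eq_iff]⟩
    | Sum.inr (Sum.inr t) =>
      simp only [Sum.elim_inr] at hx
      cases t
      exact hstar hx
end TStarReach
section TStarReach2
open SimpleGraph
variable {V : Type*} {T : SimpleGraph V} {r : V}

private lemma sym2_inr_ne_iff {a b u v : V} :
    s((Sum.inr (Sum.inl a) : V ⊕ V ⊕ Unit), Sum.inr (Sum.inl b))
      = s(Sum.inr (Sum.inl u), Sum.inr (Sum.inl v)) ↔ s(a,b) = s(u,v) := by
  rw [Sym2.eq_iff, Sym2.eq_iff]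
  simp [Sum.inr.injEq, Sum.inl.injEq]

private def homCopy2 (u v : V) :
    (T.deleteEdges {s(u,v)}) →g
      ((TStar T r).deleteEdges {s(Sum.inr (Sum.inl u), Sum.inr (Sum.inl v))}) where
  toFun := fun z => Sum.inr (Sum.inl z)
  map_rel' := by
    intro a b hab
    rw [SimpleGraph.deleteEdges_adj] at hab ⊢
    refine ⟨tstar_adj_rr.mpr hab.1, ?_⟩
    simp only [Set.mem_singleton_iff, sym2_inr_ne_iff]
    simpa using hab.2

private def homCopy1' (u v : V) :
    T →g ((TStar T r).deleteEdges {s(Sum.inr (Sum.inl u), Sum.inr (Sum.inl v))}) where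
  toFun := Sum.inl
  map_rel' := by
    intro a b hab
    rw [SimpleGraph.deleteEdges_adj]
    refine ⟨tstar_adj_ll.mpr hab, ?_⟩
    simp [Sym2.eq_iff]

lemma reach_tstar_copy2 (hconn : T.Connected) {u v : V} (x : V ⊕ V ⊕ Unit) :
    ((TStar T r).deleteEdges {s(Sum.inr (Sum.inl u), Sum.inr (Sum.inl v))}).Reachable
        (Sum.inr (Sum.inl u)) x ↔
      Sum.elim (fun _ => (T.deleteEdges {s(u,v)}).Reachable u r)
        (Sum.elim (fun z => (T.deleteEdges {s(u,v)}).Reachable u z)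
          (fun _ => (T.deleteEdges {s(u,v)}).Reachable u r)) x := by
  constructor
  · intro hx
    refine walk_closure (G := (TStar T r).deleteEdges {s(Sum.inr (Sum.inl u), Sum.inr (Sum.inl v))})
      (fun x => Sum.elim (fun _ => (T.deleteEdges {s(u,v)}).Reachable u r)
        (Sum.elim (fun z => (T.deleteEdges {s(u,v)}).Reachable u z)
          (fun _ => (T.deleteEdges {s(u,v)}).Reachable u r)) x) ?_ hx (Reachable.refl u)
    intro a b ha hab
    rw [SimpleGraph.deleteEdges_adj] at hab
    obtain ⟨hTS, hne⟩ := hab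
    simp only [Set.mem_singleton_iff] at hne
    match a, b with
    | Sum.inr (Sum.inl a), Sum.inr (Sum.inl b) =>
      simp only [Sum.elim_inr] at ha ⊢
      refine ha.trans (SimpleGraph.Adj.reachable ?_)
      rw [SimpleGraph.deleteEdges_adj]
      refine ⟨tstar_adj_rr.mp hTS, ?_⟩
      simp only [Set.mem_singleton_iff]
      intro h
      exact hne (sym2_inr_ne_iff.mpr h)
    | Sum.inr (Sum.inl a), Sum.inl b => exact absurd hTS.symm tstar_adj_lr
    | Sum.inr (Sum.inl a), Sum.inr (Sum.inr t) =>
      have := tstar_adj_rstar.mp hTS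
      subst this
      simpa using ha
    | Sum.inl a, Sum.inr (Sum.inl b) => exact absurd hTS tstar_adj_lr
    | Sum.inl a, Sum.inl b => simpa using ha
    | Sum.inl a, Sum.inr (Sum.inr t) => simpa using ha
    | Sum.inr (Sum.inr t), Sum.inr (Sum.inl b) =>
      have := tstar_adj_rstar.mp hTS.symm
      subst this
      simpa using ha
    | Sum.inr (Sum.inr t), Sum.inl b => simpa using ha
    | Sum.inr (Sum.inr t), Sum.inr (Sum.inr s) => simpa using ha
  · intro hx
    have hstar : (T.deleteEdges {s(u,v)}).Reachable u r →
        ((TStar T r).deleteEdges {s(Sum.inr (Sum.inl u), Sum.inr (Sum.inl v))}).Reachable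
          (Sum.inr (Sum.inl u)) (Sum.inr (Sum.inr ())) := by
      intro hur
      have h1 := SimpleGraph.Reachable.map (homCopy2 (T := T) (r := r) u v) hur
      refine h1.trans (SimpleGraph.Adj.reachable ?_)
      rw [SimpleGraph.deleteEdges_adj]
      exact ⟨tstar_adj_rstar.mpr rfl, by simp [Sym2.eq_iff]⟩
    match x with
    | Sum.inr (Sum.inl z) =>
      simp only [Sum.elim_inr] at hx
      exact SimpleGraph.Reachable.map (homCopy2 (T := T) (r := r) u v) hx
    | Sum.inl z =>
      simp only [Sum.elim_inl] at hx
      refine (hstar hx).trans ?_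
      refine (SimpleGraph.Adj.reachable ?_).trans
        (SimpleGraph.Reachable.map (homCopy1' (T := T) (r := r) u v) (hconn r z))
      rw [SimpleGraph.deleteEdges_adj]
      exact ⟨(tstar_adj_lstar.mpr rfl).symm, by simp [Sym2.eq_iff]⟩
    | Sum.inr (Sum.inr t) =>
      simp only [Sum.elim_inr] at hx
      cases t
      exact hstar hx
end TStarReach2
section TStarReachStar
open SimpleGraph
variable {V : Type*} {T : SimpleGraph V} {r : V}

private def homL : T →g ((TStar T r).deleteEdges {s(Sum.inl r, Sum.inr (Sum.inr ()))}) where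
  toFun := Sum.inl
  map_rel' := by
    intro a b hab
    rw [SimpleGraph.deleteEdges_adj]
    exact ⟨tstar_adj_ll.mpr hab, by simp [Sym2.eq_iff]⟩

private def homR : T →g ((TStar T r).deleteEdges {s(Sum.inl r, Sum.inr (Sum.inr ()))}) where
  toFun := fun z => Sum.inr (Sum.inl z)
  map_rel' := by
    intro a b hab
    rw [SimpleGraph.deleteEdges_adj]
    exact ⟨tstar_adj_rr.mpr hab, by simp [Sym2.eq_iff]⟩

lemma reach_tstar_lstar (hconn : T.Connected) (x : V ⊕ V ⊕ Unit) :
    ((TStar T r).deleteEdges {s(Sum.inl r, Sum.inr (Sum.inr ()))}).Reachable (Sum.inl r) x ↔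
      Sum.elim (fun _ => True) (fun _ => False) x := by
  constructor
  · intro hx
    refine walk_closure (G := (TStar T r).deleteEdges {s(Sum.inl r, Sum.inr (Sum.inr ()))})
      (fun x => Sum.elim (fun _ => True) (fun _ => False) x) ?_ hx (by simp)
    intro a b ha hab
    rw [SimpleGraph.deleteEdges_adj] at hab
    obtain ⟨hTS, hne⟩ := hab
    simp only [Set.mem_singleton_iff] at hne
    match a, b with
    | Sum.inl a, Sum.inl b => simp
    | Sum.inl a, Sum.inr (Sum.inl b) => exact absurd hTS tstar_adj_lr
    | Sum.inl a, Sum.inr (Sum.inr t) =>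
      exfalso
      have := tstar_adj_lstar.mp hTS
      subst this
      cases t
      exact hne rfl
    | Sum.inr a, b => simp at ha
  · intro hx
    match x with
    | Sum.inl z => exact SimpleGraph.Reachable.map (homL (T := T) (r := r)) (hconn r z)
    | Sum.inr y => simp at hx

lemma reach_tstar_lstar' (hconn : T.Connected) (x : V ⊕ V ⊕ Unit) :
    ((TStar T r).deleteEdges {s(Sum.inl r, Sum.inr (Sum.inr ()))}).Reachable
        (Sum.inr (Sum.inr ())) x ↔
      Sum.elim (fun _ => False) (fun _ => True) x := by
  constructor
  · intro hx
    refine walk_closure (G := (TStar T r).deleteEdges {s(Sum.inl r, Sum.inr (Sum.inr ()))})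
      (fun x => Sum.elim (fun _ => False) (fun _ => True) x) ?_ hx (by simp)
    intro a b ha hab
    rw [SimpleGraph.deleteEdges_adj] at hab
    obtain ⟨hTS, hne⟩ := hab
    simp only [Set.mem_singleton_iff] at hne
    match a, b with
    | Sum.inl a, b => simp at ha
    | Sum.inr (Sum.inl a), Sum.inl b => exact absurd hTS.symm tstar_adj_lr
    | Sum.inr (Sum.inr t), Sum.inl b =>
      exfalso
      have := tstar_adj_lstar.mp hTS.symm
      subst this
      cases t
      exact hne (Sym2.eq_swap)
    | Sum.inr (Sum.inl a), Sum.inr y => simp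
    | Sum.inr (Sum.inr t), Sum.inr y => simp
  · intro hx
    match x with
    | Sum.inr (Sum.inr t) =>
      cases t
      exact Reachable.refl _
    | Sum.inr (Sum.inl z) =>
      refine (SimpleGraph.Adj.reachable ?_).trans
        (SimpleGraph.Reachable.map (homR (T := T) (r := r)) (hconn r z))
      rw [SimpleGraph.deleteEdges_adj]
      refine ⟨(tstar_adj_rstar.mpr rfl).symm, by simp [Sym2.eq_iff, homR]⟩
    | Sum.inl z => simp at hx

private def homL2 : T →g ((TStar T r).deleteEdges {s(Sum.inr (Sum.inl r), Sum.inr (Sum.inr ()))}) where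
  toFun := Sum.inl
  map_rel' := by
    intro a b hab
    rw [SimpleGraph.deleteEdges_adj]
    exact ⟨tstar_adj_ll.mpr hab, by simp [Sym2.eq_iff]⟩

private def homR2 : T →g ((TStar T r).deleteEdges {s(Sum.inr (Sum.inl r), Sum.inr (Sum.inr ()))}) where
  toFun := fun z => Sum.inr (Sum.inl z)
  map_rel' := by
    intro a b hab
    rw [SimpleGraph.deleteEdges_adj]
    exact ⟨tstar_adj_rr.mpr hab, by simp [Sym2.eq_iff]⟩

lemma reach_tstar_rstar (hconn : T.Connected) (x : V ⊕ V ⊕ Unit) :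
    ((TStar T r).deleteEdges {s(Sum.inr (Sum.inl r), Sum.inr (Sum.inr ()))}).Reachable
        (Sum.inr (Sum.inl r)) x ↔
      Sum.elim (fun _ => False) (Sum.elim (fun _ => True) (fun _ => False)) x := by
  constructor
  · intro hx
    refine walk_closure (G := (TStar T r).deleteEdges {s(Sum.inr (Sum.inl r), Sum.inr (Sum.inr ()))})
      (fun x => Sum.elim (fun _ => False) (Sum.elim (fun _ => True) (fun _ => False)) x) ?_ hx (by simp)
    intro a b ha hab
    rw [SimpleGraph.deleteEdges_adj] at hab
    obtain ⟨hTS, hne⟩ := hab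
    simp only [Set.mem_singleton_iff] at hne
    match a, b with
    | Sum.inl a, b => simp at ha
    | Sum.inr (Sum.inr t), b => simp at ha
    | Sum.inr (Sum.inl a), Sum.inl b => exact absurd hTS.symm tstar_adj_lr
    | Sum.inr (Sum.inl a), Sum.inr (Sum.inl b) => simp
    | Sum.inr (Sum.inl a), Sum.inr (Sum.inr t) =>
      exfalso
      have := tstar_adj_rstar.mp hTS
      subst this
      cases t
      exact hne rfl
  · intro hx
    match x with
    | Sum.inr (Sum.inl z) => exact SimpleGraph.Reachable.map (homR2 (T := T) (r := r)) (hconn r z)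
    | Sum.inl z => simp at hx
    | Sum.inr (Sum.inr t) => simp at hx

lemma reach_tstar_rstar' (hconn : T.Connected) (x : V ⊕ V ⊕ Unit) :
    ((TStar T r).deleteEdges {s(Sum.inr (Sum.inl r), Sum.inr (Sum.inr ()))}).Reachable
        (Sum.inr (Sum.inr ())) x ↔
      Sum.elim (fun _ => True) (Sum.elim (fun _ => False) (fun _ => True)) x := by
  constructor
  · intro hx
    refine walk_closure (G := (TStar T r).deleteEdges {s(Sum.inr (Sum.inl r), Sum.inr (Sum.inr ()))})
      (fun x => Sum.elim (fun _ => True) (Sum.elim (fun _ => False) (fun _ => True)) x) ?_ hx (by simp)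
    intro a b ha hab
    rw [SimpleGraph.deleteEdges_adj] at hab
    obtain ⟨hTS, hne⟩ := hab
    simp only [Set.mem_singleton_iff] at hne
    match a, b with
    | Sum.inl a, Sum.inl b => simp
    | Sum.inl a, Sum.inr (Sum.inl b) => exact absurd hTS tstar_adj_lr
    | Sum.inl a, Sum.inr (Sum.inr t) => simp
    | Sum.inr (Sum.inl a), b => simp at ha
    | Sum.inr (Sum.inr t), Sum.inl b => simp
    | Sum.inr (Sum.inr t), Sum.inr (Sum.inl b) =>
      exfalso
      have := tstar_adj_rstar.mp hTS.symm
      subst this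
      cases t
      exact hne (Sym2.eq_swap)
    | Sum.inr (Sum.inr t), Sum.inr (Sum.inr s) => simp
  · intro hx
    match x with
    | Sum.inr (Sum.inr t) =>
      cases t
      exact Reachable.refl _
    | Sum.inl z =>
      refine (SimpleGraph.Adj.reachable ?_).trans
        (SimpleGraph.Reachable.map (homL2 (T := T) (r := r)) (hconn r z))
      rw [SimpleGraph.deleteEdges_adj]
      refine ⟨(tstar_adj_lstar.mpr rfl).symm, by simp [Sym2.eq_iff, homL2]⟩
    | Sum.inr (Sum.inl z) => simp at hx
end TStarReachStar
section RotInitial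
variable {α : Type*}

lemma rot_initial [Fintype α] (pos : α → ℕ) (L S : Set α) (hS : S ⊆ L)
    (hcirc : IsCircularIntervalOn pos L S) (hSne : S.Nonempty) (hCne : (L \ S).Nonempty) :
    ∃ t M s, (∀ x ∈ L, pos x < M) ∧ ∀ l ∈ L, (l ∈ S ↔ rotPos pos t M l < s) := by
  classical
  have hMdef : ∀ x ∈ L, pos x < (Finset.univ.sup pos) + 1 := by
    intro x _
    exact Nat.lt_succ_of_le (Finset.le_sup (Finset.mem_univ x))
  set M := (Finset.univ.sup pos) + 1 with hMeq
  rcases hcirc with hSint | hCint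
  · obtain ⟨xlo, hxlo, hxlomin⟩ := Set.exists_min_image S pos (Set.toFinite S) hSne
    obtain ⟨xhi, hxhi, hxhimax⟩ := Set.exists_max_image S pos (Set.toFinite S) hSne
    refine ⟨pos xlo, M, pos xhi + 1, hMdef, ?_⟩
    intro l hl
    constructor
    · intro hlS
      have h1 := hxlomin l hlS
      have h2 := hxhimax l hlS
      unfold rotPos
      rw [if_neg (by omega)]
      omega
    · intro hrot
      by_contra hlS
      unfold rotPos at hrot
      have hM1 := hMdef xhi (hS hxhi)
      split_ifs at hrot with hsplit
      · omega
      · exact hlS (hSint xlo l xhi hxlo hl hxhi (by omega) (by omega))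
  · obtain ⟨xlo, hxlo, hxlomin⟩ := Set.exists_min_image (L \ S) pos (Set.toFinite _) hCne
    obtain ⟨xhi, hxhi, hxhimax⟩ := Set.exists_max_image (L \ S) pos (Set.toFinite _) hCne
    refine ⟨pos xhi + 1, M, M + pos xlo, hMdef, ?_⟩
    intro l hl
    constructor
    · intro hlS
      unfold rotPos
      split_ifs with hsplit
      · have : pos l < pos xlo := by
          by_contra hcon
          push_neg at hcon
          exact (hCint xlo l xhi hxlo hl hxhi hcon (by omega)).2 hlS
        omega
      · have := hMdef l hl
        omega
    · intro hrot
      by_contra hlS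
      have h1 := hxlomin l ⟨hl, hlS⟩
      have h2 := hxhimax l ⟨hl, hlS⟩
      unfold rotPos at hrot
      rw [if_pos (by omega)] at hrot
      omega
end RotInitial
section ForwardMain
open SimpleGraph

lemma forward_main {V : Type*} [Fintype V] {T : SimpleGraph V} (hT : T.IsTree)
    {r : V} (hr : r ∉ leafSet T)
    (hn2 : ∃ n₁ n₂, T.Adj r n₁ ∧ T.Adj r n₂ ∧ n₁ ≠ n₂)
    {E₁ E₂ : Set (Sym2 V)}
    (hE₁ : ∀ e ∈ E₁, ∀ v ∈ e, v ∈ leafSet T)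
    (hE₂ : ∀ e ∈ E₂, ∀ v ∈ e, v ∈ leafSet T)
    (pos : V → ℕ) (hinj : Set.InjOn pos (leafSet T)) (hrep : RepresentedBy T pos)
    (hnc₁ : Noncrossing pos E₁) (hnc₂ : Noncrossing pos E₂) :
    ∃ ps : V ⊕ V ⊕ Unit → ℕ, Set.InjOn ps (leafSet (TStar T r)) ∧
      RepresentedBy (TStar T r) ps ∧
      Noncrossing ps (Sym2.map Sum.inl '' E₁ ∪
        Sym2.map (fun v : V => Sum.inr (Sum.inl v)) '' E₂) ∧
      Noncrossing ps {p | ∃ v ∈ leafSet T, p = s(Sum.inl v, Sum.inr (Sum.inl v))} := by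
  classical
  have hconn := hT.1
  obtain ⟨pos₀, hinj₀, hrep₀, hnc₁₀, hnc₂₀, hInt⟩ :=
    exists_rotation_intervals hT r pos hE₁ hE₂ hinj hrep hnc₁ hnc₂
  set K := (Finset.univ.sup pos₀) + 1 with hK
  have hKb : ∀ x : V, pos₀ x < K := fun x => Nat.lt_succ_of_le (Finset.le_sup (Finset.mem_univ x))
  set ps : V ⊕ V ⊕ Unit → ℕ :=
    Sum.elim pos₀ (Sum.elim (fun z => 2 * K - pos₀ z) (fun _ => 0)) with hps
  have hps_l : ∀ z, ps (Sum.inl z) = pos₀ z := fun z => rfl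
  have hps_r : ∀ z, ps (Sum.inr (Sum.inl z)) = 2 * K - pos₀ z := fun z => rfl
  have hmemL : ∀ l ∈ leafSet (TStar T r),
      (∃ z ∈ leafSet T, l = Sum.inl z) ∨ ∃ z ∈ leafSet T, l = Sum.inr (Sum.inl z) := by
    intro l hl
    match l with
    | Sum.inl z => exact Or.inl ⟨z, (mem_leaf_inl hr hn2).mp hl, rfl⟩
    | Sum.inr (Sum.inl z) => exact Or.inr ⟨z, (mem_leaf_inr hr hn2).mp hl, rfl⟩
    | Sum.inr (Sum.inr t) => exact absurd hl (by cases t; exact rstar_not_leaf)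
  -- interval transfer helpers
  have hIntL : ∀ B : Set V, IsIntervalOn pos₀ (leafSet T) B →
      IsIntervalOn ps (leafSet (TStar T r)) {l | ∃ z ∈ B, l = Sum.inl z} := by
    intro B hB a b c ha hb hc h1 h2
    obtain ⟨a₀, ha₀, rfl⟩ := ha
    obtain ⟨c₀, hc₀, rfl⟩ := hc
    rcases hmemL b hb with ⟨b₀, hb₀, rfl⟩ | ⟨b₀, hb₀, rfl⟩
    · exact ⟨b₀, hB a₀ b₀ c₀ ha₀ hb₀ hc₀ h1 h2, rfl⟩
    · exfalso
      have g2 : 2 * K - pos₀ b₀ ≤ pos₀ c₀ := h2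
      have := hKb b₀; have := hKb c₀
      omega
  have hIntR : ∀ B : Set V, IsIntervalOn pos₀ (leafSet T) B →
      IsIntervalOn ps (leafSet (TStar T r)) {l | ∃ z ∈ B, l = Sum.inr (Sum.inl z)} := by
    intro B hB a b c ha hb hc h1 h2
    obtain ⟨a₀, ha₀, rfl⟩ := ha
    obtain ⟨c₀, hc₀, rfl⟩ := hc
    rcases hmemL b hb with ⟨b₀, hb₀, rfl⟩ | ⟨b₀, hb₀, rfl⟩
    · exfalso
      have g1 : 2 * K - pos₀ a₀ ≤ pos₀ b₀ := h1
      have := hKb a₀; have := hKb b₀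
      omega
    · have g1 : 2 * K - pos₀ a₀ ≤ 2 * K - pos₀ b₀ := h1
      have g2 : 2 * K - pos₀ b₀ ≤ 2 * K - pos₀ c₀ := h2
      have := hKb a₀; have := hKb b₀; have := hKb c₀
      exact ⟨b₀, hB c₀ b₀ a₀ hc₀ hb₀ ha₀ (by omega) (by omega), rfl⟩
  have hTrivInt : IsIntervalOn pos₀ (leafSet T) (leafSet T) := fun a b c _ hb _ _ _ => hb
  -- injectivity
  have hinjStar : Set.InjOn ps (leafSet (TStar T r)) := by
    intro x hx y hy hxy
    rcases hmemL x hx with ⟨zx, hzx, rfl⟩ | ⟨zx, hzx, rfl⟩ <;>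
      rcases hmemL y hy with ⟨zy, hzy, rfl⟩ | ⟨zy, hzy, rfl⟩
    · rw [hinj₀ hzx hzy hxy]
    · exfalso
      have g : pos₀ zx = 2 * K - pos₀ zy := hxy
      have := hKb zx; have := hKb zy; omega
    · exfalso
      have g : 2 * K - pos₀ zx = pos₀ zy := hxy
      have := hKb zx; have := hKb zy; omega
    · have g : 2 * K - pos₀ zx = 2 * K - pos₀ zy := hxy
      have := hKb zx; have := hKb zy
      rw [hinj₀ hzx hzy (by omega)]
  -- representation
  have hrepStar : RepresentedBy (TStar T r) ps := by
    intro x y hadj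
    match x, y, hadj with
    | Sum.inl u, Sum.inl v, hadj =>
      have huv : T.Adj u v := tstar_adj_ll.mp hadj
      have hnb : ¬ (T.deleteEdges {s(u,v)}).Reachable u v := reach_delete_not_both hT huv
      by_cases hur : (T.deleteEdges {s(u,v)}).Reachable u r
      · right
        have hnvr : ¬ (T.deleteEdges {s(u,v)}).Reachable v r := fun h => hnb (hur.trans h.symm)
        have hBv := hInt v u huv.symm (by
          rw [show (s(v,u) : Sym2 V) = s(u,v) from Sym2.eq_swap]
          exact hnvr)
        rw [show (s(v,u) : Sym2 V) = s(u,v) from Sym2.eq_swap] at hBv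
        have hseteq : leafSet (TStar T r) \
            {l | l ∈ leafSet (TStar T r) ∧
              ((TStar T r).deleteEdges {s(Sum.inl u, Sum.inl v)}).Reachable (Sum.inl u) l}
            = {l | ∃ z ∈ {l | l ∈ leafSet T ∧ (T.deleteEdges {s(u,v)}).Reachable v l},
                l = Sum.inl z} := by
          ext l
          constructor
          · rintro ⟨hl, hnS⟩
            rcases hmemL l hl with ⟨z, hz, rfl⟩ | ⟨z, hz, rfl⟩
            · refine ⟨z, ⟨hz, ?_⟩, rfl⟩
              have hnr : ¬ (T.deleteEdges {s(u,v)}).Reachable u z := by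
                intro h
                exact hnS ⟨hl, (reach_tstar_copy1 hconn _).mpr h⟩
              exact (reach_delete_or hconn huv z).resolve_left hnr
            · exfalso
              exact hnS ⟨hl, (reach_tstar_copy1 hconn _).mpr hur⟩
          · rintro ⟨z, ⟨hz, hvz⟩, rfl⟩
            refine ⟨(mem_leaf_inl hr hn2).mpr hz, ?_⟩
            rintro ⟨-, hreach⟩
            have huz : (T.deleteEdges {s(u,v)}).Reachable u z :=
              (reach_tstar_copy1 hconn _).mp hreach
            exact hnb (huz.trans hvz.symm)
        rw [hseteq]
        exact hIntL _ hBv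
      · left
        have hBu := hInt u v huv hur
        have hseteq : {l | l ∈ leafSet (TStar T r) ∧
              ((TStar T r).deleteEdges {s(Sum.inl u, Sum.inl v)}).Reachable (Sum.inl u) l}
            = {l | ∃ z ∈ {l | l ∈ leafSet T ∧ (T.deleteEdges {s(u,v)}).Reachable u l},
                l = Sum.inl z} := by
          ext l
          constructor
          · rintro ⟨hl, hreach⟩
            rcases hmemL l hl with ⟨z, hz, rfl⟩ | ⟨z, hz, rfl⟩
            · exact ⟨z, ⟨hz, (reach_tstar_copy1 hconn _).mp hreach⟩, rfl⟩
            · exact absurd ((reach_tstar_copy1 hconn _).mp hreach) hur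
          · rintro ⟨z, ⟨hz, hz2⟩, rfl⟩
            exact ⟨(mem_leaf_inl hr hn2).mpr hz, (reach_tstar_copy1 hconn _).mpr hz2⟩
        rw [hseteq]
        exact hIntL _ hBu
    | Sum.inr (Sum.inl u), Sum.inr (Sum.inl v), hadj =>
      have huv : T.Adj u v := tstar_adj_rr.mp hadj
      have hnb : ¬ (T.deleteEdges {s(u,v)}).Reachable u v := reach_delete_not_both hT huv
      by_cases hur : (T.deleteEdges {s(u,v)}).Reachable u r
      · right
        have hnvr : ¬ (T.deleteEdges {s(u,v)}).Reachable v r := fun h => hnb (hur.trans h.symm)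
        have hBv := hInt v u huv.symm (by
          rw [show (s(v,u) : Sym2 V) = s(u,v) from Sym2.eq_swap]
          exact hnvr)
        rw [show (s(v,u) : Sym2 V) = s(u,v) from Sym2.eq_swap] at hBv
        have hseteq : leafSet (TStar T r) \
            {l | l ∈ leafSet (TStar T r) ∧
              ((TStar T r).deleteEdges
                {s(Sum.inr (Sum.inl u), Sum.inr (Sum.inl v))}).Reachable (Sum.inr (Sum.inl u)) l}
            = {l | ∃ z ∈ {l | l ∈ leafSet T ∧ (T.deleteEdges {s(u,v)}).Reachable v l},
                l = Sum.inr (Sum.inl z)} := by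
          ext l
          constructor
          · rintro ⟨hl, hnS⟩
            rcases hmemL l hl with ⟨z, hz, rfl⟩ | ⟨z, hz, rfl⟩
            · exfalso
              exact hnS ⟨hl, (reach_tstar_copy2 hconn _).mpr hur⟩
            · refine ⟨z, ⟨hz, ?_⟩, rfl⟩
              have hnr : ¬ (T.deleteEdges {s(u,v)}).Reachable u z := by
                intro h
                exact hnS ⟨hl, (reach_tstar_copy2 hconn _).mpr h⟩
              exact (reach_delete_or hconn huv z).resolve_left hnr
          · rintro ⟨z, ⟨hz, hvz⟩, rfl⟩
            refine ⟨(mem_leaf_inr hr hn2).mpr hz, ?_⟩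
            rintro ⟨-, hreach⟩
            have huz : (T.deleteEdges {s(u,v)}).Reachable u z :=
              (reach_tstar_copy2 hconn _).mp hreach
            exact hnb (huz.trans hvz.symm)
        rw [hseteq]
        exact hIntR _ hBv
      · left
        have hBu := hInt u v huv hur
        have hseteq : {l | l ∈ leafSet (TStar T r) ∧
              ((TStar T r).deleteEdges
                {s(Sum.inr (Sum.inl u), Sum.inr (Sum.inl v))}).Reachable (Sum.inr (Sum.inl u)) l}
            = {l | ∃ z ∈ {l | l ∈ leafSet T ∧ (T.deleteEdges {s(u,v)}).Reachable u l},
                l = Sum.inr (Sum.inl z)} := by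
          ext l
          constructor
          · rintro ⟨hl, hreach⟩
            rcases hmemL l hl with ⟨z, hz, rfl⟩ | ⟨z, hz, rfl⟩
            · exact absurd ((reach_tstar_copy2 hconn _).mp hreach) hur
            · exact ⟨z, ⟨hz, (reach_tstar_copy2 hconn _).mp hreach⟩, rfl⟩
          · rintro ⟨z, ⟨hz, hz2⟩, rfl⟩
            exact ⟨(mem_leaf_inr hr hn2).mpr hz, (reach_tstar_copy2 hconn _).mpr hz2⟩
        rw [hseteq]
        exact hIntR _ hBu
    | Sum.inl u, Sum.inr (Sum.inl v), hadj => exact absurd hadj tstar_adj_lr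
    | Sum.inr (Sum.inl u), Sum.inl v, hadj => exact absurd hadj.symm tstar_adj_lr
    | Sum.inr (Sum.inr t), Sum.inr (Sum.inr t'), hadj =>
      cases t; cases t'
      exact absurd hadj tstar_adj_starstar
    | Sum.inl u, Sum.inr (Sum.inr t), hadj =>
      cases t
      have hu : u = r := tstar_adj_lstar.mp hadj
      rw [hu]
      left
      have hseteq : {l | l ∈ leafSet (TStar T r) ∧
            ((TStar T r).deleteEdges
              {s(Sum.inl r, Sum.inr (Sum.inr ()))}).Reachable (Sum.inl r) l}
          = {l | ∃ z ∈ leafSet T, l = Sum.inl z} := by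
        ext l
        constructor
        · rintro ⟨hl, hre⟩
          rcases hmemL l hl with ⟨z, hz, rfl⟩ | ⟨z, hz, rfl⟩
          · exact ⟨z, hz, rfl⟩
          · exact absurd ((reach_tstar_lstar hconn _).mp hre) (by simp)
        · rintro ⟨z, hz, rfl⟩
          exact ⟨(mem_leaf_inl hr hn2).mpr hz, (reach_tstar_lstar hconn _).mpr (by simp)⟩
      rw [hseteq]
      exact hIntL _ hTrivInt
    | Sum.inr (Sum.inr t), Sum.inl u, hadj =>
      cases t
      have hu : u = r := tstar_adj_lstar.mp hadj.symm
      rw [hu]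
      left
      have hsw : (s(Sum.inr (Sum.inr ()), Sum.inl r) : Sym2 (V ⊕ V ⊕ Unit))
          = s(Sum.inl r, Sum.inr (Sum.inr ())) := Sym2.eq_swap
      have hseteq : {l | l ∈ leafSet (TStar T r) ∧
            ((TStar T r).deleteEdges
              {s(Sum.inr (Sum.inr ()), Sum.inl r)}).Reachable (Sum.inr (Sum.inr ())) l}
          = {l | ∃ z ∈ leafSet T, l = Sum.inr (Sum.inl z)} := by
        ext l
        constructor
        · rintro ⟨hl, hre⟩
          rw [hsw] at hre
          rcases hmemL l hl with ⟨z, hz, rfl⟩ | ⟨z, hz, rfl⟩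
          · exact absurd ((reach_tstar_lstar' hconn _).mp hre) (by simp)
          · exact ⟨z, hz, rfl⟩
        · rintro ⟨z, hz, rfl⟩
          refine ⟨(mem_leaf_inr hr hn2).mpr hz, ?_⟩
          rw [hsw]
          exact (reach_tstar_lstar' hconn _).mpr (by simp)
      rw [hseteq]
      exact hIntR _ hTrivInt
    | Sum.inr (Sum.inl u), Sum.inr (Sum.inr t), hadj =>
      cases t
      have hu : u = r := tstar_adj_rstar.mp hadj
      rw [hu]
      left
      have hseteq : {l | l ∈ leafSet (TStar T r) ∧
            ((TStar T r).deleteEdges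
              {s(Sum.inr (Sum.inl r), Sum.inr (Sum.inr ()))}).Reachable (Sum.inr (Sum.inl r)) l}
          = {l | ∃ z ∈ leafSet T, l = Sum.inr (Sum.inl z)} := by
        ext l
        constructor
        · rintro ⟨hl, hre⟩
          rcases hmemL l hl with ⟨z, hz, rfl⟩ | ⟨z, hz, rfl⟩
          · exact absurd ((reach_tstar_rstar hconn _).mp hre) (by simp)
          · exact ⟨z, hz, rfl⟩
        · rintro ⟨z, hz, rfl⟩
          exact ⟨(mem_leaf_inr hr hn2).mpr hz, (reach_tstar_rstar hconn _).mpr (by simp)⟩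
      rw [hseteq]
      exact hIntR _ hTrivInt
    | Sum.inr (Sum.inr t), Sum.inr (Sum.inl u), hadj =>
      cases t
      have hu : u = r := tstar_adj_rstar.mp hadj.symm
      rw [hu]
      left
      have hsw : (s(Sum.inr (Sum.inr ()), Sum.inr (Sum.inl r)) : Sym2 (V ⊕ V ⊕ Unit))
          = s(Sum.inr (Sum.inl r), Sum.inr (Sum.inr ())) := Sym2.eq_swap
      have hseteq : {l | l ∈ leafSet (TStar T r) ∧
            ((TStar T r).deleteEdges
              {s(Sum.inr (Sum.inr ()), Sum.inr (Sum.inl r))}).Reachable (Sum.inr (Sum.inr ())) l}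
          = {l | ∃ z ∈ leafSet T, l = Sum.inl z} := by
        ext l
        constructor
        · rintro ⟨hl, hre⟩
          rw [hsw] at hre
          rcases hmemL l hl with ⟨z, hz, rfl⟩ | ⟨z, hz, rfl⟩
          · exact ⟨z, hz, rfl⟩
          · exact absurd ((reach_tstar_rstar' hconn _).mp hre) (by simp)
        · rintro ⟨z, hz, rfl⟩
          refine ⟨(mem_leaf_inl hr hn2).mpr hz, ?_⟩
          rw [hsw]
          exact (reach_tstar_rstar' hconn _).mpr (by simp)
      rw [hseteq]
      exact hIntL _ hTrivInt
  -- noncrossing of E*₁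
  have hdesc : ∀ {x y : V ⊕ V ⊕ Unit}, s(x,y) ∈ (Sym2.map Sum.inl '' E₁ ∪
        Sym2.map (fun v : V => Sum.inr (Sum.inl v)) '' E₂) →
      (∃ x₀ y₀, s(x₀,y₀) ∈ E₁ ∧ x = Sum.inl x₀ ∧ y = Sum.inl y₀) ∨
      (∃ x₀ y₀, s(x₀,y₀) ∈ E₂ ∧ x = Sum.inr (Sum.inl x₀) ∧ y = Sum.inr (Sum.inl y₀)) := by
    rintro x y (⟨e, he, heq⟩ | ⟨e, he, heq⟩) <;>
      induction e using Sym2.ind with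
      | _ x₀ y₀ =>
        rw [Sym2.map_pair_eq, Sym2.eq_iff] at heq
        first
        | (left
           rcases heq with ⟨hx, hy⟩ | ⟨hx, hy⟩
           · exact ⟨x₀, y₀, he, hx.symm, hy.symm⟩
           · exact ⟨y₀, x₀, by rwa [Sym2.eq_swap] at he, hy.symm, hx.symm⟩)
        | (right
           rcases heq with ⟨hx, hy⟩ | ⟨hx, hy⟩
           · exact ⟨x₀, y₀, he, hx.symm, hy.symm⟩
           · exact ⟨y₀, x₀, by rwa [Sym2.eq_swap] at he, hy.symm, hx.symm⟩)
  have hncStar₁ : Noncrossing ps (Sym2.map Sum.inl '' E₁ ∪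
      Sym2.map (fun v : V => Sum.inr (Sum.inl v)) '' E₂) := by
    intro a b c d h1 h2 hab hac had hbc hbd hcd halt
    rcases hdesc h1 with ⟨a₀, b₀, he1, rfl, rfl⟩ | ⟨a₀, b₀, he1, rfl, rfl⟩ <;>
      rcases hdesc h2 with ⟨c₀, d₀, he2, rfl, rfl⟩ | ⟨c₀, d₀, he2, rfl, rfl⟩
    · -- both in copy 1
      refine hnc₁₀ a₀ b₀ c₀ d₀ he1 he2 (fun h => hab (by rw [h]))
        (fun h => hac (by rw [h])) (fun h => had (by rw [h]))
        (fun h => hbc (by rw [h])) (fun h => hbd (by rw [h]))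
        (fun h => hcd (by rw [h])) ?_
      unfold Alternates Between Xor' Xor at halt ⊢
      simp only [hps_l] at halt
      exact halt
    · -- copy 1 vs copy 2 : never alternate
      unfold Alternates Between Xor' Xor at halt
      simp only [hps_l, hps_r] at halt
      have := hKb a₀; have := hKb b₀; have := hKb c₀; have := hKb d₀
      omega
    · unfold Alternates Between Xor' Xor at halt
      simp only [hps_l, hps_r] at halt
      have := hKb a₀; have := hKb b₀; have := hKb c₀; have := hKb d₀
      omega
    · -- both in copy 2
      have ha₀ := hE₂ _ he1 a₀ (by simp)
      have hb₀ := hE₂ _ he1 b₀ (by simp)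
      have hc₀ := hE₂ _ he2 c₀ (by simp)
      have hd₀ := hE₂ _ he2 d₀ (by simp)
      refine hnc₂₀ a₀ b₀ c₀ d₀ he1 he2 (fun h => hab (by rw [h]))
        (fun h => hac (by rw [h])) (fun h => had (by rw [h]))
        (fun h => hbc (by rw [h])) (fun h => hbd (by rw [h]))
        (fun h => hcd (by rw [h])) ?_
      unfold Alternates Between Xor' Xor at halt ⊢
      simp only [hps_r] at halt
      have := hKb a₀; have := hKb b₀; have := hKb c₀; have := hKb d₀
      omega
  -- noncrossing of the matching
  have hncStar₂ : Noncrossing ps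
      {p | ∃ v ∈ leafSet T, p = s(Sum.inl v, Sum.inr (Sum.inl v))} := by
    intro a b c d h1 h2 hab hac had hbc hbd hcd halt
    obtain ⟨v₀, hv₀, he₁⟩ := h1
    obtain ⟨w₀, hw₀, he₂⟩ := h2
    rw [Sym2.eq_iff] at he₁ he₂
    have hv := hKb v₀; have hw := hKb w₀
    rcases he₁ with ⟨rfl, rfl⟩ | ⟨rfl, rfl⟩ <;> rcases he₂ with ⟨rfl, rfl⟩ | ⟨rfl, rfl⟩
    · have hvw : v₀ ≠ w₀ := fun h => hac (by rw [h])
      have hpvw : pos₀ v₀ ≠ pos₀ w₀ := fun h => hvw (hinj₀ hv₀ hw₀ h)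
      unfold Alternates Between Xor' Xor at halt
      simp only [hps_l, hps_r] at halt
      omega
    · have hvw : v₀ ≠ w₀ := fun h => had (by rw [h])
      have hpvw : pos₀ v₀ ≠ pos₀ w₀ := fun h => hvw (hinj₀ hv₀ hw₀ h)
      unfold Alternates Between Xor' Xor at halt
      simp only [hps_l, hps_r] at halt
      omega
    · have hvw : v₀ ≠ w₀ := fun h => hbc (by rw [h])
      have hpvw : pos₀ v₀ ≠ pos₀ w₀ := fun h => hvw (hinj₀ hv₀ hw₀ h)
      unfold Alternates Between Xor' Xor at halt
      simp only [hps_l, hps_r] at halt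
      omega
    · have hvw : v₀ ≠ w₀ := fun h => hbd (by rw [h])
      have hpvw : pos₀ v₀ ≠ pos₀ w₀ := fun h => hvw (hinj₀ hv₀ hw₀ h)
      unfold Alternates Between Xor' Xor at halt
      simp only [hps_l, hps_r] at halt
      omega
  exact ⟨ps, hinjStar, hrepStar, hncStar₁, hncStar₂⟩
end ForwardMain
section ReverseMain
open SimpleGraph

lemma reverse_main {V : Type*} [Fintype V] {T : SimpleGraph V} (hT : T.IsTree)
    {r : V} (hr : r ∉ leafSet T)
    (hn2 : ∃ n₁ n₂, T.Adj r n₁ ∧ T.Adj r n₂ ∧ n₁ ≠ n₂)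
    {E₁ E₂ : Set (Sym2 V)}
    (hE₁ : ∀ e ∈ E₁, ∀ v ∈ e, v ∈ leafSet T)
    (hE₂ : ∀ e ∈ E₂, ∀ v ∈ e, v ∈ leafSet T)
    (hlne : (leafSet T).Nonempty)
    (ps : V ⊕ V ⊕ Unit → ℕ) (hinjS : Set.InjOn ps (leafSet (TStar T r)))
    (hrepS : RepresentedBy (TStar T r) ps)
    (hncS₁ : Noncrossing ps (Sym2.map Sum.inl '' E₁ ∪
      Sym2.map (fun v : V => Sum.inr (Sum.inl v)) '' E₂))
    (hncS₂ : Noncrossing ps {p | ∃ v ∈ leafSet T, p = s(Sum.inl v, Sum.inr (Sum.inl v))}) :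
    ∃ pos : V → ℕ, Set.InjOn pos (leafSet T) ∧ RepresentedBy T pos ∧
      Noncrossing pos E₁ ∧ Noncrossing pos E₂ := by
  classical
  have hconn := hT.1
  have hmemL : ∀ l ∈ leafSet (TStar T r),
      (∃ z ∈ leafSet T, l = Sum.inl z) ∨ ∃ z ∈ leafSet T, l = Sum.inr (Sum.inl z) := by
    intro l hl
    match l with
    | Sum.inl z => exact Or.inl ⟨z, (mem_leaf_inl hr hn2).mp hl, rfl⟩
    | Sum.inr (Sum.inl z) => exact Or.inr ⟨z, (mem_leaf_inr hr hn2).mp hl, rfl⟩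
    | Sum.inr (Sum.inr t) => exact absurd hl (by cases t; exact rstar_not_leaf)
  set L' : Set (V ⊕ V ⊕ Unit) := {l | ∃ z ∈ leafSet T, l = Sum.inl z} with hL'
  have hsubL' : L' ⊆ leafSet (TStar T r) := by
    rintro l ⟨z, hz, rfl⟩
    exact (mem_leaf_inl hr hn2).mpr hz
  -- L' is a circular interval for ps
  have hadjstar : (TStar T r).Adj (Sum.inl r) (Sum.inr (Sum.inr ())) := tstar_adj_lstar.mpr rfl
  have hcircL' : IsCircularIntervalOn ps (leafSet (TStar T r)) L' := by
    have h := hrepS (Sum.inl r) (Sum.inr (Sum.inr ())) hadjstar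
    have hseteq : {l | l ∈ leafSet (TStar T r) ∧
          ((TStar T r).deleteEdges
            {s(Sum.inl r, Sum.inr (Sum.inr ()))}).Reachable (Sum.inl r) l} = L' := by
      ext l
      constructor
      · rintro ⟨hl, hre⟩
        rcases hmemL l hl with ⟨z, hz, rfl⟩ | ⟨z, hz, rfl⟩
        · exact ⟨z, hz, rfl⟩
        · exact absurd ((reach_tstar_lstar hconn _).mp hre) (by simp)
      · rintro ⟨z, hz, rfl⟩
        exact ⟨(mem_leaf_inl hr hn2).mpr hz, (reach_tstar_lstar hconn _).mpr (by simp)⟩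
    rwa [hseteq] at h
  obtain ⟨v₁, hv₁⟩ := hlne
  obtain ⟨t, M, s, hM, hinit⟩ := rot_initial ps (leafSet (TStar T r)) L' hsubL' hcircL'
    ⟨Sum.inl v₁, v₁, hv₁, rfl⟩
    ⟨Sum.inr (Sum.inl v₁), (mem_leaf_inr hr hn2).mpr hv₁, by
      rintro ⟨z, hz, h⟩; simp at h⟩
  set ps₀ := rotPos ps t M with hps₀
  have hinj₀S : Set.InjOn ps₀ (leafSet (TStar T r)) := rot_injOn hM hinjS
  have hrep₀S : RepresentedBy (TStar T r) ps₀ := rot_representedBy hM hrepS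
  have hEndU : ∀ e ∈ (Sym2.map Sum.inl '' E₁ ∪
      Sym2.map (fun v : V => Sum.inr (Sum.inl v)) '' E₂), ∀ x ∈ e,
      x ∈ leafSet (TStar T r) := by
    rintro e (⟨e₀, he₀, rfl⟩ | ⟨e₀, he₀, rfl⟩) x hx <;>
      induction e₀ using Sym2.ind with
      | _ a b =>
        rw [Sym2.map_pair_eq, Sym2.mem_iff] at hx
        rcases hx with rfl | rfl
        first
        | exact (mem_leaf_inl hr hn2).mpr (hE₁ _ he₀ _ (by simp))
        | exact (mem_leaf_inr hr hn2).mpr (hE₂ _ he₀ _ (by simp))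
        first
        | exact (mem_leaf_inl hr hn2).mpr (hE₁ _ he₀ _ (by simp))
        | exact (mem_leaf_inr hr hn2).mpr (hE₂ _ he₀ _ (by simp))
  have hEndM : ∀ e ∈ {p : Sym2 (V ⊕ V ⊕ Unit) | ∃ v ∈ leafSet T,
      p = s(Sum.inl v, Sum.inr (Sum.inl v))}, ∀ x ∈ e, x ∈ leafSet (TStar T r) := by
    rintro e ⟨v, hv, rfl⟩ x hx
    rw [Sym2.mem_iff] at hx
    rcases hx with rfl | rfl
    · exact (mem_leaf_inl hr hn2).mpr hv
    · exact (mem_leaf_inr hr hn2).mpr hv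
  have hnc₀S₁ := rot_noncrossing (t := t) hM hinjS hEndU hncS₁
  have hnc₀S₂ := rot_noncrossing (t := t) hM hinjS hEndM hncS₂
  have hinit₀ : ∀ l ∈ leafSet (TStar T r), (l ∈ L' ↔ ps₀ l < s) := hinit
  set pos : V → ℕ := fun z => ps₀ (Sum.inl z) with hposdef
  set q : V → ℕ := fun z => ps₀ (Sum.inr (Sum.inl z)) with hqdef
  have hposlt : ∀ z ∈ leafSet T, pos z < s := by
    intro z hz
    exact (hinit₀ _ ((mem_leaf_inl hr hn2).mpr hz)).mp ⟨z, hz, rfl⟩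
  have hqge : ∀ z ∈ leafSet T, s ≤ q z := by
    intro z hz
    by_contra hcon
    push_neg at hcon
    obtain ⟨w, hw, hww⟩ := (hinit₀ _ ((mem_leaf_inr hr hn2).mpr hz)).mpr hcon
    simp at hww
  -- injectivity of pos on leaves
  have hinjpos : Set.InjOn pos (leafSet T) := by
    intro x hx y hy hxy
    have := hinj₀S ((mem_leaf_inl hr hn2).mpr hx) ((mem_leaf_inl hr hn2).mpr hy) hxy
    exact Sum.inl_injective this
  have hinjq : Set.InjOn q (leafSet T) := by
    intro x hx y hy hxy
    have := hinj₀S ((mem_leaf_inr hr hn2).mpr hx) ((mem_leaf_inr hr hn2).mpr hy) hxy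
    exact Sum.inl_injective (Sum.inr_injective this)
  -- the key order-reversal from the noncrossing matching
  have horder : ∀ a ∈ leafSet T, ∀ b ∈ leafSet T, (pos a < pos b ↔ q b < q a) := by
    intro a ha b hb
    by_cases hab : a = b
    · subst hab
      constructor <;> intro h <;> exact absurd h (lt_irrefl _)
    have h1 : s(Sum.inl a, Sum.inr (Sum.inl a)) ∈
        {p : Sym2 (V ⊕ V ⊕ Unit) | ∃ v ∈ leafSet T, p = s(Sum.inl v, Sum.inr (Sum.inl v))} :=
      ⟨a, ha, rfl⟩
    have h2 : s(Sum.inl b, Sum.inr (Sum.inl b)) ∈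
        {p : Sym2 (V ⊕ V ⊕ Unit) | ∃ v ∈ leafSet T, p = s(Sum.inl v, Sum.inr (Sum.inl v))} :=
      ⟨b, hb, rfl⟩
    have hnalt := hnc₀S₂ (Sum.inl a) (Sum.inr (Sum.inl a)) (Sum.inl b) (Sum.inr (Sum.inl b))
      h1 h2 (by simp) (by simp [hab]) (by simp) (by simp) (by simp [hab]) (by simp)
    unfold Alternates Between Xor' Xor at hnalt
    have g1 : rotPos ps t M (Sum.inl a) = pos a := rfl
    have g2 : rotPos ps t M (Sum.inr (Sum.inl a)) = q a := rfl
    have g3 : rotPos ps t M (Sum.inl b) = pos b := rfl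
    have g4 : rotPos ps t M (Sum.inr (Sum.inl b)) = q b := rfl
    rw [g1, g2, g3, g4] at hnalt
    have b1 := hposlt a ha; have b2 := hposlt b hb
    have b3 := hqge a ha; have b4 := hqge b hb
    have b5 : pos a ≠ pos b := fun h => hab (hinjpos ha hb h)
    have b6 : q a ≠ q b := fun h => hab (hinjq ha hb h)
    omega
  refine ⟨pos, hinjpos, ?_, ?_, ?_⟩
  · -- RepresentedBy
    intro u v huv
    have hadjS : (TStar T r).Adj (Sum.inl u) (Sum.inl v) := tstar_adj_ll.mpr huv
    have hcircS := hrep₀S (Sum.inl u) (Sum.inl v) hadjS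
    have hres := icio_restrict hsubL' hcircS
    have hseteq : {l | l ∈ leafSet (TStar T r) ∧
          ((TStar T r).deleteEdges
            {s(Sum.inl u, Sum.inl v)}).Reachable (Sum.inl u) l} ∩ L'
        = Sum.inl '' {l | l ∈ leafSet T ∧ (T.deleteEdges {s(u,v)}).Reachable u l} := by
      ext l
      constructor
      · rintro ⟨⟨hl, hre⟩, z, hz, rfl⟩
        exact ⟨z, ⟨hz, (reach_tstar_copy1 hconn _).mp hre⟩, rfl⟩
      · rintro ⟨z, ⟨hz, hre⟩, rfl⟩
        exact ⟨⟨(mem_leaf_inl hr hn2).mpr hz, (reach_tstar_copy1 hconn _).mpr hre⟩,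
          z, hz, rfl⟩
    rw [hseteq] at hres
    have hL'img : L' = Sum.inl '' leafSet T := by
      ext l
      constructor
      · rintro ⟨z, hz, rfl⟩; exact ⟨z, hz, rfl⟩
      · rintro ⟨z, hz, rfl⟩; exact ⟨z, hz, rfl⟩
    rw [hL'img] at hres
    exact icio_pullback Sum.inl_injective (fun l hl => hl.1) hres
  · -- Noncrossing E₁
    intro a b c d h1 h2 hab hac had hbc hbd hcd halt
    have h1' : s(Sum.inl a, Sum.inl b) ∈ (Sym2.map (Sum.inl : V → V ⊕ V ⊕ Unit) '' E₁ ∪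
        Sym2.map (fun v : V => Sum.inr (Sum.inl v)) '' E₂) :=
      Or.inl ⟨s(a,b), h1, by rw [Sym2.map_pair_eq]⟩
    have h2' : s(Sum.inl c, Sum.inl d) ∈ (Sym2.map (Sum.inl : V → V ⊕ V ⊕ Unit) '' E₁ ∪
        Sym2.map (fun v : V => Sum.inr (Sum.inl v)) '' E₂) :=
      Or.inl ⟨s(c,d), h2, by rw [Sym2.map_pair_eq]⟩
    exact hnc₀S₁ (Sum.inl a) (Sum.inl b) (Sum.inl c) (Sum.inl d) h1' h2'
      (by simp [hab]) (by simp [hac]) (by simp [had]) (by simp [hbc]) (by simp [hbd])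
      (by simp [hcd]) halt
  · -- Noncrossing E₂ via the order reversal
    intro a b c d h1 h2 hab hac had hbc hbd hcd halt
    have ha := hE₂ _ h1 a (by simp)
    have hb := hE₂ _ h1 b (by simp)
    have hc := hE₂ _ h2 c (by simp)
    have hd := hE₂ _ h2 d (by simp)
    have h1' : s(Sum.inr (Sum.inl a), Sum.inr (Sum.inl b)) ∈ (Sym2.map (Sum.inl : V → V ⊕ V ⊕ Unit) '' E₁ ∪
        Sym2.map (fun v : V => Sum.inr (Sum.inl v)) '' E₂) :=
      Or.inr ⟨s(a,b), h1, by rw [Sym2.map_pair_eq]⟩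
    have h2' : s(Sum.inr (Sum.inl c), Sum.inr (Sum.inl d)) ∈ (Sym2.map (Sum.inl : V → V ⊕ V ⊕ Unit) '' E₁ ∪
        Sym2.map (fun v : V => Sum.inr (Sum.inl v)) '' E₂) :=
      Or.inr ⟨s(c,d), h2, by rw [Sym2.map_pair_eq]⟩
    have hnalt := hnc₀S₁ (Sum.inr (Sum.inl a)) (Sum.inr (Sum.inl b)) (Sum.inr (Sum.inl c))
      (Sum.inr (Sum.inl d)) h1' h2'
      (by simp [hab]) (by simp [hac]) (by simp [had]) (by simp [hbc]) (by simp [hbd])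
      (by simp [hcd])
    have hmemset : ∀ x ∈ ({a,b,c,d} : Set V), x ∈ leafSet T := by
      rintro x hx
      rcases hx with rfl | rfl | rfl | rfl <;> assumption
    have hcongr : Alternates pos a b c d ↔ Alternates q a b c d := by
      refine alternates_congr_anti ?_
      intro x hx y hy
      exact horder x (hmemset x hx) y (hmemset y hy)
    exact hnalt (hcongr.mp halt)
end ReverseMain
section Assembly
open SimpleGraph

lemma lhs_of_leaf_empty {V : Type*} {T : SimpleGraph V} (hLe : leafSet T = ∅)
    {E₁ E₂ : Set (Sym2 V)}
    (hE₁ : ∀ e ∈ E₁, ∀ v ∈ e, v ∈ leafSet T)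
    (hE₂ : ∀ e ∈ E₂, ∀ v ∈ e, v ∈ leafSet T) :
    ∃ pos : V → ℕ, Set.InjOn pos (leafSet T) ∧ RepresentedBy T pos ∧
      Noncrossing pos E₁ ∧ Noncrossing pos E₂ := by
  refine ⟨fun _ => 0, ?_, ?_, ?_, ?_⟩
  · rw [hLe]; exact fun x hx => absurd hx (Set.notMem_empty x)
  · intro u v _
    left
    intro a b c ha _ _ _ _
    rw [hLe] at ha
    exact absurd ha.1 (Set.notMem_empty a)
  · intro a b c d h1 _ _ _ _ _ _ _ _
    have := hE₁ _ h1 a (by simp)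
    rw [hLe] at this
    exact absurd this (Set.notMem_empty a)
  · intro a b c d h1 _ _ _ _ _ _ _ _
    have := hE₂ _ h1 a (by simp)
    rw [hLe] at this
    exact absurd this (Set.notMem_empty a)

lemma rhs_noncross_empty {V : Type*} {T : SimpleGraph V} {r : V} (hLe : leafSet T = ∅)
    {E₁ E₂ : Set (Sym2 V)}
    (hE₁ : ∀ e ∈ E₁, ∀ v ∈ e, v ∈ leafSet T)
    (hE₂ : ∀ e ∈ E₂, ∀ v ∈ e, v ∈ leafSet T) (ps : V ⊕ V ⊕ Unit → ℕ) :
    Noncrossing ps (Sym2.map (Sum.inl : V → V ⊕ V ⊕ Unit) '' E₁ ∪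
        Sym2.map (fun v : V => (Sum.inr (Sum.inl v) : V ⊕ V ⊕ Unit)) '' E₂) ∧
    Noncrossing ps {p : Sym2 (V ⊕ V ⊕ Unit) | ∃ v ∈ leafSet T,
        p = s(Sum.inl v, Sum.inr (Sum.inl v))} := by
  constructor
  · rintro a b c d (⟨e₀, he₀, -⟩ | ⟨e₀, he₀, -⟩) _ _ _ _ _ _ _ _ <;>
    · induction e₀ using Sym2.ind with
      | _ x y =>
        first
        | (have := hE₁ _ he₀ x (by simp); rw [hLe] at this; exact absurd this (Set.notMem_empty x))
        | (have := hE₂ _ he₀ x (by simp); rw [hLe] at this; exact absurd this (Set.notMem_empty x))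
  · rintro a b c d ⟨v, hv, -⟩ _ _ _ _ _ _ _ _
    rw [hLe] at hv
    exact absurd hv (Set.notMem_empty v)
end Assembly
section Final
open SimpleGraph

lemma rhs_of_singleton {V : Type*} {T : SimpleGraph V} {r : V}
    (hsing : ∀ v : V, v = r) (hr : r ∉ leafSet T) (hLe : leafSet T = ∅)
    {E₁ E₂ : Set (Sym2 V)}
    (hE₁ : ∀ e ∈ E₁, ∀ v ∈ e, v ∈ leafSet T)
    (hE₂ : ∀ e ∈ E₂, ∀ v ∈ e, v ∈ leafSet T) :
    ∃ ps : V ⊕ V ⊕ Unit → ℕ, Set.InjOn ps (leafSet (TStar T r)) ∧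
      RepresentedBy (TStar T r) ps ∧
      Noncrossing ps (Sym2.map (Sum.inl : V → V ⊕ V ⊕ Unit) '' E₁ ∪
        Sym2.map (fun v : V => (Sum.inr (Sum.inl v) : V ⊕ V ⊕ Unit)) '' E₂) ∧
      Noncrossing ps {p : Sym2 (V ⊕ V ⊕ Unit) | ∃ v ∈ leafSet T,
        p = s(Sum.inl v, Sum.inr (Sum.inl v))} := by
  classical
  set ps : V ⊕ V ⊕ Unit → ℕ := Sum.elim (fun _ => 0) (Sum.elim (fun _ => 1) (fun _ => 2))
    with hpsdef
  have hLst : leafSet (TStar T r) = {Sum.inl r, Sum.inr (Sum.inl r)} := by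
    ext l
    match l with
    | Sum.inl z =>
      rw [hsing z]
      simp only [Set.mem_insert_iff, Set.mem_singleton_iff]
      constructor
      · intro _; first | trivial | (left; rfl) | simp
      · intro _
        refine ⟨Sum.inr (Sum.inr ()), tstar_adj_lstar.mpr rfl, ?_⟩
        intro y hy
        match y with
        | Sum.inl w => exact absurd (hsing w ▸ tstar_adj_ll.mp hy) (T.irrefl)
        | Sum.inr (Sum.inl w) => exact absurd hy tstar_adj_lr
        | Sum.inr (Sum.inr t) => cases t; rfl
    | Sum.inr (Sum.inl z) =>
      rw [hsing z]
      simp only [Set.mem_insert_iff, Set.mem_singleton_iff]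
      constructor
      · intro _; first | trivial | (right; rfl) | simp
      · intro _
        refine ⟨Sum.inr (Sum.inr ()), tstar_adj_rstar.mpr rfl, ?_⟩
        intro y hy
        match y with
        | Sum.inl w => exact absurd hy.symm tstar_adj_lr
        | Sum.inr (Sum.inl w) => exact absurd (hsing w ▸ tstar_adj_rr.mp hy) (T.irrefl)
        | Sum.inr (Sum.inr t) => cases t; rfl
    | Sum.inr (Sum.inr t) =>
      cases t
      simp only [Set.mem_insert_iff, Set.mem_singleton_iff]
      constructor
      · intro h; exact absurd h rstar_not_leaf
      · rintro (h | h) <;> simp at h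
  have hv0 : ps (Sum.inl r) = 0 := rfl
  have hv1 : ps (Sum.inr (Sum.inl r)) = 1 := rfl
  refine ⟨ps, ?_, ?_, (rhs_noncross_empty (r := r) hLe hE₁ hE₂ ps).1, (rhs_noncross_empty (r := r) hLe hE₁ hE₂ ps).2⟩
  · intro x hx y hy hxy
    rw [hLst] at hx hy
    rcases hx with rfl | rfl <;> rcases hy with rfl | rfl
    · rfl
    · rw [hv0, hv1] at hxy; omega
    · rw [hv0, hv1] at hxy; omega
    · rfl
  · intro u v _
    left
    intro a b c ha hb hc h1 h2
    have haL := ha.1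
    have hcL := hc.1
    rw [hLst] at haL hb hcL
    rcases hb with rfl | rfl
    · rcases haL with rfl | rfl
      · exact ha
      · rw [hv0, hv1] at h1; omega
    · rcases hcL with rfl | rfl
      · rw [hv0, hv1] at h2; omega
      · exact hc

lemma leafstar_empty {V : Type*} {T : SimpleGraph V} {r : V} (hr : r ∉ leafSet T)
    (hn2 : ∃ n₁ n₂, T.Adj r n₁ ∧ T.Adj r n₂ ∧ n₁ ≠ n₂)
    (hLe : leafSet T = ∅) : leafSet (TStar T r) = ∅ := by
  ext l
  simp only [Set.mem_empty_iff_false, iff_false]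
  intro hl
  match l with
  | Sum.inl z =>
    have := (mem_leaf_inl hr hn2).mp hl
    rw [hLe] at this
    exact this
  | Sum.inr (Sum.inl z) =>
    have := (mem_leaf_inr hr hn2).mp hl
    rw [hLe] at this
    exact this
  | Sum.inr (Sum.inr t) =>
    cases t
    exact rstar_not_leaf hl
end Final
/-- `⟨T, E_1, E_2⟩` admits a partitioned `T`-coherent 2-page book
embedding iff `⟨T*, E*_1, E*_2⟩` admits a partitioned `T*`-coherent 2-page book
embedding, where `T*` consists of two copies of `T` joined through a new vertex `r*`
adjacent to the two copies of the internal vertex `r`,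
`E*_1` consists of the copy of `E_1` on the first copy and the copy of `E_2` on the
second copy, and `E*_2` is the perfect matching between the two copies of each leaf. -/
theorem stmt5 {V : Type*} [Fintype V] (T : SimpleGraph V) (hT : T.IsTree)
    (r : V) (hr : r ∉ leafSet T)
    (E₁ E₂ : Set (Sym2 V))
    (hE₁ : ∀ e ∈ E₁, ∀ v ∈ e, v ∈ leafSet T)
    (hE₂ : ∀ e ∈ E₂, ∀ v ∈ e, v ∈ leafSet T) :
    (∃ pos : V → ℕ, Set.InjOn pos (leafSet T) ∧ RepresentedBy T pos ∧
        Noncrossing pos E₁ ∧ Noncrossing pos E₂) ↔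
      (∃ pos : V ⊕ V ⊕ Unit → ℕ, Set.InjOn pos (leafSet (TStar T r)) ∧
        RepresentedBy (TStar T r) pos ∧
        Noncrossing pos
          (Sym2.map (Sum.inl : V → V ⊕ V ⊕ Unit) '' E₁ ∪
            Sym2.map (fun v : V => (Sum.inr (Sum.inl v) : V ⊕ V ⊕ Unit)) '' E₂) ∧
        Noncrossing pos
          {p : Sym2 (V ⊕ V ⊕ Unit) | ∃ v ∈ leafSet T,
            p = s(Sum.inl v, Sum.inr (Sum.inl v))}) := by
  classical
  by_cases hsing : ∀ v : V, v = r
  · have hLe : leafSet T = ∅ := by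
      ext v
      simp only [Set.mem_empty_iff_false, iff_false]
      intro hv
      exact hr ((hsing v) ▸ hv)
    exact iff_of_true (lhs_of_leaf_empty hLe hE₁ hE₂)
      (rhs_of_singleton hsing hr hLe hE₁ hE₂)
  · push_neg at hsing
    obtain ⟨v₀, hv₀⟩ := hsing
    have hnbr : ∃ n, T.Adj r n := by
      obtain ⟨w⟩ := hT.1 r v₀
      cases w with
      | nil => exact absurd rfl hv₀
      | cons h p => exact ⟨_, h⟩
    obtain ⟨n₁, hn₁⟩ := hnbr
    have hn2 : ∃ a b, T.Adj r a ∧ T.Adj r b ∧ a ≠ b := by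
      by_contra hcon
      push_neg at hcon
      exact hr ⟨n₁, hn₁, fun y hy => hcon y n₁ hy hn₁⟩
    by_cases hLe : leafSet T = ∅
    · refine iff_of_true (lhs_of_leaf_empty hLe hE₁ hE₂) ?_
      refine ⟨fun _ => 0, ?_, ?_, (rhs_noncross_empty (r := r) hLe hE₁ hE₂ _).1,
        (rhs_noncross_empty (r := r) hLe hE₁ hE₂ _).2⟩
      · rw [leafstar_empty hr hn2 hLe]
        exact fun x hx => absurd hx (Set.notMem_empty x)
      · intro u v _
        left
        intro a b c ha _ _ _ _
        have := ha.1
        rw [leafstar_empty hr hn2 hLe] at this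
        exact absurd this (Set.notMem_empty a)
    · constructor
      · rintro ⟨pos, h1, h2, h3, h4⟩
        exact forward_main hT hr hn2 hE₁ hE₂ pos h1 h2 h3 h4
      · rintro ⟨ps, h1, h2, h3, h4⟩
        exact reverse_main hT hr hn2 hE₁ hE₂ (Set.nonempty_iff_ne_empty.mpr hLe) ps h1 h2 h3 h4
end
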